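/- arXiv:2304.06783 — 7 statements merged into one kernel-verified Lean document; each statement's English description precedes it below -/
import Mathlib

section
/- Let r > 0, let P₀ ∈ ℳ(ℝ^d) be absolutely continuous with respect to Lebesgue measure on ℝ^d, and let C ∈ ℝ^{d×d} be symmetric with λ_max(C) ≠ 0. Then the optimal value of sup_{P ∈ 𝒫} E_P[wᵀ C w] is finite and equals the optimal value of the convex program inf_{γ ≥ 0} { γ(r² − Tr(M₀)) + γ² Tr(M₀ (γI − C)^{-1}) : γI − C ≻ 0 }, where M₀ = E_{P₀}[w wᵀ]. -/
open Matrix MeasureTheory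
open scoped ENNReal

/-- The nonnegative part of an extended real, as an extended nonnegative real. -/
noncomputable def erealToENNReal (x : EReal) : ℝ≥0∞ :=
  if x = ⊤ then ⊤ else ENNReal.ofReal x.toReal

/-- Expectation of an extended-real-valued function, interpreted in the extended reals
as (integral of positive part) minus (integral of negative part). -/
noncomputable def eexpE {α : Type*} [MeasurableSpace α] (P : Measure α) (g : α → EReal) :
    EReal :=
  ((∫⁻ w, erealToENNReal (g w) ∂P : ℝ≥0∞) : EReal)
    - ((∫⁻ w, erealToENNReal (-(g w)) ∂P : ℝ≥0∞) : EReal)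

/-- Squared type-2 Wasserstein distance between Borel measures on `ℝ^d`:
`W₂(P₁,P₂)² = inf_{π ∈ Π(P₁,P₂)} ∫ ‖z₁ − z₂‖² dπ`. -/
noncomputable def W2sq {d : ℕ} (P₁ P₂ : Measure (Fin d → ℝ)) : ℝ≥0∞ :=
  ⨅ (π : Measure ((Fin d → ℝ) × (Fin d → ℝ))) (_ : π.map Prod.fst = P₁)
    (_ : π.map Prod.snd = P₂), ∫⁻ z, ENNReal.ofReal (∑ i, (z.1 i - z.2 i) ^ 2) ∂π

/-- The ambiguity set: Borel probability measures on `ℝ^d` with finite second moment within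
type-2 Wasserstein distance `r` of the nominal distribution `P₀`. -/
def ambiguitySet {d : ℕ} (P₀ : Measure (Fin d → ℝ)) (r : ℝ) :
    Set (Measure (Fin d → ℝ)) :=
  {P | IsProbabilityMeasure P ∧ Integrable (fun w => ∑ i, (w i) ^ 2) P ∧
    W2sq P P₀ ≤ ENNReal.ofReal (r ^ 2)}

/-- The largest eigenvalue of a (symmetric) real matrix. -/
noncomputable def lambdaMax {d : ℕ} (C : Matrix (Fin d) (Fin d) ℝ) : ℝ :=
  sSup {t : ℝ | ∃ v : Fin d → ℝ, v ≠ 0 ∧ C.mulVec v = t • v}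

/-- `φ(γ, w) := inf_z { γ‖z − w‖² − f(z) }`, valued in `ℝ ∪ {−∞} ⊆ EReal`. -/
noncomputable def phiDual {d : ℕ} (f : (Fin d → ℝ) → ℝ) (γ : ℝ) (w : Fin d → ℝ) : EReal :=
  ⨅ z : Fin d → ℝ, ((γ * ∑ i, (z i - w i) ^ 2 - f z : ℝ) : EReal)



namespace Stmt1Aux

variable {d : ℕ}

/-- squared euclidean norm -/
noncomputable def nsq (w : Fin d → ℝ) : ℝ := ∑ i, (w i)^2

lemma nsq_nonneg (w : Fin d → ℝ) : 0 ≤ nsq w :=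
  Finset.sum_nonneg fun i _ => sq_nonneg _

lemma nsq_eq_zero {w : Fin d → ℝ} (h : nsq w = 0) : w = 0 := by
  have := (Finset.sum_eq_zero_iff_of_nonneg (fun i _ => sq_nonneg (w i))).1 h
  funext i
  have := this i (Finset.mem_univ i)
  simpa [pow_eq_zero_iff] using this

lemma nsq_pos {w : Fin d → ℝ} (h : w ≠ 0) : 0 < nsq w :=
  lt_of_le_of_ne (nsq_nonneg w) fun h0 => h (nsq_eq_zero h0.symm)

lemma continuous_nsq : Continuous (nsq (d := d)) :=
  continuous_finset_sum _ fun i _ => (continuous_apply i).pow 2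

lemma nsq_smul (c : ℝ) (w : Fin d → ℝ) : nsq (c • w) = c^2 * nsq w := by
  simp only [nsq, Pi.smul_apply, smul_eq_mul, mul_pow, Finset.mul_sum]

lemma dotProduct_self_eq_nsq (w : Fin d → ℝ) : w ⬝ᵥ w = nsq w := by
  simp [dotProduct, nsq, sq]

lemma continuous_mulVec (B : Matrix (Fin d) (Fin d) ℝ) :
    Continuous fun w : Fin d → ℝ => B *ᵥ w := by
  refine continuous_pi fun i => ?_
  simp only [mulVec, dotProduct]
  exact continuous_finset_sum _ fun j _ => (continuous_const.mul (continuous_apply j))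

lemma continuous_dot (v : Fin d → ℝ) : Continuous fun w : Fin d → ℝ => v ⬝ᵥ w := by
  simp only [dotProduct]
  exact continuous_finset_sum _ fun j _ => (continuous_const.mul (continuous_apply j))

lemma continuous_quad (B : Matrix (Fin d) (Fin d) ℝ) :
    Continuous fun w : Fin d → ℝ => w ⬝ᵥ B *ᵥ w := by
  simp only [dotProduct, mulVec]
  refine continuous_finset_sum _ fun i _ => (continuous_apply i).mul ?_
  exact continuous_finset_sum _ fun j _ => (continuous_const.mul (continuous_apply j))

lemma quad_eq_sum (B : Matrix (Fin d) (Fin d) ℝ) (w : Fin d → ℝ) :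
    w ⬝ᵥ B *ᵥ w = ∑ i, ∑ j, B i j * (w i * w j) := by
  simp only [dotProduct, mulVec, Finset.mul_sum]
  exact Finset.sum_congr rfl fun i _ => Finset.sum_congr rfl fun j _ => by ring

lemma abs_mul_le_nsq (w : Fin d → ℝ) (i j : Fin d) : |w i * w j| ≤ nsq w := by
  have hi : (w i)^2 ≤ nsq w := Finset.single_le_sum (f := fun k => (w k)^2)
    (fun k _ => sq_nonneg _) (Finset.mem_univ i)
  have hj : (w j)^2 ≤ nsq w := Finset.single_le_sum (f := fun k => (w k)^2)
    (fun k _ => sq_nonneg _) (Finset.mem_univ j)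
  have : |w i * w j| ≤ ((w i)^2 + (w j)^2) / 2 := by
    rw [abs_mul]
    nlinarith [abs_nonneg (w i), abs_nonneg (w j), sq_abs (w i), sq_abs (w j),
      sq_nonneg (|w i| - |w j|)]
  linarith

lemma quad_abs_le (B : Matrix (Fin d) (Fin d) ℝ) (w : Fin d → ℝ) :
    |w ⬝ᵥ B *ᵥ w| ≤ (∑ i, ∑ j, |B i j|) * nsq w := by
  rw [quad_eq_sum]
  calc |∑ i, ∑ j, B i j * (w i * w j)| ≤ ∑ i, ∑ j, |B i j * (w i * w j)| := by
        refine (Finset.abs_sum_le_sum_abs _ _).trans ?_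
        exact Finset.sum_le_sum fun i _ => Finset.abs_sum_le_sum_abs _ _
    _ ≤ ∑ i, ∑ j, |B i j| * nsq w := by
        refine Finset.sum_le_sum fun i _ => Finset.sum_le_sum fun j _ => ?_
        rw [abs_mul]
        exact mul_le_mul_of_nonneg_left (abs_mul_le_nsq w i j) (abs_nonneg _)
    _ = (∑ i, ∑ j, |B i j|) * nsq w := by rw [Finset.sum_mul]; congr 1; ext i; rw [Finset.sum_mul]


-- symmetric swap for dot products
lemma dot_swap {A : Matrix (Fin d) (Fin d) ℝ} (hA : Aᵀ = A) (x y : Fin d → ℝ) :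
    x ⬝ᵥ A *ᵥ y = y ⬝ᵥ A *ᵥ x := by
  rw [Matrix.dotProduct_mulVec, ← Matrix.mulVec_transpose, hA, dotProduct_comm]

lemma isHermitian_of_symm {A : Matrix (Fin d) (Fin d) ℝ} (hA : Aᵀ = A) : A.IsHermitian := by
  rw [Matrix.IsHermitian, Matrix.conjTranspose_eq_transpose_of_trivial, hA]

lemma posDef_quad_pos {A : Matrix (Fin d) (Fin d) ℝ} (hA : A.PosDef)
    {x : Fin d → ℝ} (hx : x ≠ 0) : 0 < x ⬝ᵥ A *ᵥ x := by
  have := hA.dotProduct_mulVec_pos hx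
  simpa using this

lemma posSemidef_quad_nonneg {A : Matrix (Fin d) (Fin d) ℝ} (hA : A.PosSemidef)
    (x : Fin d → ℝ) : 0 ≤ x ⬝ᵥ A *ᵥ x := by
  have := hA.dotProduct_mulVec_nonneg x
  simpa using this

lemma posDef_isUnit_det {A : Matrix (Fin d) (Fin d) ℝ} (hA : A.PosDef) : IsUnit A.det :=
  isUnit_iff_ne_zero.2 (ne_of_gt hA.det_pos)

lemma inv_transpose_eq {A : Matrix (Fin d) (Fin d) ℝ} (hA : Aᵀ = A) : (A⁻¹)ᵀ = A⁻¹ := by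
  rw [Matrix.transpose_nonsing_inv, hA]

lemma mul_inv_cancel' {A : Matrix (Fin d) (Fin d) ℝ} (hA : A.PosDef) : A * A⁻¹ = 1 :=
  Matrix.mul_nonsing_inv A (posDef_isUnit_det hA)

lemma inv_mul_cancel' {A : Matrix (Fin d) (Fin d) ℝ} (hA : A.PosDef) : A⁻¹ * A = 1 :=
  Matrix.nonsing_inv_mul A (posDef_isUnit_det hA)

/-- Key algebraic identity: the "completion of squares". -/
lemma quad_complete_sq {A : Matrix (Fin d) (Fin d) ℝ} (hA : A.PosDef) (hAs : Aᵀ = A)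
    (γ : ℝ) (z w : Fin d → ℝ) :
    (z - γ • (A⁻¹ *ᵥ w)) ⬝ᵥ A *ᵥ (z - γ • (A⁻¹ *ᵥ w))
      = z ⬝ᵥ A *ᵥ z - 2*γ*(z ⬝ᵥ w) + γ^2 * (w ⬝ᵥ A⁻¹ *ᵥ w) := by
  have hAinv : A *ᵥ (A⁻¹ *ᵥ w) = w := by
    rw [Matrix.mulVec_mulVec, mul_inv_cancel' hA, Matrix.one_mulVec]
  have h1 : A *ᵥ (z - γ • (A⁻¹ *ᵥ w)) = A *ᵥ z - γ • w := by
    rw [Matrix.mulVec_sub, Matrix.mulVec_smul, hAinv]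
  rw [h1]
  have h2 : (A⁻¹ *ᵥ w) ⬝ᵥ (A *ᵥ z) = z ⬝ᵥ w := by
    rw [dot_swap hAs, Matrix.mulVec_mulVec, mul_inv_cancel' hA, Matrix.one_mulVec]
  have h3 : (A⁻¹ *ᵥ w) ⬝ᵥ w = w ⬝ᵥ A⁻¹ *ᵥ w := dotProduct_comm _ _
  simp only [sub_dotProduct, dotProduct_sub, smul_dotProduct,
    dotProduct_smul, smul_eq_mul, h2, h3]
  ring

lemma quad_ineq {A : Matrix (Fin d) (Fin d) ℝ} (hA : A.PosDef) (hAs : Aᵀ = A)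
    (γ : ℝ) (z w : Fin d → ℝ) :
    0 ≤ z ⬝ᵥ A *ᵥ z - 2*γ*(z ⬝ᵥ w) + γ^2 * (w ⬝ᵥ A⁻¹ *ᵥ w) := by
  rw [← quad_complete_sq hA hAs γ z w]
  exact posSemidef_quad_nonneg hA.posSemidef _

lemma quad_eq_at_opt {A : Matrix (Fin d) (Fin d) ℝ} (hA : A.PosDef) (hAs : Aᵀ = A)
    (γ : ℝ) (w : Fin d → ℝ) :
    (γ • (A⁻¹ *ᵥ w)) ⬝ᵥ A *ᵥ (γ • (A⁻¹ *ᵥ w))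
      - 2*γ*((γ • (A⁻¹ *ᵥ w)) ⬝ᵥ w) + γ^2 * (w ⬝ᵥ A⁻¹ *ᵥ w) = 0 := by
  have := quad_complete_sq hA hAs γ (γ • (A⁻¹ *ᵥ w)) w
  simp only [sub_self, zero_dotProduct, Matrix.mulVec_zero] at this
  -- this : 0 = ...
  have h0 : (0 : Fin d → ℝ) ⬝ᵥ A *ᵥ (0 : Fin d → ℝ) = 0 := by simp
  linarith [this, h0]


section CPart
section GAnalysis

variable {d : ℕ} (C : Matrix (Fin d) (Fin d) ℝ)

/-- the feasible set of the dual -/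
def Gset : Set ℝ := {γ : ℝ | (γ • (1 : Matrix (Fin d) (Fin d) ℝ) - C).PosDef}

/-- eigenvalue set -/
def Eset : Set ℝ := {t : ℝ | ∃ v : Fin d → ℝ, v ≠ 0 ∧ C.mulVec v = t • v}

variable {C}

lemma Amat_symm (hCs : Cᵀ = C) (γ : ℝ) :
    (γ • (1 : Matrix (Fin d) (Fin d) ℝ) - C)ᵀ = γ • (1 : Matrix (Fin d) (Fin d) ℝ) - C := by
  rw [Matrix.transpose_sub, Matrix.transpose_smul, Matrix.transpose_one, hCs]

lemma Amat_quad (γ : ℝ) (x : Fin d → ℝ) :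
    x ⬝ᵥ (γ • (1 : Matrix (Fin d) (Fin d) ℝ) - C) *ᵥ x = γ * nsq x - x ⬝ᵥ C *ᵥ x := by
  rw [Matrix.sub_mulVec, dotProduct_sub, Matrix.smul_mulVec, Matrix.one_mulVec,
    dotProduct_smul, smul_eq_mul, dotProduct_self_eq_nsq]

lemma mem_Gset_of_quad (hCs : Cᵀ = C) {γ : ℝ}
    (h : ∀ x : Fin d → ℝ, x ≠ 0 → 0 < γ * nsq x - x ⬝ᵥ C *ᵥ x) : γ ∈ Gset C := by
  refine Matrix.PosDef.of_dotProduct_mulVec_pos (isHermitian_of_symm (Amat_symm hCs γ)) fun x hx => ?_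
  have := h x hx
  rw [show star x = x from star_trivial x]
  rw [Amat_quad]
  exact this

lemma quad_pos_of_mem_Gset {γ : ℝ} (h : γ ∈ Gset C) {x : Fin d → ℝ} (hx : x ≠ 0) :
    0 < γ * nsq x - x ⬝ᵥ C *ᵥ x := by
  have := posDef_quad_pos h hx
  rwa [Amat_quad] at this

lemma Gset_nonempty (hCs : Cᵀ = C) : ((∑ i, ∑ j, |C i j|) + 1) ∈ Gset C := by
  refine mem_Gset_of_quad hCs fun x hx => ?_
  have h1 := quad_abs_le C x
  have h2 := nsq_pos hx
  have := abs_le.1 h1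
  nlinarith [this.2]

lemma Gset_upward (hCs : Cᵀ = C) {γ γ' : ℝ} (h : γ ∈ Gset C) (hle : γ ≤ γ') : γ' ∈ Gset C := by
  refine mem_Gset_of_quad hCs fun x hx => ?_
  have h1 := quad_pos_of_mem_Gset h hx
  have h2 := nsq_pos hx
  nlinarith

lemma Gset_bddBelow (hd : 0 < d) : BddBelow (Gset C) := by
  refine ⟨C ⟨0, hd⟩ ⟨0, hd⟩ - 1, fun γ hγ => ?_⟩
  set i0 : Fin d := ⟨0, hd⟩
  set x : Fin d → ℝ := Pi.single i0 1 with hx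
  have hxne : x ≠ 0 := by
    intro h
    have := congrFun h i0
    simp [hx, Pi.single_eq_same] at this
  have h1 := quad_pos_of_mem_Gset hγ hxne
  have hnsq : nsq x = 1 := by
    simp only [nsq, hx]
    rw [Finset.sum_eq_single i0]
    · simp [Pi.single_eq_same]
    · intro b _ hb; simp [Pi.single_eq_of_ne hb]
    · intro h; exact absurd (Finset.mem_univ i0) h
  have hquad : x ⬝ᵥ C *ᵥ x = C i0 i0 := by
    simp only [dotProduct, mulVec, hx]
    rw [Finset.sum_eq_single i0]
    · rw [Pi.single_eq_same, one_mul, Finset.sum_eq_single i0]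
      · rw [Pi.single_eq_same, mul_one]
      · intro b _ hb; simp [Pi.single_eq_of_ne hb]
      · intro h; exact absurd (Finset.mem_univ i0) h
    · intro b _ hb; simp [Pi.single_eq_of_ne hb]
    · intro h; exact absurd (Finset.mem_univ i0) h
  rw [hnsq, hquad] at h1
  linarith

/-- openness: if PosDef then can decrease γ a bit -/
lemma Gset_open (hd : 0 < d) (hCs : Cᵀ = C) {γ : ℝ} (h : γ ∈ Gset C) :
    ∃ δ > 0, (γ - δ) ∈ Gset C := by
  classical
  set S : Set (Fin d → ℝ) := {x | nsq x = 1} with hS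
  have hclosed : IsClosed S := isClosed_eq continuous_nsq continuous_const
  have hbdd : Bornology.IsBounded S := by
    refine (Metric.isBounded_iff_subset_closedBall 0).2 ⟨1, fun x hx => ?_⟩
    have hx1 : nsq x = 1 := hx
    rw [Metric.mem_closedBall, dist_zero_right]
    refine (pi_norm_le_iff_of_nonneg zero_le_one).2 fun i => ?_
    have h1 : (x i)^2 ≤ 1 := by
      rw [← hx1]
      exact Finset.single_le_sum (f := fun k => (x k)^2) (fun k _ => sq_nonneg _)
        (Finset.mem_univ i)
    rw [Real.norm_eq_abs, ← Real.sqrt_one, ← Real.sqrt_sq_eq_abs]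
    exact Real.sqrt_le_sqrt h1
  have hcompact : IsCompact S := Metric.isCompact_of_isClosed_isBounded hclosed hbdd
  have hne : S.Nonempty := by
    refine ⟨Pi.single ⟨0, hd⟩ 1, ?_⟩
    show nsq _ = 1
    simp only [nsq]
    rw [Finset.sum_eq_single ⟨0, hd⟩]
    · simp [Pi.single_eq_same]
    · intro b _ hb; simp [Pi.single_eq_of_ne hb]
    · intro h; exact absurd (Finset.mem_univ _) h
  set A := γ • (1 : Matrix (Fin d) (Fin d) ℝ) - C with hA
  have hcont : ContinuousOn (fun x => x ⬝ᵥ A *ᵥ x) S := (continuous_quad A).continuousOn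
  obtain ⟨x₀, hx₀S, hmin⟩ := hcompact.exists_isMinOn hne hcont
  have hx₀ne : x₀ ≠ 0 := by
    intro h
    have : nsq x₀ = 1 := hx₀S
    rw [h] at this
    simp [nsq] at this
  set m := x₀ ⬝ᵥ A *ᵥ x₀ with hm
  have hmpos : 0 < m := posDef_quad_pos h hx₀ne
  refine ⟨m / 2, by linarith, ?_⟩
  refine mem_Gset_of_quad hCs fun x hx => ?_
  -- scale x to the sphere
  have hnx : 0 < nsq x := nsq_pos hx
  set c := Real.sqrt (nsq x) with hc
  have hcpos : 0 < c := Real.sqrt_pos.2 hnx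
  have hcsq : c^2 = nsq x := Real.sq_sqrt (le_of_lt hnx)
  set y := c⁻¹ • x with hy
  have hyS : y ∈ S := by
    show nsq y = 1
    rw [hy, nsq_smul]
    field_simp [hcsq]
    exact hcsq.symm
  have hscale : x ⬝ᵥ A *ᵥ x = c^2 * (y ⬝ᵥ A *ᵥ y) := by
    rw [hy, smul_dotProduct, Matrix.mulVec_smul, dotProduct_smul]
    field_simp
    rw [smul_smul, smul_eq_mul, ← mul_assoc]
    field_simp
  have hybd : m ≤ y ⬝ᵥ A *ᵥ y := hmin hyS
  have hxquad : γ * nsq x - x ⬝ᵥ C *ᵥ x = x ⬝ᵥ A *ᵥ x := (Amat_quad γ x).symm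
  rw [show γ - m/2 = γ - m/2 from rfl]
  have : (γ - m/2) * nsq x - x ⬝ᵥ C *ᵥ x = x ⬝ᵥ A *ᵥ x - m/2 * nsq x := by
    rw [← hxquad]; ring
  rw [this, hscale, ← hcsq]
  nlinarith

end GAnalysis

section Xi

variable {C : Matrix (Fin d) (Fin d) ℝ}
variable (hd : 0 < d) (hCs : Cᵀ = C)
include hd hCs

/-- the critical threshold -/
noncomputable def xiC (C : Matrix (Fin d) (Fin d) ℝ) : ℝ := sInf (Gset C)

lemma mem_Gset_of_gt (γ : ℝ) (h : xiC C < γ) : γ ∈ Gset C := by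
  obtain ⟨γ', hγ', hlt⟩ := (csInf_lt_iff (Gset_bddBelow hd) ⟨_, Gset_nonempty hCs⟩).1 h
  exact Gset_upward hCs hγ' (le_of_lt hlt)

lemma xi_le_of_mem {γ : ℝ} (h : γ ∈ Gset C) : xiC C ≤ γ := csInf_le (Gset_bddBelow hd) h

lemma xi_not_mem : xiC C ∉ Gset C := by
  intro h
  obtain ⟨δ, hδ, hmem⟩ := Gset_open hd hCs h
  have := xi_le_of_mem hd hCs hmem
  linarith

/-- boundary matrix is positive semidefinite in the quadratic-form sense -/
lemma xi_psd (x : Fin d → ℝ) : 0 ≤ xiC C * nsq x - x ⬝ᵥ C *ᵥ x := by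
  rcases eq_or_ne x 0 with rfl | hx
  · simp [nsq]
  by_contra hneg
  push_neg at hneg
  set a := x ⬝ᵥ C *ᵥ x - xiC C * nsq x with ha
  have hapos : 0 < a := by simp only [ha]; linarith
  have hnx := nsq_pos hx
  set ε := a / (2 * nsq x) with hε
  have hεpos : 0 < ε := by positivity
  have hmem : (xiC C + ε) ∈ Gset C := mem_Gset_of_gt hd hCs _ (by linarith)
  have := quad_pos_of_mem_Gset hmem hx
  have hcalc : (xiC C + ε) * nsq x - x ⬝ᵥ C *ᵥ x = -a + ε * nsq x := by
    simp only [ha]; ring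
  rw [hcalc] at this
  have : ε * nsq x = a / 2 := by
    rw [hε]; field_simp
  linarith [this ▸ ‹(0:ℝ) < -a + ε * nsq x›]

/-- exists a kernel vector at the boundary -/
lemma xi_eigen : xiC C ∈ Eset C := by
  -- get x ≠ 0 with quadratic form = 0
  have hnotpd := xi_not_mem hd hCs
  have hherm : (xiC C • (1 : Matrix (Fin d) (Fin d) ℝ) - C).IsHermitian := by
    rw [Matrix.IsHermitian, Matrix.conjTranspose_eq_transpose_of_trivial, Amat_symm hCs]
  have : ¬ (∀ x : Fin d → ℝ, x ≠ 0 → 0 < star x ⬝ᵥ (xiC C • (1 : Matrix (Fin d) (Fin d) ℝ) - C) *ᵥ x) := by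
    intro hall
    exact hnotpd (Matrix.PosDef.of_dotProduct_mulVec_pos hherm fun x hx => hall x hx)
  push_neg at this
  obtain ⟨x, hx, hle⟩ := this
  rw [show star x = x from star_trivial x, Amat_quad] at hle
  have hzero : xiC C * nsq x - x ⬝ᵥ C *ᵥ x = 0 := le_antisymm hle (xi_psd hd hCs x)
  -- show (ξ•1 − C) *ᵥ x = 0 using PSD + quadratic form zero
  set B := xiC C • (1 : Matrix (Fin d) (Fin d) ℝ) - C with hB
  have hBs : Bᵀ = B := Amat_symm hCs _
  have hBpsd : ∀ y, 0 ≤ y ⬝ᵥ B *ᵥ y := by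
    intro y; rw [Amat_quad]; exact xi_psd hd hCs y
  have hBx0 : x ⬝ᵥ B *ᵥ x = 0 := by rw [Amat_quad]; exact hzero
  have hker : B *ᵥ x = 0 := by
    have hdot : ∀ y, y ⬝ᵥ B *ᵥ x = 0 := by
      intro y
      have key : ∀ t : ℝ, 0 ≤ (y ⬝ᵥ B *ᵥ y) * (t * t) + (2 * (y ⬝ᵥ B *ᵥ x)) * t + 0 := by
        intro t
        have h1 := hBpsd (x + t • y)
        have hexp : (x + t • y) ⬝ᵥ B *ᵥ (x + t • y)
            = x ⬝ᵥ B *ᵥ x + 2 * t * (y ⬝ᵥ B *ᵥ x) + t^2 * (y ⬝ᵥ B *ᵥ y) := by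
          rw [Matrix.mulVec_add, Matrix.mulVec_smul, add_dotProduct,
            smul_dotProduct, dotProduct_add, dotProduct_add,
            dotProduct_smul]
          have : x ⬝ᵥ B *ᵥ y = y ⬝ᵥ B *ᵥ x := dot_swap hBs x y
          simp only [smul_eq_mul, dotProduct_smul, this]
          ring
        rw [hexp, hBx0] at h1
        nlinarith [h1]
      have := discrim_le_zero key
      rw [discrim] at this
      nlinarith [this]
    have := hdot (B *ᵥ x)
    rw [dotProduct_self_eq_nsq] at this
    by_contra hne
    exact absurd this (ne_of_gt (nsq_pos hne))
  refine ⟨x, hx, ?_⟩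
  -- B *ᵥ x = 0 means C *ᵥ x = ξ • x
  have : xiC C • x - C *ᵥ x = 0 := by
    rw [← hker, hB, Matrix.sub_mulVec, Matrix.smul_mulVec, Matrix.one_mulVec]
  have h2 : C *ᵥ x = xiC C • x := by
    rw [sub_eq_zero] at this; exact this.symm
  exact h2

lemma Eset_lt_of_mem_Gset {γ : ℝ} (hγ : γ ∈ Gset C) {t : ℝ} (ht : t ∈ Eset C) : t < γ := by
  obtain ⟨v, hv, hCv⟩ := ht
  have h1 := quad_pos_of_mem_Gset hγ hv
  have h2 : v ⬝ᵥ C *ᵥ v = t * nsq v := by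
    rw [hCv, dotProduct_smul, smul_eq_mul, dotProduct_self_eq_nsq]
  rw [h2] at h1
  have := nsq_pos hv
  nlinarith

lemma sSup_Eset_eq_xi : sSup (Eset C) = xiC C := by
  have hmem : xiC C ∈ Eset C := xi_eigen hd hCs
  have hub : ∀ t ∈ Eset C, t ≤ xiC C := by
    intro t ht
    refine le_csInf ⟨_, Gset_nonempty hCs⟩ fun γ hγ => le_of_lt (Eset_lt_of_mem_Gset hd hCs hγ ht)
  exact le_antisymm (csSup_le ⟨_, hmem⟩ hub) (le_csSup ⟨_, hub⟩ hmem)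

lemma Gset_eq_Ioi : Gset C = Set.Ioi (xiC C) := by
  ext γ
  constructor
  · intro h
    have h1 := xi_le_of_mem hd hCs (C := C) h
    rcases lt_or_eq_of_le h1 with h2 | h2
    · exact h2
    · exact absurd (h2 ▸ h) (xi_not_mem hd hCs)
  · intro h
    exact mem_Gset_of_gt hd hCs _ h

/-- lower bound for the quadratic form of `γ•1 - C` for `γ > ξ` -/
lemma Amat_quad_lower {γ : ℝ} (x : Fin d → ℝ) :
    (γ - xiC C) * nsq x ≤ x ⬝ᵥ (γ • (1 : Matrix (Fin d) (Fin d) ℝ) - C) *ᵥ x := by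
  rw [Amat_quad]
  have := xi_psd hd hCs x
  nlinarith [this]

end Xi
end CPart

lemma coe_ennreal_toReal_eq {a : ℝ≥0∞} (ha : a ≠ ⊤) : ((a.toReal : ℝ) : EReal) = (a : EReal) := by
  rw [← EReal.toReal_coe_ennreal]
  refine EReal.coe_toReal ?_ ?_
  · exact fun h => ha (EReal.coe_ennreal_eq_top_iff.1 h)
  · exact ne_of_gt (lt_of_lt_of_le (by simp : (⊥:EReal) < 0) (EReal.coe_ennreal_nonneg a))

lemma erealToENNReal_coe (x : ℝ) : erealToENNReal ((x : ℝ) : EReal) = ENNReal.ofReal x := by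
  rw [erealToENNReal, if_neg (EReal.coe_ne_top x), EReal.toReal_coe]

lemma eexpE_coe_eq {α : Type*} [MeasurableSpace α] (P : Measure α) (g : α → ℝ)
    (hg : Integrable g P) :
    eexpE P (fun w => ((g w : ℝ) : EReal)) = ((∫ w, g w ∂P : ℝ) : EReal) := by
  have hfin : ∀ f : α → ℝ, (∀ᵐ w ∂P, True) → (∀ w, ENNReal.ofReal (f w) ≤ ‖g w‖₊) →
      (∫⁻ w, ENNReal.ofReal (f w) ∂P) ≠ ⊤ := by
    intro f _ hle
    refine ne_of_lt (lt_of_le_of_lt (lintegral_mono fun w => hle w) hg.2)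
  have h1 : (∫⁻ w, ENNReal.ofReal (g w) ∂P) ≠ ⊤ := by
    refine hfin g (by simp) fun w => ?_
    calc ENNReal.ofReal (g w) ≤ ENNReal.ofReal |g w| := ENNReal.ofReal_le_ofReal (le_abs_self _)
      _ = ‖g w‖₊ := (Real.enorm_eq_ofReal_abs _).symm
  have h2 : (∫⁻ w, ENNReal.ofReal (-(g w)) ∂P) ≠ ⊤ := by
    refine hfin _ (by simp) fun w => ?_
    have : -(g w) ≤ |g w| := neg_le_abs _
    calc ENNReal.ofReal (-(g w)) ≤ ENNReal.ofReal |g w| := ENNReal.ofReal_le_ofReal this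
      _ = ‖g w‖₊ := (Real.enorm_eq_ofReal_abs _).symm
  rw [eexpE]
  simp only [erealToENNReal_coe, ← EReal.coe_neg, erealToENNReal_coe]
  rw [integral_eq_lintegral_pos_part_sub_lintegral_neg_part hg, EReal.coe_sub,
    coe_ennreal_toReal_eq h1, coe_ennreal_toReal_eq h2]


section Integr

variable (P : Measure (Fin d → ℝ))

lemma nsq_eq_sum_mul (w : Fin d → ℝ) : nsq w = ∑ i, w i * w i := by
  simp [nsq, sq]

variable {P}

lemma nsq_integrable (hm : ∀ i j, Integrable (fun w => w i * w j) P) :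
    Integrable (fun w => nsq w) P := by
  simp only [nsq_eq_sum_mul]
  exact integrable_finset_sum _ fun i _ => hm i i

lemma mom_integrable (hI : Integrable (fun w => nsq w) P) (i j : Fin d) :
    Integrable (fun w => w i * w j) P := by
  refine Integrable.mono hI ?_ ?_
  · exact ((continuous_apply i).mul (continuous_apply j)).aestronglyMeasurable
  · refine Filter.Eventually.of_forall fun w => ?_
    rw [Real.norm_eq_abs, Real.norm_eq_abs, abs_of_nonneg (nsq_nonneg w)]
    exact abs_mul_le_nsq w i j

lemma quad_integrable (hm : ∀ i j, Integrable (fun w => w i * w j) P)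
    (B : Matrix (Fin d) (Fin d) ℝ) :
    Integrable (fun w => w ⬝ᵥ B *ᵥ w) P := by
  simp only [quad_eq_sum]
  exact integrable_finset_sum _ fun i _ => integrable_finset_sum _ fun j _ =>
    ((hm i j).const_mul (B i j))

lemma quad_integral (hm : ∀ i j, Integrable (fun w => w i * w j) P)
    (B : Matrix (Fin d) (Fin d) ℝ) :
    ∫ w, w ⬝ᵥ B *ᵥ w ∂P = ∑ i, ∑ j, B i j * ∫ w, w i * w j ∂P := by
  simp only [quad_eq_sum]
  rw [integral_finset_sum _ fun i _ => integrable_finset_sum _ fun j _ =>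
    ((hm i j).const_mul (B i j))]
  refine Finset.sum_congr rfl fun i _ => ?_
  rw [integral_finset_sum _ fun j _ => ((hm i j).const_mul (B i j))]
  exact Finset.sum_congr rfl fun j _ => integral_const_mul _ _

lemma mulVec_nsq_eq_sum (B : Matrix (Fin d) (Fin d) ℝ) (w : Fin d → ℝ) :
    nsq (B *ᵥ w) = ∑ i, ∑ j, ∑ k, B i j * B i k * (w j * w k) := by
  simp only [nsq, mulVec, dotProduct, sq]
  refine Finset.sum_congr rfl fun i _ => ?_
  rw [Finset.sum_mul_sum]
  refine Finset.sum_congr rfl fun j _ => Finset.sum_congr rfl fun k _ => by ring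

lemma mulVec_nsq_integrable (hm : ∀ i j, Integrable (fun w => w i * w j) P)
    (B : Matrix (Fin d) (Fin d) ℝ) :
    Integrable (fun w => nsq (B *ᵥ w)) P := by
  simp only [mulVec_nsq_eq_sum]
  exact integrable_finset_sum _ fun i _ => integrable_finset_sum _ fun j _ =>
    integrable_finset_sum _ fun k _ => ((hm j k).const_mul _)

lemma mulVec_nsq_integral (hm : ∀ i j, Integrable (fun w => w i * w j) P)
    (B : Matrix (Fin d) (Fin d) ℝ) :
    ∫ w, nsq (B *ᵥ w) ∂P = ∑ i, ∑ j, ∑ k, B i j * B i k * ∫ w, w j * w k ∂P := by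
  simp only [mulVec_nsq_eq_sum]
  rw [integral_finset_sum _ fun i _ => integrable_finset_sum _ fun j _ =>
    integrable_finset_sum _ fun k _ => ((hm j k).const_mul _)]
  refine Finset.sum_congr rfl fun i _ => ?_
  rw [integral_finset_sum _ fun j _ => integrable_finset_sum _ fun k _ => ((hm j k).const_mul _)]
  refine Finset.sum_congr rfl fun j _ => ?_
  rw [integral_finset_sum _ fun k _ => ((hm j k).const_mul _)]
  exact Finset.sum_congr rfl fun k _ => integral_const_mul _ _

lemma dot_sq_eq_sum (u w : Fin d → ℝ) :
    (u ⬝ᵥ w)^2 = ∑ j, ∑ k, u j * u k * (w j * w k) := by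
  simp only [dotProduct, sq]
  rw [Finset.sum_mul_sum]
  exact Finset.sum_congr rfl fun j _ => Finset.sum_congr rfl fun k _ => by ring

lemma dot_sq_integrable (hm : ∀ i j, Integrable (fun w => w i * w j) P) (u : Fin d → ℝ) :
    Integrable (fun w => (u ⬝ᵥ w)^2) P := by
  simp only [dot_sq_eq_sum]
  exact integrable_finset_sum _ fun j _ => integrable_finset_sum _ fun k _ =>
    ((hm j k).const_mul _)

end Integr

section Marginal

variable {P : Measure (Fin d → ℝ)} {π : Measure ((Fin d → ℝ) × (Fin d → ℝ))}

lemma integrable_fst_of_map (hmap : π.map Prod.fst = P) {f : (Fin d → ℝ) → ℝ}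
    (hf : Continuous f) (hint : Integrable f P) :
    Integrable (fun z : (Fin d → ℝ) × (Fin d → ℝ) => f z.1) π := by
  have := (integrable_map_measure (hmap ▸ hf.aestronglyMeasurable)
    measurable_fst.aemeasurable).1 (hmap ▸ hint)
  exact this

lemma integral_fst_of_map (hmap : π.map Prod.fst = P) {f : (Fin d → ℝ) → ℝ}
    (hf : Continuous f) :
    ∫ z, f z.1 ∂π = ∫ w, f w ∂P := by
  rw [← hmap, integral_map measurable_fst.aemeasurable
    (hmap ▸ hf.aestronglyMeasurable : AEStronglyMeasurable f (π.map Prod.fst))]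

lemma integrable_snd_of_map (hmap : π.map Prod.snd = P) {f : (Fin d → ℝ) → ℝ}
    (hf : Continuous f) (hint : Integrable f P) :
    Integrable (fun z : (Fin d → ℝ) × (Fin d → ℝ) => f z.2) π := by
  have := (integrable_map_measure (hmap ▸ hf.aestronglyMeasurable)
    measurable_snd.aemeasurable).1 (hmap ▸ hint)
  exact this

lemma integral_snd_of_map (hmap : π.map Prod.snd = P) {f : (Fin d → ℝ) → ℝ}
    (hf : Continuous f) :
    ∫ z, f z.2 ∂π = ∫ w, f w ∂P := by
  rw [← hmap, integral_map measurable_snd.aemeasurable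
    (hmap ▸ hf.aestronglyMeasurable : AEStronglyMeasurable f (π.map Prod.snd))]

end Marginal

lemma nsq_sub (z w : Fin d → ℝ) : nsq (z - w) = nsq z - 2*(z ⬝ᵥ w) + nsq w := by
  simp only [nsq, dotProduct, Pi.sub_apply, Finset.mul_sum, ← Finset.sum_add_distrib,
    ← Finset.sum_sub_distrib]
  exact Finset.sum_congr rfl fun i _ => by ring

lemma nsq_sub_le (z w : Fin d → ℝ) : nsq (z - w) ≤ 2 * nsq z + 2 * nsq w := by
  have h1 := nsq_nonneg (z + w)
  have h2 : nsq (z + w) = nsq z + 2*(z ⬝ᵥ w) + nsq w := by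
    simp only [nsq, dotProduct, Pi.add_apply, Finset.mul_sum, ← Finset.sum_add_distrib]
    exact Finset.sum_congr rfl fun i _ => by ring
  rw [nsq_sub]
  nlinarith

lemma cost_eq (z : (Fin d → ℝ) × (Fin d → ℝ)) :
    ∑ i, (z.1 i - z.2 i)^2 = nsq (z.1 - z.2) := by
  simp [nsq]

/-- pointwise weak-duality inequality -/
lemma pw_ineq {C : Matrix (Fin d) (Fin d) ℝ} (hCs : Cᵀ = C) {γ : ℝ}
    (hA : (γ • (1 : Matrix (Fin d) (Fin d) ℝ) - C).PosDef) (z w : Fin d → ℝ) :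
    z ⬝ᵥ C *ᵥ z ≤ γ * nsq (z - w)
      + (γ^2 * (w ⬝ᵥ (γ • (1 : Matrix (Fin d) (Fin d) ℝ) - C)⁻¹ *ᵥ w) - γ * nsq w) := by
  have h := quad_ineq hA (Amat_symm hCs γ) γ z w
  rw [Amat_quad] at h
  rw [nsq_sub]
  nlinarith [h]

/-- coupling extraction -/
lemma exists_coupling {P P₀ : Measure (Fin d → ℝ)} {r : ℝ}
    (h : W2sq P P₀ ≤ ENNReal.ofReal (r^2)) {ε : ℝ} (hε : 0 < ε) :
    ∃ π : Measure ((Fin d → ℝ) × (Fin d → ℝ)), π.map Prod.fst = P ∧ π.map Prod.snd = P₀ ∧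
      ∫⁻ z, ENNReal.ofReal (∑ i, (z.1 i - z.2 i)^2) ∂π ≤ ENNReal.ofReal (r^2 + ε) := by
  have hlt : W2sq P P₀ < ENNReal.ofReal (r^2 + ε) := by
    refine lt_of_le_of_lt h ?_
    rw [ENNReal.ofReal_lt_ofReal_iff (by positivity)]
    linarith
  rw [W2sq] at hlt
  obtain ⟨π, hπ⟩ := iInf_lt_iff.1 hlt
  obtain ⟨h1, hπ⟩ := iInf_lt_iff.1 hπ
  obtain ⟨h2, hπ⟩ := iInf_lt_iff.1 hπ
  exact ⟨π, h1, h2, le_of_lt hπ⟩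

/-- weak duality, integral form -/
lemma weak_core {P P₀ : Measure (Fin d → ℝ)} {r : ℝ}
    (hmom : ∀ i j, Integrable (fun w => w i * w j) P₀)
    (hPint : Integrable (fun w => nsq w) P)
    (hW : W2sq P P₀ ≤ ENNReal.ofReal (r^2))
    {C : Matrix (Fin d) (Fin d) ℝ} (hCs : Cᵀ = C) {γ : ℝ} (hγ : 0 ≤ γ)
    (hA : (γ • (1 : Matrix (Fin d) (Fin d) ℝ) - C).PosDef) :
    ∫ w, w ⬝ᵥ C *ᵥ w ∂P ≤ γ * r^2
      + (γ^2 * ∫ w, w ⬝ᵥ (γ • (1 : Matrix (Fin d) (Fin d) ℝ) - C)⁻¹ *ᵥ w ∂P₀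
         - γ * ∫ w, nsq w ∂P₀) := by
  set Ainv := (γ • (1 : Matrix (Fin d) (Fin d) ℝ) - C)⁻¹ with hAinv
  refine le_of_forall_pos_le_add fun ε' hε' => ?_
  set ε := ε' / (γ + 1) with hεdef
  have hεpos : 0 < ε := by positivity
  obtain ⟨π, hπ1, hπ2, hπcost⟩ := exists_coupling hW hεpos
  -- continuity
  have hqcont : Continuous fun w : Fin d → ℝ => w ⬝ᵥ C *ᵥ w := continuous_quad C
  have hφcont : Continuous fun w : Fin d → ℝ => γ^2 * (w ⬝ᵥ Ainv *ᵥ w) - γ * nsq w :=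
    ((continuous_const.mul (continuous_quad Ainv)).sub (continuous_const.mul continuous_nsq))
  have hcostcont : Continuous fun z : (Fin d → ℝ) × (Fin d → ℝ) => nsq (z.1 - z.2) :=
    continuous_nsq.comp (continuous_fst.sub continuous_snd)
  -- integrability
  have hq_int : Integrable (fun z : (Fin d → ℝ) × (Fin d → ℝ) => z.1 ⬝ᵥ C *ᵥ z.1) π :=
    integrable_fst_of_map hπ1 hqcont (quad_integrable (mom_integrable hPint) C)
  have hφ_intP : Integrable (fun w => γ^2 * (w ⬝ᵥ Ainv *ᵥ w) - γ * nsq w) P₀ :=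
    (((quad_integrable hmom Ainv).const_mul _).sub ((nsq_integrable hmom).const_mul _))
  have hφ_int : Integrable (fun z : (Fin d → ℝ) × (Fin d → ℝ) =>
      γ^2 * (z.2 ⬝ᵥ Ainv *ᵥ z.2) - γ * nsq z.2) π :=
    integrable_snd_of_map hπ2 hφcont hφ_intP
  have hnsq1 : Integrable (fun z : (Fin d → ℝ) × (Fin d → ℝ) => nsq z.1) π :=
    integrable_fst_of_map hπ1 continuous_nsq hPint
  have hnsq2 : Integrable (fun z : (Fin d → ℝ) × (Fin d → ℝ) => nsq z.2) π :=
    integrable_snd_of_map hπ2 continuous_nsq (nsq_integrable hmom)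
  have hcost_int : Integrable (fun z : (Fin d → ℝ) × (Fin d → ℝ) => nsq (z.1 - z.2)) π := by
    refine Integrable.mono ((hnsq1.const_mul 2).add (hnsq2.const_mul 2))
      hcostcont.aestronglyMeasurable ?_
    refine Filter.Eventually.of_forall fun z => ?_
    rw [Real.norm_eq_abs, Real.norm_eq_abs, abs_of_nonneg (nsq_nonneg _)]
    refine (nsq_sub_le _ _).trans (le_abs_self _)
  -- pointwise bound and integral_mono
  have hmono : ∫ z, z.1 ⬝ᵥ C *ᵥ z.1 ∂π
      ≤ ∫ z, (γ * nsq (z.1 - z.2) + (γ^2 * (z.2 ⬝ᵥ Ainv *ᵥ z.2) - γ * nsq z.2)) ∂π := by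
    refine integral_mono hq_int ((hcost_int.const_mul γ).add hφ_int) fun z => ?_
    exact pw_ineq hCs hA z.1 z.2
  rw [integral_add (hcost_int.const_mul γ) hφ_int, integral_const_mul] at hmono
  have hfst : ∫ z, z.1 ⬝ᵥ C *ᵥ z.1 ∂π = ∫ w, w ⬝ᵥ C *ᵥ w ∂P := integral_fst_of_map hπ1 hqcont
  have hsnd : ∫ z, (γ^2 * (z.2 ⬝ᵥ Ainv *ᵥ z.2) - γ * nsq z.2) ∂π
      = ∫ w, (γ^2 * (w ⬝ᵥ Ainv *ᵥ w) - γ * nsq w) ∂P₀ := integral_snd_of_map hπ2 hφcont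
  rw [hfst, hsnd] at hmono
  rw [integral_sub ((quad_integrable hmom Ainv).const_mul _)
    ((nsq_integrable hmom).const_mul _), integral_const_mul, integral_const_mul] at hmono
  -- bound the cost integral
  have hcost_le : ∫ z, nsq (z.1 - z.2) ∂π ≤ r^2 + ε := by
    have hnn : 0 ≤ᶠ[ae π] fun z : (Fin d → ℝ) × (Fin d → ℝ) => nsq (z.1 - z.2) :=
      Filter.Eventually.of_forall fun z => nsq_nonneg _
    rw [integral_eq_lintegral_of_nonneg_ae hnn hcostcont.aestronglyMeasurable]
    have : ∫⁻ z, ENNReal.ofReal (nsq (z.1 - z.2)) ∂π ≤ ENNReal.ofReal (r^2 + ε) := by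
      simpa only [cost_eq] using hπcost
    calc (∫⁻ z, ENNReal.ofReal (nsq (z.1 - z.2)) ∂π).toReal
        ≤ (ENNReal.ofReal (r^2 + ε)).toReal := ENNReal.toReal_mono ENNReal.ofReal_ne_top this
      _ = r^2 + ε := ENNReal.toReal_ofReal (by positivity)
  have hγε : γ * ε ≤ ε' := by
    rw [hεdef]
    rw [div_eq_inv_mul, ← mul_assoc]
    have h1 : γ * (γ + 1)⁻¹ ≤ 1 := by
      rw [mul_inv_le_iff₀ (by linarith)]
      linarith
    nlinarith
  have : γ * ∫ z, nsq (z.1 - z.2) ∂π ≤ γ * (r^2 + ε) :=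
    mul_le_mul_of_nonneg_left hcost_le hγ
  nlinarith [hmono]

lemma dot_sq_integral_pos {P₀ : Measure (Fin d → ℝ)} [IsProbabilityMeasure P₀]
    (hac : P₀ ≪ (volume : Measure (Fin d → ℝ)))
    (hmom : ∀ i j, Integrable (fun w => w i * w j) P₀)
    {v : Fin d → ℝ} (hv : v ≠ 0) : 0 < ∫ w, (v ⬝ᵥ w)^2 ∂P₀ := by
  rcases lt_or_eq_of_le (integral_nonneg (fun w => sq_nonneg (v ⬝ᵥ w)) :
      (0:ℝ) ≤ ∫ w, (v ⬝ᵥ w)^2 ∂P₀) with h | h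
  · exact h
  exfalso
  have hzero : (fun w => (v ⬝ᵥ w)^2) =ᶠ[ae P₀] 0 :=
    (integral_eq_zero_iff_of_nonneg (fun w => sq_nonneg _) (dot_sq_integrable hmom v)).1 h.symm
  -- the kernel hyperplane
  let ℓ : (Fin d → ℝ) →ₗ[ℝ] ℝ :=
    { toFun := fun w => v ⬝ᵥ w
      map_add' := fun w u => dotProduct_add v w u
      map_smul' := fun c w => by simp [dotProduct_smul] }
  have hker_ne_top : LinearMap.ker ℓ ≠ ⊤ := by
    intro htop
    have hvmem : v ∈ LinearMap.ker ℓ := htop ▸ Submodule.mem_top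
    have : v ⬝ᵥ v = 0 := hvmem
    rw [dotProduct_self_eq_nsq] at this
    exact absurd this (ne_of_gt (nsq_pos hv))
  have hvol : (volume : Measure (Fin d → ℝ)) (LinearMap.ker ℓ : Set (Fin d → ℝ)) = 0 :=
    Measure.addHaar_submodule _ _ hker_ne_top
  have hP0 : P₀ (LinearMap.ker ℓ : Set (Fin d → ℝ)) = 0 := hac hvol
  have hPcompl : P₀ ((LinearMap.ker ℓ : Set (Fin d → ℝ))ᶜ) = 0 := by
    have hae : ∀ᵐ w ∂P₀, w ∈ (LinearMap.ker ℓ : Set (Fin d → ℝ)) := by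
      filter_upwards [hzero] with w hw
      have : (v ⬝ᵥ w)^2 = 0 := hw
      have h0 : v ⬝ᵥ w = 0 := by
        exact pow_eq_zero_iff (by norm_num) |>.1 this
      exact h0
    exact (ae_iff.1 hae)
  have : (1:ℝ≥0∞) = P₀ Set.univ := (measure_univ).symm
  rw [show (Set.univ : Set (Fin d → ℝ)) =
      (LinearMap.ker ℓ : Set (Fin d → ℝ)) ∪ (LinearMap.ker ℓ : Set (Fin d → ℝ))ᶜ
    from (Set.union_compl_self _).symm] at this
  have hle := measure_union_le (μ := P₀) (LinearMap.ker ℓ : Set (Fin d → ℝ))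
    (LinearMap.ker ℓ : Set (Fin d → ℝ))ᶜ
  rw [hP0, hPcompl, ← this] at hle
  simp at hle



lemma mulVec_nsq_integral_nonneg {P₀ : Measure (Fin d → ℝ)} (B : Matrix (Fin d) (Fin d) ℝ) :
    0 ≤ ∫ w, nsq (B *ᵥ w) ∂P₀ :=
  integral_nonneg fun w => nsq_nonneg _

section HFun

variable {C : Matrix (Fin d) (Fin d) ℝ}

lemma cauchy_nsq (v x : Fin d → ℝ) : (v ⬝ᵥ x)^2 ≤ nsq v * nsq x := by
  simpa [nsq, dotProduct] using Finset.sum_mul_sq_le_sq_mul_sq Finset.univ v x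

/-- the transport cost function -/
noncomputable def hfun (C : Matrix (Fin d) (Fin d) ℝ) (P₀ : Measure (Fin d → ℝ)) (γ : ℝ) : ℝ :=
  ∫ w, nsq (((γ • (1 : Matrix (Fin d) (Fin d) ℝ) - C)⁻¹ * C) *ᵥ w) ∂P₀

variable (hd : 0 < d) (hCs : Cᵀ = C)
include hd hCs

lemma inv_mulVec_eigvec {γ : ℝ} (hγ : γ ∈ Gset C) {v : Fin d → ℝ}
    (hv : C *ᵥ v = xiC C • v) :
    (γ • (1 : Matrix (Fin d) (Fin d) ℝ) - C)⁻¹ *ᵥ v = (γ - xiC C)⁻¹ • v := by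
  set A := γ • (1 : Matrix (Fin d) (Fin d) ℝ) - C with hA
  have hAv : A *ᵥ v = (γ - xiC C) • v := by
    rw [hA, Matrix.sub_mulVec, Matrix.smul_mulVec, Matrix.one_mulVec, hv, sub_smul]
  have hγξ : γ - xiC C ≠ 0 := by
    have : γ ∈ Set.Ioi (xiC C) := Gset_eq_Ioi hd hCs ▸ hγ
    have : xiC C < γ := this
    linarith
  have h1 : A⁻¹ *ᵥ (A *ᵥ v) = v := by
    rw [Matrix.mulVec_mulVec, inv_mul_cancel' hγ, Matrix.one_mulVec]
  rw [hAv, Matrix.mulVec_smul] at h1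
  have := congrArg (fun x => (γ - xiC C)⁻¹ • x) h1
  simp only [← smul_assoc, smul_eq_mul, inv_mul_cancel₀ hγξ, one_smul] at this
  exact this

lemma dot_eig_mulVec {γ : ℝ} (hγ : γ ∈ Gset C) {v : Fin d → ℝ}
    (hv : C *ᵥ v = xiC C • v) (w : Fin d → ℝ) :
    v ⬝ᵥ (((γ • (1 : Matrix (Fin d) (Fin d) ℝ) - C)⁻¹ * C) *ᵥ w)
      = (γ - xiC C)⁻¹ * (xiC C * (v ⬝ᵥ w)) := by
  set A := γ • (1 : Matrix (Fin d) (Fin d) ℝ) - C with hA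
  have hAinvs : (A⁻¹)ᵀ = A⁻¹ := inv_transpose_eq (Amat_symm hCs γ)
  rw [← Matrix.mulVec_mulVec]
  rw [dot_swap hAinvs]
  rw [inv_mulVec_eigvec hd hCs hγ hv]
  rw [dotProduct_smul, smul_eq_mul]
  congr 1
  rw [dotProduct_comm, dot_swap hCs v w, hv, dotProduct_smul, smul_eq_mul,
    dotProduct_comm w v]

/-- pointwise lower bound by the eigendirection -/
lemma hfun_pointwise_lower {γ : ℝ} (hγ : γ ∈ Gset C) {v : Fin d → ℝ}
    (hv : C *ᵥ v = xiC C • v) (hnv : nsq v = 1) (w : Fin d → ℝ) :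
    ((γ - xiC C)⁻¹ * xiC C)^2 * (v ⬝ᵥ w)^2
      ≤ nsq (((γ • (1 : Matrix (Fin d) (Fin d) ℝ) - C)⁻¹ * C) *ᵥ w) := by
  have h1 := cauchy_nsq v (((γ • (1 : Matrix (Fin d) (Fin d) ℝ) - C)⁻¹ * C) *ᵥ w)
  rw [hnv, one_mul, dot_eig_mulVec hd hCs hγ hv w] at h1
  calc ((γ - xiC C)⁻¹ * xiC C)^2 * (v ⬝ᵥ w)^2
      = ((γ - xiC C)⁻¹ * (xiC C * (v ⬝ᵥ w)))^2 := by ring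
    _ ≤ _ := h1

/-- pointwise upper bound -/
lemma hfun_pointwise_upper {γ : ℝ} (hγ : γ ∈ Gset C) (w : Fin d → ℝ) :
    nsq (((γ • (1 : Matrix (Fin d) (Fin d) ℝ) - C)⁻¹ * C) *ᵥ w)
      ≤ ((γ - xiC C)⁻¹)^2 * nsq (C *ᵥ w) := by
  set A := γ • (1 : Matrix (Fin d) (Fin d) ℝ) - C with hA
  set x := C *ᵥ w with hx
  set y := A⁻¹ *ᵥ x with hy
  have hxy : A *ᵥ y = x := by
    rw [hy, Matrix.mulVec_mulVec, mul_inv_cancel' hγ, Matrix.one_mulVec]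
  have hγξ : 0 < γ - xiC C := by
    have : γ ∈ Set.Ioi (xiC C) := Gset_eq_Ioi hd hCs ▸ hγ
    have : xiC C < γ := this
    linarith
  have h1 : (γ - xiC C) * nsq y ≤ y ⬝ᵥ x := by
    have := Amat_quad_lower hd hCs (γ := γ) y
    rw [← hA, hxy] at this
    exact this
  have h2 : (y ⬝ᵥ x)^2 ≤ nsq y * nsq x := cauchy_nsq y x
  have h3 : nsq (A⁻¹ *ᵥ x) = nsq y := by rw [hy]
  rw [← Matrix.mulVec_mulVec, ← hx, ← hy, h3]
  have hny := nsq_nonneg y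
  have hnx := nsq_nonneg x
  rcases eq_or_lt_of_le hny with h0 | h0
  · rw [← h0]; positivity
  · have hyx : 0 ≤ y ⬝ᵥ x := le_trans (by positivity) h1
    have key : (γ - xiC C)^2 * (nsq y)^2 ≤ nsq y * nsq x := by
      have hsq := pow_le_pow_left₀ (by positivity : (0:ℝ) ≤ (γ - xiC C) * nsq y) h1 2
      calc (γ - xiC C)^2 * (nsq y)^2 = ((γ - xiC C) * nsq y)^2 := by ring
        _ ≤ (y ⬝ᵥ x)^2 := hsq
        _ ≤ nsq y * nsq x := h2
    rw [inv_pow]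
    rw [← mul_le_mul_iff_right₀ (show (0:ℝ) < (γ - xiC C)^2 by positivity)]
    rw [← mul_assoc, mul_inv_cancel₀ (by positivity), one_mul]
    nlinarith [key, h0]

variable {P₀ : Measure (Fin d → ℝ)} [IsProbabilityMeasure P₀]

lemma hfun_lower (hmom : ∀ i j, Integrable (fun w => w i * w j) P₀)
    {γ : ℝ} (hγ : γ ∈ Gset C) {v : Fin d → ℝ}
    (hv : C *ᵥ v = xiC C • v) (hnv : nsq v = 1) :
    ((γ - xiC C)⁻¹ * xiC C)^2 * ∫ w, (v ⬝ᵥ w)^2 ∂P₀ ≤ hfun C P₀ γ := by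
  rw [← integral_const_mul]
  exact integral_mono ((dot_sq_integrable hmom v).const_mul _)
    (mulVec_nsq_integrable hmom _) (hfun_pointwise_lower hd hCs hγ hv hnv)

lemma hfun_upper (hmom : ∀ i j, Integrable (fun w => w i * w j) P₀)
    {γ : ℝ} (hγ : γ ∈ Gset C) :
    hfun C P₀ γ ≤ ((γ - xiC C)⁻¹)^2 * ∫ w, nsq (C *ᵥ w) ∂P₀ := by
  have : ∀ w, nsq (C *ᵥ w) = nsq ((C : Matrix (Fin d) (Fin d) ℝ) *ᵥ w) := fun _ => rfl
  rw [← integral_const_mul]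
  exact integral_mono (mulVec_nsq_integrable hmom _)
    ((mulVec_nsq_integrable hmom C).const_mul _) (hfun_pointwise_upper hd hCs hγ)

lemma hfun_nonneg (γ : ℝ) : 0 ≤ hfun C P₀ γ :=
  integral_nonneg fun w => nsq_nonneg _

omit hd hCs in
/-- continuity of hfun on the feasible region -/
lemma hfun_continuousOn (hmom : ∀ i j, Integrable (fun w => w i * w j) P₀) :
    ContinuousOn (hfun C P₀) (Gset C) := by
  classical
  have hA : Continuous fun γ : ℝ => (γ • (1 : Matrix (Fin d) (Fin d) ℝ) - C) := by
    refine continuous_matrix fun i j => ?_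
    simp only [Matrix.sub_apply, Matrix.smul_apply, smul_eq_mul]
    exact (continuous_id.mul continuous_const).sub continuous_const
  have hdet : ContinuousOn (fun γ : ℝ => ((γ • (1 : Matrix (Fin d) (Fin d) ℝ) - C).det)⁻¹)
      (Gset C) := by
    refine ContinuousOn.inv₀ hA.matrix_det.continuousOn fun γ hγ => ?_
    exact ne_of_gt (Matrix.PosDef.det_pos hγ)
  have hadj : Continuous fun γ : ℝ => (γ • (1 : Matrix (Fin d) (Fin d) ℝ) - C).adjugate :=
    hA.matrix_adjugate
  have hinv : ∀ i j, ContinuousOn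
      (fun γ : ℝ => (γ • (1 : Matrix (Fin d) (Fin d) ℝ) - C)⁻¹ i j) (Gset C) := by
    intro i j
    have heq : ∀ γ : ℝ, (γ • (1 : Matrix (Fin d) (Fin d) ℝ) - C)⁻¹ i j
        = ((γ • (1 : Matrix (Fin d) (Fin d) ℝ) - C).det)⁻¹
          * (γ • (1 : Matrix (Fin d) (Fin d) ℝ) - C).adjugate i j := by
      intro γ
      rw [Matrix.inv_def, Ring.inverse_eq_inv, Matrix.smul_apply, smul_eq_mul]
    simp only [heq]
    refine hdet.mul ?_
    exact ((continuous_apply j).comp ((continuous_apply i).comp hadj)).continuousOn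
  have hB : ∀ i j, ContinuousOn
      (fun γ : ℝ => ((γ • (1 : Matrix (Fin d) (Fin d) ℝ) - C)⁻¹ * C) i j) (Gset C) := by
    intro i j
    simp only [Matrix.mul_apply]
    exact continuousOn_finset_sum _ fun k _ => (hinv i k).mul continuousOn_const
  have heq : ∀ γ, hfun C P₀ γ = ∑ i, ∑ j, ∑ k,
      ((γ • (1 : Matrix (Fin d) (Fin d) ℝ) - C)⁻¹ * C) i j
      * ((γ • (1 : Matrix (Fin d) (Fin d) ℝ) - C)⁻¹ * C) i k
      * ∫ w, w j * w k ∂P₀ := fun γ => mulVec_nsq_integral hmom _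
  refine ContinuousOn.congr ?_ (fun γ _ => heq γ)
  refine continuousOn_finset_sum _ fun i _ => continuousOn_finset_sum _ fun j _ =>
    continuousOn_finset_sum _ fun k _ => ((hB i j).mul (hB i k)).mul continuousOn_const

end HFun

section GammaStar

variable {C : Matrix (Fin d) (Fin d) ℝ}
variable {P₀ : Measure (Fin d → ℝ)} [IsProbabilityMeasure P₀]

set_option maxHeartbeats 4000000 in
lemma exists_gammaStar (hd : 0 < d) (hCs : Cᵀ = C) (hξ : xiC C ≠ 0)
    (hac : P₀ ≪ (volume : Measure (Fin d → ℝ)))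
    (hmom : ∀ i j, Integrable (fun w => w i * w j) P₀)
    {r : ℝ} (hr : 0 < r) :
    ∃ γ : ℝ, 0 ≤ γ ∧ γ ∈ Gset C ∧ hfun C P₀ γ ≤ r^2 ∧ γ * hfun C P₀ γ = γ * r^2 := by
  set ξ := xiC C with hξdef
  set K₂ := ∫ w, nsq (C *ᵥ w) ∂P₀ with hK₂def
  have hK₂ : 0 ≤ K₂ := mulVec_nsq_integral_nonneg C
  have hupper_raw : ∀ γ ∈ Gset C, hfun C P₀ γ ≤ ((γ - ξ)⁻¹)^2 * K₂ :=
    fun γ hγ => hfun_upper hd hCs hmom hγ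
  clear_value K₂
  clear hK₂def
  -- generic upper bound tool
  have hupper_pt : ∀ γ : ℝ, γ ∈ Gset C → 1 + K₂ / r^2 ≤ γ - ξ → hfun C P₀ γ ≤ r^2 := by
    intro γ hγ hs
    set s := γ - ξ with hsdef
    have ha : 0 ≤ K₂ / r^2 := by positivity
    have hspos : 0 < s := by linarith
    have h1 : K₂ ≤ s^2 * r^2 := by
      have h2 : K₂ / r^2 ≤ s^2 := by nlinarith
      calc K₂ = (K₂ / r^2) * r^2 := by field_simp
        _ ≤ s^2 * r^2 := by nlinarith
    refine (hupper_raw γ hγ).trans ?_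
    rw [inv_pow, inv_mul_le_iff₀ (by positivity)]
    exact h1
  rcases hξ.lt_or_gt with hξneg | hξpos
  · -- ξ < 0 : 0 is feasible
    have h0G : (0:ℝ) ∈ Gset C := by rw [Gset_eq_Ioi hd hCs]; exact hξneg
    by_cases hcase : hfun C P₀ 0 < r^2
    · exact ⟨0, le_refl 0, h0G, le_of_lt hcase, by ring⟩
    · push_neg at hcase
      set b := 1 + K₂ / r^2 with hbdef
      have hbpos : 0 < b := by positivity
      have hbG : b ∈ Gset C := by rw [Gset_eq_Ioi hd hCs]; simp only [Set.mem_Ioi]; linarith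
      have hb_le : hfun C P₀ b ≤ r^2 := hupper_pt b hbG (by linarith)
      have hsub : Set.Icc (0:ℝ) b ⊆ Gset C := by
        rw [Gset_eq_Ioi hd hCs]
        intro x hx
        simp only [Set.mem_Ioi]
        linarith [hx.1]
      have hcont : ContinuousOn (hfun C P₀) (Set.Icc 0 b) :=
        (hfun_continuousOn hmom).mono hsub
      obtain ⟨γ, hγmem, hγeq⟩ := intermediate_value_Icc' (le_of_lt hbpos) hcont ⟨hb_le, hcase⟩
      exact ⟨γ, hγmem.1, hsub hγmem, le_of_eq hγeq, by rw [hγeq]⟩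
  · -- ξ > 0
    obtain ⟨v₀, hv₀ne, hv₀⟩ := xi_eigen hd hCs
    set c0 := Real.sqrt (nsq v₀) with hc0
    have hnv₀ : 0 < nsq v₀ := by
      rcases (nsq_nonneg v₀).lt_or_eq with h | h
      · exact h
      · exfalso
        -- nsq v₀ = 0 → v₀ = 0
        have : ∀ i, v₀ i = 0 := by
          intro i
          have hsum := h.symm
          have := (Finset.sum_eq_zero_iff_of_nonneg
            (fun i _ => sq_nonneg (v₀ i))).1 hsum i (Finset.mem_univ i)
          simpa [pow_eq_zero_iff] using this
        exact hv₀ne (funext this)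
    have hc0pos : 0 < c0 := Real.sqrt_pos.2 hnv₀
    have hc0sq : c0^2 = nsq v₀ := Real.sq_sqrt (le_of_lt hnv₀)
    set v := c0⁻¹ • v₀ with hvdef
    have hnv : nsq v = 1 := by
      rw [hvdef, nsq_smul, ← hc0sq]
      field_simp
    have hv : C *ᵥ v = ξ • v := by
      rw [hvdef, Matrix.mulVec_smul, hv₀, smul_comm]
    have hvne : v ≠ 0 := by
      intro h
      rw [h] at hnv
      have : nsq (0 : Fin d → ℝ) = 0 := by simp [nsq]
      rw [this] at hnv
      norm_num at hnv
    set cdot := ∫ w, (v ⬝ᵥ w)^2 ∂P₀ with hcdotdef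
    have hcdot : 0 < cdot := dot_sq_integral_pos hac hmom hvne
    have hlow_raw : ∀ γ ∈ Gset C, ((γ - ξ)⁻¹ * ξ)^2 * cdot ≤ hfun C P₀ γ :=
      fun γ hγ => by
        have := hfun_lower hd hCs hmom hγ hv hnv
        rwa [← hcdotdef] at this
    clear_value cdot
    clear hcdotdef
    set εa := min 1 (ξ * Real.sqrt cdot / r) with hεadef
    have hεapos : 0 < εa := by
      refine lt_min one_pos ?_
      have := Real.sqrt_pos.2 hcdot
      positivity
    set a := ξ + εa with hadef
    have haG : a ∈ Gset C := by
      rw [Gset_eq_Ioi hd hCs]; simp only [Set.mem_Ioi]; linarith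
    have ha_lower : r^2 ≤ hfun C P₀ a := by
      have hl := hlow_raw a haG
      have haξ : a - ξ = εa := by rw [hadef]; ring
      rw [haξ] at hl
      refine le_trans ?_ hl
      -- r^2 ≤ (εa⁻¹ * ξ)^2 * cdot
      have h1 : εa * r ≤ ξ * Real.sqrt cdot := by
        have := min_le_right 1 (ξ * Real.sqrt cdot / r)
        calc εa * r ≤ (ξ * Real.sqrt cdot / r) * r := by
              refine mul_le_mul_of_nonneg_right ?_ (le_of_lt hr)
              rw [hεadef]; exact this
          _ = ξ * Real.sqrt cdot := by field_simp
      have h2 : (εa * r)^2 ≤ ξ^2 * cdot := by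
        have hsq := pow_le_pow_left₀ (by positivity) h1 2
        rwa [mul_pow ξ, Real.sq_sqrt (le_of_lt hcdot)] at hsq
      have hinv : εa^2 * (εa^2)⁻¹ = 1 := mul_inv_cancel₀ (by positivity)
      have he : (εa⁻¹ * ξ)^2 = (εa^2)⁻¹ * ξ^2 := by rw [mul_pow, inv_pow]
      rw [he]
      have h3 := mul_le_mul_of_nonneg_left h2 (show (0:ℝ) ≤ (εa^2)⁻¹ by positivity)
      calc r^2 = (εa^2)⁻¹ * (εa^2 * r^2) := by
            rw [← mul_assoc, mul_comm (εa^2)⁻¹ (εa^2), hinv, one_mul]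
        _ = (εa^2)⁻¹ * (εa * r)^2 := by rw [mul_pow]
        _ ≤ (εa^2)⁻¹ * (ξ^2 * cdot) := h3
        _ = (εa^2)⁻¹ * ξ^2 * cdot := (mul_assoc _ _ _).symm
    set b := a + 1 + K₂ / r^2 with hbdef
    have hab : a ≤ b := by
      have : 0 ≤ K₂ / r^2 := by positivity
      rw [hbdef]; linarith
    have hbG : b ∈ Gset C := by
      rw [Gset_eq_Ioi hd hCs]; simp only [Set.mem_Ioi]
      have : 0 ≤ K₂ / r^2 := by positivity
      rw [hbdef, hadef]; linarith
    have hb_le : hfun C P₀ b ≤ r^2 := by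
      refine hupper_pt b hbG ?_
      rw [hbdef, hadef]; linarith
    have hsub : Set.Icc a b ⊆ Gset C := by
      rw [Gset_eq_Ioi hd hCs]
      intro x hx
      simp only [Set.mem_Ioi]
      have := hx.1
      rw [hadef] at this
      linarith
    have hcont : ContinuousOn (hfun C P₀) (Set.Icc a b) :=
      (hfun_continuousOn hmom).mono hsub
    obtain ⟨γ, hγmem, hγeq⟩ := intermediate_value_Icc' hab hcont ⟨hb_le, ha_lower⟩
    refine ⟨γ, ?_, hsub hγmem, le_of_eq hγeq, by rw [hγeq]⟩
    have := hγmem.1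
    rw [hadef] at this
    linarith

end GammaStar

section Primal

variable {C : Matrix (Fin d) (Fin d) ℝ}

lemma Binv_eq {γ : ℝ} (hγ : γ ∈ Gset C) :
    (γ • (1 : Matrix (Fin d) (Fin d) ℝ) - C)⁻¹ * C
      = γ • (γ • (1 : Matrix (Fin d) (Fin d) ℝ) - C)⁻¹ - 1 := by
  set A := γ • (1 : Matrix (Fin d) (Fin d) ℝ) - C with hA
  have hC : C = γ • (1 : Matrix (Fin d) (Fin d) ℝ) - A := by rw [hA, sub_sub_cancel]
  rw [hC, Matrix.mul_sub, inv_mul_cancel' hγ, mul_smul_comm, mul_one]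

lemma T_sub_eq {γ : ℝ} (hγ : γ ∈ Gset C) (w : Fin d → ℝ) :
    (γ • (γ • (1 : Matrix (Fin d) (Fin d) ℝ) - C)⁻¹) *ᵥ w - w
      = ((γ • (1 : Matrix (Fin d) (Fin d) ℝ) - C)⁻¹ * C) *ᵥ w := by
  rw [Binv_eq hγ, Matrix.sub_mulVec, Matrix.one_mulVec]

lemma primal_pointwise (hCs : Cᵀ = C) {γ : ℝ} (hγ : γ ∈ Gset C) (w : Fin d → ℝ) :
    ((γ • (γ • (1 : Matrix (Fin d) (Fin d) ℝ) - C)⁻¹) *ᵥ w) ⬝ᵥ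
        C *ᵥ ((γ • (γ • (1 : Matrix (Fin d) (Fin d) ℝ) - C)⁻¹) *ᵥ w)
      = γ * nsq (((γ • (1 : Matrix (Fin d) (Fin d) ℝ) - C)⁻¹ * C) *ᵥ w)
        + (γ^2 * (w ⬝ᵥ (γ • (1 : Matrix (Fin d) (Fin d) ℝ) - C)⁻¹ *ᵥ w) - γ * nsq w) := by
  set A := γ • (1 : Matrix (Fin d) (Fin d) ℝ) - C with hA
  set z := (γ • A⁻¹) *ᵥ w with hz
  have hz' : z = γ • (A⁻¹ *ᵥ w) := by rw [hz, Matrix.smul_mulVec]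
  have h0 := quad_eq_at_opt hγ (Amat_symm hCs γ) γ w
  rw [← hz'] at h0
  have h1 : z ⬝ᵥ A *ᵥ z = γ * nsq z - z ⬝ᵥ C *ᵥ z := Amat_quad γ z
  have h2 : nsq (z - w) = nsq z - 2*(z ⬝ᵥ w) + nsq w := nsq_sub z w
  have h3 : z - w = (A⁻¹ * C) *ᵥ w := T_sub_eq hγ w
  rw [← h3, h2]
  rw [h1] at h0
  linarith

variable {P₀ : Measure (Fin d → ℝ)} [IsProbabilityMeasure P₀]

/-- the primal optimizer -/
lemma primal_construction (hCs : Cᵀ = C)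
    (hmom : ∀ i j, Integrable (fun w => w i * w j) P₀)
    {r γ : ℝ} (hγG : γ ∈ Gset C) (hle : hfun C P₀ γ ≤ r^2)
    (heq : γ * hfun C P₀ γ = γ * r^2) :
    ∃ P : Measure (Fin d → ℝ), IsProbabilityMeasure P ∧
      Integrable (fun w => nsq w) P ∧
      W2sq P P₀ ≤ ENNReal.ofReal (r^2) ∧
      ∫ w, w ⬝ᵥ C *ᵥ w ∂P = γ * r^2
        + (γ^2 * ∫ w, w ⬝ᵥ (γ • (1 : Matrix (Fin d) (Fin d) ℝ) - C)⁻¹ *ᵥ w ∂P₀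
           - γ * ∫ w, nsq w ∂P₀) := by
  set A := γ • (1 : Matrix (Fin d) (Fin d) ℝ) - C with hA
  set T : (Fin d → ℝ) → (Fin d → ℝ) := fun w => (γ • A⁻¹) *ᵥ w with hT
  have hTmeas : Measurable T := (continuous_mulVec (γ • A⁻¹)).measurable
  have hpair : Measurable fun w : Fin d → ℝ => (T w, w) := hTmeas.prodMk measurable_id
  refine ⟨P₀.map T, Measure.isProbabilityMeasure_map hTmeas.aemeasurable, ?_, ?_, ?_⟩
  · -- integrability of nsq
    refine (integrable_map_measure continuous_nsq.aestronglyMeasurable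
      hTmeas.aemeasurable).2 ?_
    exact mulVec_nsq_integrable hmom (γ • A⁻¹)
  · -- Wasserstein bound via the explicit coupling
    set π₀ := P₀.map (fun w => (T w, w)) with hπ₀
    have hfst : π₀.map Prod.fst = P₀.map T := by
      rw [hπ₀, Measure.map_map measurable_fst hpair]
      rfl
    have hsnd : π₀.map Prod.snd = P₀ := by
      rw [hπ₀, Measure.map_map measurable_snd hpair]
      exact Measure.map_id
    have hcost_meas : Measurable fun z : (Fin d → ℝ) × (Fin d → ℝ) =>
        ENNReal.ofReal (∑ i, (z.1 i - z.2 i)^2) := by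
      refine ENNReal.measurable_ofReal.comp ?_
      refine Finset.measurable_sum _ fun i _ => ?_
      exact (((measurable_fst.eval).sub (measurable_snd.eval))).pow_const 2
    have hsum_eq : ∀ z : (Fin d → ℝ) × (Fin d → ℝ),
        ∑ i, (z.1 i - z.2 i)^2 = nsq (z.1 - z.2) := by
      intro z; simp [nsq]
    have hlint : ∫⁻ z, ENNReal.ofReal (∑ i, (z.1 i - z.2 i)^2) ∂π₀
        = ENNReal.ofReal (hfun C P₀ γ) := by
      rw [hπ₀, lintegral_map hcost_meas hpair]
      have : ∀ w : Fin d → ℝ, (∑ i, (T w i - w i)^2) = nsq ((A⁻¹ * C) *ᵥ w) := by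
        intro w
        have h1 : ∑ i, (T w i - w i)^2 = nsq (T w - w) := by simp [nsq]
        rw [h1, hT]
        rw [T_sub_eq hγG w]
      simp only [this]
      rw [← ofReal_integral_eq_lintegral_ofReal (mulVec_nsq_integrable hmom _)
        (Filter.Eventually.of_forall fun w => nsq_nonneg _)]
      rfl
    calc W2sq (P₀.map T) P₀
        ≤ ∫⁻ z, ENNReal.ofReal (∑ i, (z.1 i - z.2 i)^2) ∂π₀ := by
          exact (iInf_le _ π₀).trans ((iInf_le _ hfst).trans (iInf_le _ hsnd))
      _ = ENNReal.ofReal (hfun C P₀ γ) := hlint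
      _ ≤ ENNReal.ofReal (r^2) := ENNReal.ofReal_le_ofReal hle
  · -- the value
    rw [integral_map hTmeas.aemeasurable (continuous_quad C).aestronglyMeasurable]
    have hptw : ∀ w, (T w) ⬝ᵥ C *ᵥ (T w)
        = γ * nsq ((A⁻¹ * C) *ᵥ w) + (γ^2 * (w ⬝ᵥ A⁻¹ *ᵥ w) - γ * nsq w) :=
      fun w => primal_pointwise hCs hγG w
    simp only [hptw]
    have hint1 : Integrable (fun w => γ * nsq ((A⁻¹ * C) *ᵥ w)) P₀ :=
      (mulVec_nsq_integrable hmom _).const_mul γ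
    have hintq : Integrable (fun w => γ^2 * (w ⬝ᵥ A⁻¹ *ᵥ w)) P₀ :=
      (quad_integrable hmom A⁻¹).const_mul _
    have hintn : Integrable (fun w => γ * nsq w) P₀ :=
      (nsq_integrable hmom).const_mul _
    have hint2 : Integrable (fun w => γ^2 * (w ⬝ᵥ A⁻¹ *ᵥ w) - γ * nsq w) P₀ := hintq.sub hintn
    rw [integral_add hint1 hint2, integral_const_mul, integral_sub hintq hintn,
      integral_const_mul, integral_const_mul]
    have : γ * ∫ w, nsq ((A⁻¹ * C) *ᵥ w) ∂P₀ = γ * r^2 := heq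
    rw [this]

end Primal

end Stmt1Aux

open Stmt1Aux in
/-- Strong duality for quadratic objectives: for `r > 0`, `P₀` absolutely
continuous w.r.t. Lebesgue measure with second moment matrix `M₀`, and `C` symmetric with
`λ_max(C) ≠ 0`, the optimal value of `sup_{P ∈ 𝒫} E_P[wᵀCw]` is finite and equals
`inf{ γ(r² − Tr M₀) + γ² Tr(M₀(γI−C)⁻¹) : γ ≥ 0, γI − C ≻ 0 }`. -/
theorem stmt1 {d : ℕ} (hd : 0 < d) (r : ℝ) (hr : 0 < r)
    (P₀ : Measure (Fin d → ℝ)) [IsProbabilityMeasure P₀]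
    (hac : P₀ ≪ (volume : Measure (Fin d → ℝ)))
    (hmom : ∀ i j, Integrable (fun w => w i * w j) P₀)
    (C : Matrix (Fin d) (Fin d) ℝ) (hC : C.IsSymm) (hlmax : lambdaMax C ≠ 0)
    (M₀ : Matrix (Fin d) (Fin d) ℝ)
    (hM₀ : M₀ = Matrix.of fun i j => ∫ w, w i * w j ∂P₀) :
    ∃ v : ℝ,
      (⨆ P ∈ ambiguitySet P₀ r, eexpE P (fun w => ((w ⬝ᵥ C.mulVec w : ℝ) : EReal)))
        = (v : EReal) ∧
      v = sInf {x : ℝ | ∃ γ : ℝ, 0 ≤ γ ∧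
            (γ • (1 : Matrix (Fin d) (Fin d) ℝ) - C).PosDef ∧
            x = γ * (r ^ 2 - M₀.trace)
              + γ ^ 2 * (M₀ * (γ • (1 : Matrix (Fin d) (Fin d) ℝ) - C)⁻¹).trace} := by
  classical
  have hCs : Cᵀ = C := hC
  have hξ : xiC C ≠ 0 := by
    have h1 : lambdaMax C = sSup (Eset C) := rfl
    rw [h1, sSup_Eset_eq_xi hd hCs] at hlmax
    exact hlmax
  obtain ⟨γ, hγ0, hγG, hγle, hγeq⟩ := exists_gammaStar hd hCs hξ hac hmom hr
  obtain ⟨Pstar, hPprob, hPint, hPW, hPval⟩ := primal_construction hCs hmom hγG hγle hγeq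
  set A := γ • (1 : Matrix (Fin d) (Fin d) ℝ) - C with hA
  set v : ℝ := γ * r^2 + (γ^2 * ∫ w, w ⬝ᵥ A⁻¹ *ᵥ w ∂P₀ - γ * ∫ w, nsq w ∂P₀) with hv
  -- trace translations
  have htr2 : M₀.trace = ∫ w, nsq w ∂P₀ := by
    have h2 : ∫ w, nsq w ∂P₀ = ∑ i, ∫ w, w i * w i ∂P₀ := by
      simp only [nsq_eq_sum_mul]
      exact integral_finset_sum _ fun i _ => hmom i i
    rw [h2, hM₀, Matrix.trace]
    simp [Matrix.diag]
  have htr1 : ∀ γ' : ℝ, (M₀ * (γ' • (1 : Matrix (Fin d) (Fin d) ℝ) - C)⁻¹).trace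
      = ∫ w, w ⬝ᵥ (γ' • (1 : Matrix (Fin d) (Fin d) ℝ) - C)⁻¹ *ᵥ w ∂P₀ := by
    intro γ'
    set B := (γ' • (1 : Matrix (Fin d) (Fin d) ℝ) - C)⁻¹ with hB
    have hBs : Bᵀ = B := inv_transpose_eq (Amat_symm hCs γ')
    have hBsym : ∀ i j, B j i = B i j := by
      intro i j
      have h := congrFun (congrFun hBs i) j
      rwa [Matrix.transpose_apply] at h
    rw [quad_integral hmom B, hM₀, Matrix.trace]
    simp only [Matrix.diag, Matrix.mul_apply, Matrix.of_apply]
    refine Finset.sum_congr rfl fun i _ => Finset.sum_congr rfl fun j _ => ?_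
    rw [hBsym i j, mul_comm]
  have hdual : ∀ γ' : ℝ, γ' * (r ^ 2 - M₀.trace)
      + γ' ^ 2 * (M₀ * (γ' • (1 : Matrix (Fin d) (Fin d) ℝ) - C)⁻¹).trace
      = γ' * r^2 + (γ'^2 * ∫ w, w ⬝ᵥ (γ' • (1 : Matrix (Fin d) (Fin d) ℝ) - C)⁻¹ *ᵥ w ∂P₀
          - γ' * ∫ w, nsq w ∂P₀) := by
    intro γ'
    rw [htr1 γ', htr2]
    ring
  have hPmem : Pstar ∈ ambiguitySet P₀ r := ⟨hPprob, hPint, hPW⟩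
  haveI := hPprob
  have hPq_int : Integrable (fun w => w ⬝ᵥ C *ᵥ w) Pstar :=
    quad_integrable (mom_integrable hPint) C
  have hweak : ∀ P, P ∈ ambiguitySet P₀ r → ∀ γ' : ℝ, 0 ≤ γ' →
      (γ' • (1 : Matrix (Fin d) (Fin d) ℝ) - C).PosDef →
      ∫ w, w ⬝ᵥ C *ᵥ w ∂P ≤ γ' * r^2
        + (γ'^2 * ∫ w, w ⬝ᵥ (γ' • (1 : Matrix (Fin d) (Fin d) ℝ) - C)⁻¹ *ᵥ w ∂P₀
           - γ' * ∫ w, nsq w ∂P₀) := by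
    intro P hP γ' h0 hpd
    exact weak_core hmom (hP.2.1 : Integrable (fun w => nsq w) P) hP.2.2 hCs h0 hpd
  refine ⟨v, ?_, ?_⟩
  · apply le_antisymm
    · refine iSup₂_le fun P hP => ?_
      haveI := hP.1
      have hq : Integrable (fun w => w ⬝ᵥ C *ᵥ w) P :=
        quad_integrable (mom_integrable (hP.2.1 : Integrable (fun w => nsq w) P)) C
      rw [eexpE_coe_eq P (fun w => w ⬝ᵥ C *ᵥ w) hq]
      exact EReal.coe_le_coe_iff.2 (hweak P hP γ hγ0 hγG)
    · refine le_iSup₂_of_le Pstar hPmem ?_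
      have heq2 : eexpE Pstar (fun w => ((w ⬝ᵥ C *ᵥ w : ℝ) : EReal)) = (v : EReal) := by
        rw [eexpE_coe_eq Pstar (fun w => w ⬝ᵥ C *ᵥ w) hPq_int, hPval]
      exact le_of_eq heq2.symm
  · have hvD : v ∈ {x : ℝ | ∃ γ' : ℝ, 0 ≤ γ' ∧
        (γ' • (1 : Matrix (Fin d) (Fin d) ℝ) - C).PosDef ∧
        x = γ' * (r ^ 2 - M₀.trace)
          + γ' ^ 2 * (M₀ * (γ' • (1 : Matrix (Fin d) (Fin d) ℝ) - C)⁻¹).trace} := by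
      refine ⟨γ, hγ0, hγG, ?_⟩
      rw [hdual γ]
    have hlb : ∀ x ∈ {x : ℝ | ∃ γ' : ℝ, 0 ≤ γ' ∧
        (γ' • (1 : Matrix (Fin d) (Fin d) ℝ) - C).PosDef ∧
        x = γ' * (r ^ 2 - M₀.trace)
          + γ' ^ 2 * (M₀ * (γ' • (1 : Matrix (Fin d) (Fin d) ℝ) - C)⁻¹).trace}, v ≤ x := by
      rintro x ⟨γ', h0, hpd, rfl⟩
      rw [hdual γ']
      calc v = ∫ w, w ⬝ᵥ C *ᵥ w ∂Pstar := hPval.symm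
        _ ≤ _ := hweak Pstar hPmem γ' h0 hpd
    exact le_antisymm (le_csInf ⟨v, hvD⟩ hlb) (csInf_le ⟨v, hlb⟩ hvD)
end

section
/- Let r > 0, let P₀ ∈ ℳ(ℝ^d) be absolutely continuous with respect to Lebesgue measure on ℝ^d, let C ∈ ℝ^{d×d} be symmetric with λ_max(C) ≠ 0, and set M₀ = E_{P₀}[w wᵀ]. Let γ* ≥ 0 satisfy γ* I − C ≻ 0 and Tr( (γ*(γ* I − C)^{-1} − I)² M₀ ) = r². Let P* be the pushforward of P₀ under the linear map w ↦ γ*(γ* I − C)^{-1} w. Then P* belongs to the ambiguity set 𝒫 (i.e., W₂(P*, P₀) ≤ r) and P* attains the optimal value: E_{P*}[wᵀ C w] = sup_{P ∈ 𝒫} E_P[wᵀ C w]. -/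
open Matrix MeasureTheory
open scoped ENNReal

section Aux

variable {d : ℕ}

lemma erealToENNReal_coe (x : ℝ) : erealToENNReal (x : EReal) = ENNReal.ofReal x := by
  simp [erealToENNReal]

lemma eexpE_of_integrable {α : Type*} [MeasurableSpace α] (P : Measure α) (f : α → ℝ)
    (hf : Integrable f P) :
    eexpE P (fun w => ((f w : ℝ) : EReal)) = ((∫ w, f w ∂P : ℝ) : EReal) := by
  have h1 : ∀ w, erealToENNReal ((f w : EReal)) = ENNReal.ofReal (f w) :=
    fun w => erealToENNReal_coe _
  have h2 : ∀ w, erealToENNReal (-((f w : ℝ) : EReal)) = ENNReal.ofReal (-(f w)) := by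
    intro w
    rw [← EReal.coe_neg, erealToENNReal_coe]
  have hfin1 : (∫⁻ w, ENNReal.ofReal (f w) ∂P) ≠ ⊤ := by
    refine ne_of_lt (lt_of_le_of_lt (lintegral_mono fun w => ?_) hf.2)
    calc ENNReal.ofReal (f w) ≤ ENNReal.ofReal ‖f w‖ := ENNReal.ofReal_le_ofReal (le_abs_self _)
      _ = ‖f w‖ₑ := ofReal_norm_eq_enorm _
  have hfin2 : (∫⁻ w, ENNReal.ofReal (-(f w)) ∂P) ≠ ⊤ := by
    refine ne_of_lt (lt_of_le_of_lt (lintegral_mono fun w => ?_) hf.neg.2)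
    calc ENNReal.ofReal (-f w) ≤ ENNReal.ofReal ‖-f w‖ := ENNReal.ofReal_le_ofReal (le_abs_self _)
      _ = ‖(-f) w‖ₑ := ofReal_norm_eq_enorm _
  simp only [eexpE, h1, h2]
  rw [integral_eq_lintegral_pos_part_sub_lintegral_neg_part hf, EReal.coe_sub]
  congr 1
  · rw [← EReal.coe_toReal (x := ((∫⁻ w, ENNReal.ofReal (f w) ∂P : ℝ≥0∞) : EReal))
      (by simpa using hfin1) (by simp), EReal.toReal_coe_ennreal]
  · rw [← EReal.coe_toReal (x := ((∫⁻ w, ENNReal.ofReal (-(f w)) ∂P : ℝ≥0∞) : EReal))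
      (by simpa using hfin2) (by simp), EReal.toReal_coe_ennreal]

lemma quadForm_eq_sum (Q : Matrix (Fin d) (Fin d) ℝ) (w : Fin d → ℝ) :
    w ⬝ᵥ Q.mulVec w = ∑ i, ∑ j, Q i j * (w i * w j) := by
  simp only [dotProduct, Matrix.mulVec, Finset.mul_sum]
  exact Finset.sum_congr rfl fun i _ => Finset.sum_congr rfl fun j _ => by ring

lemma integrable_quadForm (μ : Measure (Fin d → ℝ))
    (hmom : ∀ i j, Integrable (fun w => w i * w j) μ) (Q : Matrix (Fin d) (Fin d) ℝ) :
    Integrable (fun w => w ⬝ᵥ Q.mulVec w) μ := by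
  have : (fun w : Fin d → ℝ => w ⬝ᵥ Q.mulVec w)
      = fun w => ∑ i, ∑ j, Q i j * (w i * w j) := funext fun w => quadForm_eq_sum Q w
  rw [this]
  exact integrable_finset_sum _ fun i _ =>
    integrable_finset_sum _ fun j _ => (hmom i j).const_mul _

lemma integral_quadForm (μ : Measure (Fin d → ℝ))
    (hmom : ∀ i j, Integrable (fun w => w i * w j) μ) (Q : Matrix (Fin d) (Fin d) ℝ) :
    ∫ w, w ⬝ᵥ Q.mulVec w ∂μ = (Q * Matrix.of fun i j => ∫ w, w i * w j ∂μ).trace := by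
  have : (fun w : Fin d → ℝ => w ⬝ᵥ Q.mulVec w)
      = fun w => ∑ i, ∑ j, Q i j * (w i * w j) := funext fun w => quadForm_eq_sum Q w
  rw [this]
  rw [integral_finset_sum _ (f := fun (i : Fin d) (w : Fin d → ℝ) => ∑ j, Q i j * (w i * w j)) (fun i _ => integrable_finset_sum _ fun j _ => (hmom i j).const_mul _)]
  simp only [Matrix.trace, Matrix.diag, Matrix.mul_apply, Matrix.of_apply]
  refine Finset.sum_congr rfl fun i _ => ?_
  rw [integral_finset_sum _ (f := fun (j : Fin d) (w : Fin d → ℝ) => Q i j * (w i * w j)) (fun j _ => (hmom i j).const_mul _)]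
  refine Finset.sum_congr rfl fun j _ => ?_
  rw [MeasureTheory.integral_const_mul]
  congr 1
  exact integral_congr_ae (Filter.Eventually.of_forall fun w => mul_comm _ _)

lemma measurable_mulVecFun (M : Matrix (Fin d) (Fin d) ℝ) :
    Measurable (fun w : Fin d → ℝ => M.mulVec w) := by
  refine measurable_pi_lambda _ fun i => ?_
  simp only [Matrix.mulVec, dotProduct]
  exact Finset.measurable_sum _ fun j _ => (measurable_pi_apply j).const_mul _

lemma continuous_quadForm (Q : Matrix (Fin d) (Fin d) ℝ) :
    Continuous (fun w : Fin d → ℝ => w ⬝ᵥ Q.mulVec w) := by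
  have : (fun w : Fin d → ℝ => w ⬝ᵥ Q.mulVec w)
      = fun w => ∑ i, ∑ j, Q i j * (w i * w j) := funext fun w => quadForm_eq_sum Q w
  rw [this]
  refine continuous_finset_sum _ fun i _ => continuous_finset_sum _ fun j _ => ?_
  exact Continuous.mul continuous_const ((continuous_apply i).mul (continuous_apply j))

lemma abs_quadForm_le (Q : Matrix (Fin d) (Fin d) ℝ) (w : Fin d → ℝ) :
    |w ⬝ᵥ Q.mulVec w| ≤ (∑ i, ∑ j, |Q i j|) * ∑ k, (w k) ^ 2 := by
  rw [quadForm_eq_sum, Finset.sum_mul]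
  refine (Finset.abs_sum_le_sum_abs _ _).trans (Finset.sum_le_sum fun i _ => ?_)
  rw [Finset.sum_mul]
  refine (Finset.abs_sum_le_sum_abs _ _).trans (Finset.sum_le_sum fun j _ => ?_)
  rw [abs_mul, abs_mul]
  have h1 : |w i| * |w j| ≤ ∑ k, (w k) ^ 2 := by
    have hi : (w i) ^ 2 ≤ ∑ k, (w k) ^ 2 :=
      Finset.single_le_sum (f := fun k => (w k)^2) (fun k _ => sq_nonneg _) (Finset.mem_univ i)
    have hj : (w j) ^ 2 ≤ ∑ k, (w k) ^ 2 :=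
      Finset.single_le_sum (f := fun k => (w k)^2) (fun k _ => sq_nonneg _) (Finset.mem_univ j)
    nlinarith [sq_nonneg (|w i| - |w j|), sq_abs (w i), sq_abs (w j)]
  exact mul_le_mul_of_nonneg_left h1 (abs_nonneg _)

lemma integrable_quadForm_of_sq (P : Measure (Fin d → ℝ))
    (hP2 : Integrable (fun w => ∑ i, (w i) ^ 2) P) (Q : Matrix (Fin d) (Fin d) ℝ) :
    Integrable (fun w => w ⬝ᵥ Q.mulVec w) P := by
  have hK : (0:ℝ) ≤ ∑ i, ∑ j, |Q i j| :=
    Finset.sum_nonneg fun i _ => Finset.sum_nonneg fun j _ => abs_nonneg _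
  refine (hP2.const_mul (∑ i, ∑ j, |Q i j|)).mono
    (continuous_quadForm Q).aestronglyMeasurable (Filter.Eventually.of_forall fun w => ?_)
  have h0 : (0:ℝ) ≤ ∑ k, (w k)^2 := Finset.sum_nonneg fun k _ => sq_nonneg _
  rw [Real.norm_eq_abs, Real.norm_eq_abs, abs_of_nonneg (mul_nonneg hK h0)]
  exact abs_quadForm_le Q w

lemma sq_norm_mulVec (M : Matrix (Fin d) (Fin d) ℝ) (w : Fin d → ℝ) :
    ∑ i, ((M.mulVec w) i - w i) ^ 2 = w ⬝ᵥ ((M - 1)ᵀ * (M - 1)).mulVec w := by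
  have h1 : ∀ v : Fin d → ℝ, ∑ i, (v i)^2 = v ⬝ᵥ v := by
    intro v; simp [dotProduct, sq]
  have h2 : (fun i => (M.mulVec w) i - w i) = (M - 1).mulVec w := by
    rw [Matrix.sub_mulVec, Matrix.one_mulVec]; rfl
  have h3 : ((M-1).mulVec w) ⬝ᵥ ((M-1).mulVec w) = w ⬝ᵥ ((M - 1)ᵀ * (M - 1)).mulVec w := by
    rw [← Matrix.mulVec_mulVec, Matrix.dotProduct_mulVec (R := ℝ) w, Matrix.vecMul_transpose]
  rw [← h3, ← h1]
  exact Finset.sum_congr rfl fun i _ => by rw [congrFun h2 i]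

lemma dotProduct_mulVec_symm {C : Matrix (Fin d) (Fin d) ℝ} (hC : Cᵀ = C)
    (x y : Fin d → ℝ) : x ⬝ᵥ C.mulVec y = y ⬝ᵥ C.mulVec x := by
  rw [Matrix.dotProduct_mulVec, ← hC, Matrix.vecMul_transpose, dotProduct_comm, hC]

lemma mulVec_quad (M N : Matrix (Fin d) (Fin d) ℝ) (w : Fin d → ℝ) :
    (M.mulVec w) ⬝ᵥ N.mulVec (M.mulVec w) = w ⬝ᵥ (Mᵀ * N * M).mulVec w := by
  calc (M.mulVec w) ⬝ᵥ N.mulVec (M.mulVec w)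
      = (w ᵥ* Mᵀ) ⬝ᵥ N.mulVec (M.mulVec w) := by rw [Matrix.vecMul_transpose]
    _ = w ⬝ᵥ Mᵀ.mulVec (N.mulVec (M.mulVec w)) := (Matrix.dotProduct_mulVec _ _ _).symm
    _ = w ⬝ᵥ (Mᵀ * N * M).mulVec w := by
        rw [Matrix.mulVec_mulVec, Matrix.mulVec_mulVec, Matrix.mul_assoc]

lemma continuous_sqdist :
    Continuous (fun z : (Fin d → ℝ) × (Fin d → ℝ) => ∑ i, (z.1 i - z.2 i)^2) := by
  refine continuous_finset_sum _ fun i _ => ?_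
  exact (((continuous_apply i).comp continuous_fst).sub
    ((continuous_apply i).comp continuous_snd)).pow 2

lemma key_pointwise (γs : ℝ) (C : Matrix (Fin d) (Fin d) ℝ) (hC : Cᵀ = C)
    (hpd : (γs • (1 : Matrix (Fin d) (Fin d) ℝ) - C).PosDef) (w z : Fin d → ℝ) :
    z ⬝ᵥ C.mulVec z ≤ γs * ∑ i, (z i - w i) ^ 2 +
      (((γs • (γs • (1 : Matrix (Fin d) (Fin d) ℝ) - C)⁻¹).mulVec w) ⬝ᵥ
          C.mulVec ((γs • (γs • (1 : Matrix (Fin d) (Fin d) ℝ) - C)⁻¹).mulVec w)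
        - γs * ∑ i, (((γs • (γs • (1 : Matrix (Fin d) (Fin d) ℝ) - C)⁻¹).mulVec w) i - w i) ^ 2) := by
  set B : Matrix (Fin d) (Fin d) ℝ := γs • (1 : Matrix (Fin d) (Fin d) ℝ) - C with hB
  set zs : Fin d → ℝ := (γs • B⁻¹).mulVec w with hzs
  have hBsymm : Bᵀ = B := by
    rw [hB, Matrix.transpose_sub, Matrix.transpose_smul, Matrix.transpose_one, hC]
  have hdet : IsUnit B.det := isUnit_iff_ne_zero.mpr hpd.det_pos.ne'
  have h0 : B.mulVec zs = γs • w := by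
    rw [hzs, Matrix.smul_mulVec, Matrix.mulVec_smul, Matrix.mulVec_mulVec,
      Matrix.mul_nonsing_inv _ hdet, Matrix.one_mulVec]
  have hBv : ∀ v : Fin d → ℝ, B.mulVec v = γs • v - C.mulVec v := fun v => by
    rw [hB, Matrix.sub_mulVec, Matrix.smul_mulVec, Matrix.one_mulVec]
  have hds : ∀ x y : Fin d → ℝ, x ⬝ᵥ (γs • y) = γs * (x ⬝ᵥ y) := fun x y => by
    rw [dotProduct_smul]; rfl
  have e1 : z ⬝ᵥ B.mulVec z = γs * (z ⬝ᵥ z) - z ⬝ᵥ C.mulVec z := by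
    rw [hBv, dotProduct_sub, hds]
  have e2 : z ⬝ᵥ B.mulVec zs = γs * (z ⬝ᵥ w) := by rw [h0, hds]
  have e3 : zs ⬝ᵥ B.mulVec z = γs * (z ⬝ᵥ w) := by
    rw [dotProduct_mulVec_symm hBsymm, e2]
  have e4 : zs ⬝ᵥ B.mulVec zs = γs * (zs ⬝ᵥ w) := by rw [h0, hds]
  have e5 : zs ⬝ᵥ B.mulVec zs = γs * (zs ⬝ᵥ zs) - zs ⬝ᵥ C.mulVec zs := by
    rw [hBv, dotProduct_sub, hds]
  have F1 : 0 ≤ (z - zs) ⬝ᵥ B.mulVec (z - zs) := by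
    simpa using hpd.posSemidef.dotProduct_mulVec_nonneg (z - zs)
  have eexp : (z - zs) ⬝ᵥ B.mulVec (z - zs)
      = z ⬝ᵥ B.mulVec z - z ⬝ᵥ B.mulVec zs - zs ⬝ᵥ B.mulVec z + zs ⬝ᵥ B.mulVec zs := by
    rw [Matrix.mulVec_sub, sub_dotProduct, dotProduct_sub, dotProduct_sub]
    ring
  have s1 : ∑ i, (z i - w i) ^ 2 = z ⬝ᵥ z - 2 * (z ⬝ᵥ w) + w ⬝ᵥ w := by
    simp only [dotProduct, ← Finset.sum_add_distrib, ← Finset.sum_sub_distrib, Finset.mul_sum]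
    exact Finset.sum_congr rfl fun i _ => by ring
  have s2 : ∑ i, (zs i - w i) ^ 2 = zs ⬝ᵥ zs - 2 * (zs ⬝ᵥ w) + w ⬝ᵥ w := by
    simp only [dotProduct, ← Finset.sum_add_distrib, ← Finset.sum_sub_distrib, Finset.mul_sum]
    exact Finset.sum_congr rfl fun i _ => by ring
  rw [s1, s2]
  nlinarith [F1, e1, e2, e3, e4, e5, eexp]

end Aux

/-- Worst-case distribution: under the assumptions of the strong duality
theorem for quadratic objectives, if `γ* ≥ 0` satisfies `γ*I − C ≻ 0` and
`Tr((γ*(γ*I−C)⁻¹ − I)² M₀) = r²`, then the pushforward `P*` of `P₀` under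
`w ↦ γ*(γ*I−C)⁻¹w` belongs to the ambiguity set and attains
`sup_{P ∈ 𝒫} E_P[wᵀCw]`. -/
theorem stmt2 {d : ℕ} (hd : 0 < d) (r : ℝ) (hr : 0 < r)
    (P₀ : Measure (Fin d → ℝ)) [IsProbabilityMeasure P₀]
    (hac : P₀ ≪ (volume : Measure (Fin d → ℝ)))
    (hmom : ∀ i j, Integrable (fun w => w i * w j) P₀)
    (C : Matrix (Fin d) (Fin d) ℝ) (hC : C.IsSymm) (hlmax : lambdaMax C ≠ 0)
    (M₀ : Matrix (Fin d) (Fin d) ℝ)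
    (hM₀ : M₀ = Matrix.of fun i j => ∫ w, w i * w j ∂P₀)
    (γs : ℝ) (hγs : 0 ≤ γs)
    (hpd : (γs • (1 : Matrix (Fin d) (Fin d) ℝ) - C).PosDef)
    (htr : ((γs • (γs • (1 : Matrix (Fin d) (Fin d) ℝ) - C)⁻¹ - 1) ^ 2 * M₀).trace = r ^ 2)
    (Pstar : Measure (Fin d → ℝ))
    (hPstar : Pstar
      = P₀.map (fun w => (γs • (γs • (1 : Matrix (Fin d) (Fin d) ℝ) - C)⁻¹).mulVec w)) :
    Pstar ∈ ambiguitySet P₀ r ∧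
    eexpE Pstar (fun w => ((w ⬝ᵥ C.mulVec w : ℝ) : EReal))
      = ⨆ P ∈ ambiguitySet P₀ r, eexpE P (fun w => ((w ⬝ᵥ C.mulVec w : ℝ) : EReal)) := by
  have hCs : Cᵀ = C := hC
  set B : Matrix (Fin d) (Fin d) ℝ := γs • (1 : Matrix (Fin d) (Fin d) ℝ) - C with hB
  set A : Matrix (Fin d) (Fin d) ℝ := γs • B⁻¹ with hA
  have hBsymm : Bᵀ = B := by
    rw [hB, Matrix.transpose_sub, Matrix.transpose_smul, Matrix.transpose_one, hCs]
  have hAsymm : Aᵀ = A := by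
    rw [hA, Matrix.transpose_smul, Matrix.transpose_nonsing_inv, hBsymm]
  have hA1symm : (A - 1)ᵀ = A - 1 := by
    rw [Matrix.transpose_sub, Matrix.transpose_one, hAsymm]
  -- the two quadratic-form matrices
  set Q₁ : Matrix (Fin d) (Fin d) ℝ := Aᵀ * C * A with hQ₁
  set Q₂ : Matrix (Fin d) (Fin d) ℝ := (A - 1)ᵀ * (A - 1) with hQ₂
  have hQ₂sq : Q₂ = (A - 1) ^ 2 := by rw [hQ₂, hA1symm, sq]
  -- h : the "dual" function
  set h : (Fin d → ℝ) → ℝ := fun w => w ⬝ᵥ Q₁.mulVec w - γs * (w ⬝ᵥ Q₂.mulVec w) with hh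
  -- pointwise identities
  have hg_of_A : ∀ w : Fin d → ℝ,
      (A.mulVec w) ⬝ᵥ C.mulVec (A.mulVec w) = w ⬝ᵥ Q₁.mulVec w := fun w => mulVec_quad A C w
  have hs_of_A : ∀ w : Fin d → ℝ,
      ∑ i, ((A.mulVec w) i - w i) ^ 2 = w ⬝ᵥ Q₂.mulVec w := fun w => sq_norm_mulVec A w
  -- integrals over P₀
  have hM₀' : M₀ = Matrix.of fun i j => ∫ w, w i * w j ∂P₀ := hM₀
  have hIQ₂ : ∫ w, w ⬝ᵥ Q₂.mulVec w ∂P₀ = r ^ 2 := by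
    rw [integral_quadForm P₀ hmom Q₂, ← hM₀', ← htr, hQ₂sq]
  have hIQ₁ : ∫ w, w ⬝ᵥ Q₁.mulVec w ∂P₀ = γs * r ^ 2 + ∫ w, h w ∂P₀ := by
    rw [hh]
    rw [integral_sub (integrable_quadForm P₀ hmom Q₁)
      ((integrable_quadForm P₀ hmom Q₂).const_mul γs)]
    rw [MeasureTheory.integral_const_mul, hIQ₂]
    ring
  have h_int : Integrable h P₀ := by
    exact (integrable_quadForm P₀ hmom Q₁).sub ((integrable_quadForm P₀ hmom Q₂).const_mul γs)
  have h_cont : Continuous h :=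
    (continuous_quadForm Q₁).sub (continuous_const.mul (continuous_quadForm Q₂))
  have hTmeas : Measurable (fun w : Fin d → ℝ => A.mulVec w) := measurable_mulVecFun A
  -- value of ∫ g dPstar
  have hg_cont : Continuous (fun w : Fin d → ℝ => w ⬝ᵥ C.mulVec w) := continuous_quadForm C
  have hPstar_val : ∫ w, w ⬝ᵥ C.mulVec w ∂Pstar = γs * r ^ 2 + ∫ w, h w ∂P₀ := by
    rw [hPstar, integral_map hTmeas.aemeasurable hg_cont.aestronglyMeasurable]
    calc ∫ w, (A.mulVec w) ⬝ᵥ C.mulVec (A.mulVec w) ∂P₀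
        = ∫ w, w ⬝ᵥ Q₁.mulVec w ∂P₀ := integral_congr_ae
          (Filter.Eventually.of_forall fun w => hg_of_A w)
      _ = γs * r ^ 2 + ∫ w, h w ∂P₀ := hIQ₁
  -- Pstar is a probability measure
  have hPstar_prob : IsProbabilityMeasure Pstar := by
    rw [hPstar]; exact Measure.isProbabilityMeasure_map hTmeas.aemeasurable
  -- second moments of Pstar
  have hsq_cont : Continuous (fun w : Fin d → ℝ => ∑ i, (w i)^2) := by
    refine continuous_finset_sum _ fun i _ => (continuous_apply i).pow 2
  have hPstar_sq : Integrable (fun w => ∑ i, (w i) ^ 2) Pstar := by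
    rw [hPstar]
    refine (integrable_map_measure hsq_cont.aestronglyMeasurable hTmeas.aemeasurable).mpr ?_
    have : ((fun w : Fin d → ℝ => ∑ i, (w i)^2) ∘ (fun w => A.mulVec w))
        = fun w => w ⬝ᵥ (Aᵀ * 1 * A).mulVec w := by
      funext w
      simp only [Function.comp_apply]
      rw [← mulVec_quad A 1 w]
      simp only [Matrix.one_mulVec]
      simp [dotProduct, sq]
    rw [this]
    exact integrable_quadForm P₀ hmom _
  -- W2sq Pstar P₀ ≤ r²
  have hW2 : W2sq Pstar P₀ ≤ ENNReal.ofReal (r ^ 2) := by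
    set π₀ : Measure ((Fin d → ℝ) × (Fin d → ℝ)) :=
      P₀.map (fun w => (A.mulVec w, w)) with hπ₀
    have hpair : Measurable (fun w : Fin d → ℝ => (A.mulVec w, w)) :=
      hTmeas.prodMk measurable_id
    have hm1 : π₀.map Prod.fst = Pstar := by
      rw [hπ₀, Measure.map_map measurable_fst hpair, hPstar]; rfl
    have hm2 : π₀.map Prod.snd = P₀ := by
      rw [hπ₀, Measure.map_map measurable_snd hpair]
      rw [show (Prod.snd ∘ fun w : Fin d → ℝ => (A.mulVec w, w)) = id from rfl, Measure.map_id]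
    have hle : W2sq Pstar P₀ ≤ ∫⁻ z, ENNReal.ofReal (∑ i, (z.1 i - z.2 i)^2) ∂π₀ := by
      calc W2sq Pstar P₀
          ≤ ⨅ (_ : π₀.map Prod.fst = Pstar) (_ : π₀.map Prod.snd = P₀),
            ∫⁻ z, ENNReal.ofReal (∑ i, (z.1 i - z.2 i)^2) ∂π₀ := iInf_le _ π₀
        _ = ∫⁻ z, ENNReal.ofReal (∑ i, (z.1 i - z.2 i)^2) ∂π₀ := by
            rw [iInf_pos hm1, iInf_pos hm2]
    refine hle.trans ?_
    rw [hπ₀, lintegral_map continuous_sqdist.measurable.ennreal_ofReal hpair]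
    have hInt : Integrable (fun w => ∑ i, ((A.mulVec w) i - w i)^2) P₀ := by
      have : (fun w : Fin d → ℝ => ∑ i, ((A.mulVec w) i - w i)^2)
          = fun w => w ⬝ᵥ Q₂.mulVec w := funext fun w => hs_of_A w
      rw [this]; exact integrable_quadForm P₀ hmom Q₂
    have hnn : 0 ≤ᵐ[P₀] (fun w => ∑ i, ((A.mulVec w) i - w i)^2) :=
      Filter.Eventually.of_forall fun w => Finset.sum_nonneg fun i _ => sq_nonneg _
    rw [← ofReal_integral_eq_lintegral_ofReal hInt hnn]
    refine ENNReal.ofReal_le_ofReal (le_of_eq ?_)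
    calc ∫ w, ∑ i, ((A.mulVec w) i - w i)^2 ∂P₀
        = ∫ w, w ⬝ᵥ Q₂.mulVec w ∂P₀ := integral_congr_ae
          (Filter.Eventually.of_forall fun w => hs_of_A w)
      _ = r ^ 2 := hIQ₂
  have hmem : Pstar ∈ ambiguitySet P₀ r := ⟨hPstar_prob, hPstar_sq, hW2⟩
  -- upper bound for any member of the ambiguity set
  have hub : ∀ P ∈ ambiguitySet P₀ r,
      ∫ w, w ⬝ᵥ C.mulVec w ∂P ≤ γs * r ^ 2 + ∫ w, h w ∂P₀ := by
    rintro P ⟨hPprob, hP2, hWP⟩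
    have hgP : Integrable (fun w => w ⬝ᵥ C.mulVec w) P := integrable_quadForm_of_sq P hP2 C
    refine le_of_forall_pos_le_add fun ε hε => ?_
    set δ : ℝ := ε / (γs + 1) with hδdef
    have hδ : 0 < δ := div_pos hε (by linarith)
    have hγδ : γs * δ ≤ ε := by
      have h1 : γs / (γs + 1) ≤ 1 := by
        rw [div_le_one (by linarith)]; linarith
      calc γs * δ = (γs / (γs + 1)) * ε := by rw [hδdef]; ring
        _ ≤ 1 * ε := mul_le_mul_of_nonneg_right h1 hε.le
        _ = ε := one_mul ε
    -- extract a near-optimal coupling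
    have hlt : W2sq P P₀ < ENNReal.ofReal (r ^ 2) + ENNReal.ofReal δ :=
      lt_of_le_of_lt hWP (ENNReal.lt_add_right ENNReal.ofReal_ne_top
        (ENNReal.ofReal_pos.mpr hδ).ne')
    rw [W2sq] at hlt
    obtain ⟨π, hlt⟩ := iInf_lt_iff.mp hlt
    obtain ⟨h1, hlt⟩ := iInf_lt_iff.mp hlt
    obtain ⟨h2, hlt⟩ := iInf_lt_iff.mp hlt
    -- the squared-distance function on pairs
    set s : (Fin d → ℝ) × (Fin d → ℝ) → ℝ := fun z => ∑ i, (z.1 i - z.2 i)^2 with hs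
    have hs_nonneg : ∀ z, 0 ≤ s z := fun z => Finset.sum_nonneg fun i _ => sq_nonneg _
    have hs_int : Integrable s π := by
      constructor
      · exact continuous_sqdist.aestronglyMeasurable
      · rw [hasFiniteIntegral_iff_norm]
        have : ∀ z, ENNReal.ofReal ‖s z‖ = ENNReal.ofReal (s z) := fun z => by
          rw [Real.norm_eq_abs, abs_of_nonneg (hs_nonneg z)]
        simp only [this]
        exact lt_of_lt_of_le hlt le_top
    have hs_val : ∫ z, s z ∂π ≤ r ^ 2 + δ := by
      rw [integral_eq_lintegral_of_nonneg_ae (Filter.Eventually.of_forall hs_nonneg)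
        continuous_sqdist.aestronglyMeasurable]
      have : (∫⁻ z, ENNReal.ofReal (s z) ∂π) ≤ ENNReal.ofReal (r^2 + δ) := by
        rw [ENNReal.ofReal_add (sq_nonneg r) hδ.le]
        exact hlt.le
      calc (∫⁻ z, ENNReal.ofReal (s z) ∂π).toReal
          ≤ (ENNReal.ofReal (r^2 + δ)).toReal := ENNReal.toReal_mono ENNReal.ofReal_ne_top this
        _ = r ^ 2 + δ := ENNReal.toReal_ofReal (by positivity)
    -- integrability of g ∘ fst and h ∘ snd over π
    have hgfst : Integrable (fun z : (Fin d → ℝ) × (Fin d → ℝ) => z.1 ⬝ᵥ C.mulVec z.1) π := by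
      have := (integrable_map_measure (by rw [h1]; exact hg_cont.aestronglyMeasurable)
        measurable_fst.aemeasurable (f := Prod.fst)
        (g := fun w : Fin d → ℝ => w ⬝ᵥ C.mulVec w)).mp (by rw [h1]; exact hgP)
      exact this
    have hhsnd : Integrable (fun z : (Fin d → ℝ) × (Fin d → ℝ) => h z.2) π := by
      have := (integrable_map_measure (by rw [h2]; exact h_cont.aestronglyMeasurable)
        measurable_snd.aemeasurable (f := Prod.snd) (g := h)).mp (by rw [h2]; exact h_int)
      exact this
    -- pointwise bound and integration
    have hpt : ∀ z : (Fin d → ℝ) × (Fin d → ℝ),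
        z.1 ⬝ᵥ C.mulVec z.1 ≤ γs * s z + h z.2 := by
      intro z
      have := key_pointwise γs C hCs hpd z.2 z.1
      rw [hh]
      simp only [hs]
      rw [← hg_of_A z.2, ← hs_of_A z.2]
      exact this
    have hint_le : ∫ z, z.1 ⬝ᵥ C.mulVec z.1 ∂π ≤ ∫ z, (γs * s z + h z.2) ∂π :=
      integral_mono hgfst ((hs_int.const_mul γs).add hhsnd) hpt
    have hgP_eq : ∫ w, w ⬝ᵥ C.mulVec w ∂P = ∫ z, z.1 ⬝ᵥ C.mulVec z.1 ∂π := by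
      rw [← h1, integral_map measurable_fst.aemeasurable
        (by rw [h1]; exact hg_cont.aestronglyMeasurable)]
    have hhP₀_eq : ∫ z, h z.2 ∂π = ∫ w, h w ∂P₀ := by
      rw [← h2, integral_map measurable_snd.aemeasurable
        (by rw [h2]; exact h_cont.aestronglyMeasurable)]
    calc ∫ w, w ⬝ᵥ C.mulVec w ∂P = ∫ z, z.1 ⬝ᵥ C.mulVec z.1 ∂π := hgP_eq
      _ ≤ ∫ z, (γs * s z + h z.2) ∂π := hint_le
      _ = γs * ∫ z, s z ∂π + ∫ z, h z.2 ∂π := by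
          rw [integral_add (hs_int.const_mul γs) hhsnd, MeasureTheory.integral_const_mul]
      _ ≤ γs * (r ^ 2 + δ) + ∫ w, h w ∂P₀ := by
          rw [hhP₀_eq]
          exact add_le_add_left (mul_le_mul_of_nonneg_left hs_val hγs) _
      _ ≤ (γs * r ^ 2 + ∫ w, h w ∂P₀) + ε := by
          have : γs * (r^2 + δ) = γs * r^2 + γs * δ := by ring
          rw [this]
          linarith [hγδ]
  refine ⟨hmem, ?_⟩
  -- conclude the supremum equality
  have hmain : ∀ P ∈ ambiguitySet P₀ r,
      eexpE P (fun w => ((w ⬝ᵥ C.mulVec w : ℝ) : EReal))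
        ≤ eexpE Pstar (fun w => ((w ⬝ᵥ C.mulVec w : ℝ) : EReal)) := by
    intro P hP
    rw [eexpE_of_integrable P _ (integrable_quadForm_of_sq P hP.2.1 C),
      eexpE_of_integrable Pstar _ (integrable_quadForm_of_sq Pstar hPstar_sq C)]
    rw [EReal.coe_le_coe_iff]
    rw [hPstar_val]
    exact hub P hP
  refine le_antisymm ?_ ?_
  · exact le_iSup₂ (f := fun P (_ : P ∈ ambiguitySet P₀ r) =>
      eexpE P (fun w => ((w ⬝ᵥ C.mulVec w : ℝ) : EReal))) Pstar hmem
  · exact iSup₂_le hmain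
end

section
/- Let P₀ be a Borel probability measure on ℝ^d with finite second moment that is absolutely continuous with respect to Lebesgue measure, and let C ∈ ℝ^{d×d} be symmetric with λ_max(C) ≠ 0. Then for every γ ≥ 0, E_{P₀}[φ(γ, w)] > −∞ if and only if γI − C ≻ 0. -/
open Matrix MeasureTheory
open scoped ENNReal

/-! ### Auxiliary lemmas -/

section Aux

variable {d : ℕ}

lemma dp_symm (C : Matrix (Fin d) (Fin d) ℝ) (hC : C.IsSymm) (v w : Fin d → ℝ) :
    v ⬝ᵥ C *ᵥ w = w ⬝ᵥ C *ᵥ v := by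
  rw [dotProduct_mulVec, ← mulVec_transpose, hC.eq, dotProduct_comm]

lemma star_id (x : Fin d → ℝ) : star x = x := by
  funext i; simp

lemma isHerm_of_symm (C : Matrix (Fin d) (Fin d) ℝ) (hC : C.IsSymm) : C.IsHermitian := by
  rwa [Matrix.IsHermitian, conjTranspose_eq_transpose_of_trivial]

lemma quad_expand (C : Matrix (Fin d) (Fin d) ℝ) (hC : C.IsSymm) (w v : Fin d → ℝ) (t γ : ℝ) :
    γ * (∑ i, ((w + t • v) i - w i) ^ 2) - (w + t • v) ⬝ᵥ C *ᵥ (w + t • v)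
      = t ^ 2 * (v ⬝ᵥ (γ • (1 : Matrix (Fin d) (Fin d) ℝ) - C) *ᵥ v)
        - 2 * t * (v ⬝ᵥ C *ᵥ w) - w ⬝ᵥ C *ᵥ w := by
  have h1 : ∀ i, (w + t • v) i - w i = t * v i := by intro i; simp [mul_comm]
  have h2 : (∑ i, ((w + t • v) i - w i) ^ 2) = t ^ 2 * ∑ i, v i ^ 2 := by
    simp only [h1, mul_pow, Finset.mul_sum]
  have hA : v ⬝ᵥ (γ • (1 : Matrix (Fin d) (Fin d) ℝ) - C) *ᵥ v
      = γ * (∑ i, v i ^ 2) - v ⬝ᵥ C *ᵥ v := by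
    rw [sub_mulVec, dotProduct_sub, smul_mulVec, one_mulVec, dotProduct_smul]
    simp [dotProduct, pow_two, smul_eq_mul]
  have h3 : (w + t • v) ⬝ᵥ C *ᵥ (w + t • v)
      = w ⬝ᵥ C *ᵥ w + 2 * t * (v ⬝ᵥ C *ᵥ w) + t ^ 2 * (v ⬝ᵥ C *ᵥ v) := by
    rw [mulVec_add, dotProduct_add, add_dotProduct, add_dotProduct]
    rw [mulVec_smul, dotProduct_smul, smul_dotProduct, smul_dotProduct, dotProduct_smul]
    rw [dp_symm C hC v w]
    simp only [smul_eq_mul]; ring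
  rw [h2, hA, h3]; ring

lemma ereal_eq_bot (x : EReal) (h : ∀ r : ℝ, x ≤ (r : EReal)) : x = ⊥ := by
  by_contra hbot
  induction x with
  | bot => exact hbot rfl
  | coe a =>
    have := h (a - 1)
    rw [EReal.coe_le_coe_iff] at this; linarith
  | top => exact absurd (h 0) (by simp)

lemma erealToENNReal_le (x : EReal) (c : ℝ) (h : x ≤ (c : EReal)) :
    erealToENNReal x ≤ ENNReal.ofReal c := by
  induction x with
  | bot => simp [erealToENNReal]
  | coe a =>
    rw [EReal.coe_le_coe_iff] at h
    simp only [erealToENNReal, EReal.coe_ne_top, if_false, EReal.toReal_coe]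
    exact ENNReal.ofReal_le_ofReal h
  | top => exact absurd h (by simp)

lemma quad_abs_bound (B : Matrix (Fin d) (Fin d) ℝ) (w : Fin d → ℝ) :
    |w ⬝ᵥ B *ᵥ w| ≤ (∑ i, ∑ j, |B i j|) * ∑ i, w i ^ 2 := by
  have key : ∀ i j : Fin d, |w i| * |w j| ≤ ∑ k, w k ^ 2 := by
    intro i j
    have h1 : w i ^ 2 ≤ ∑ k, w k ^ 2 :=
      Finset.single_le_sum (fun k _ => sq_nonneg (w k)) (Finset.mem_univ i)
    have h2 : w j ^ 2 ≤ ∑ k, w k ^ 2 :=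
      Finset.single_le_sum (fun k _ => sq_nonneg (w k)) (Finset.mem_univ j)
    nlinarith [abs_nonneg (w i), abs_nonneg (w j), sq_abs (w i), sq_abs (w j)]
  calc |w ⬝ᵥ B *ᵥ w| = |∑ i, ∑ j, w i * (B i j * w j)| := by
        simp [dotProduct, mulVec, Finset.mul_sum]
    _ ≤ ∑ i, |∑ j, w i * (B i j * w j)| := Finset.abs_sum_le_sum_abs _ _
    _ ≤ ∑ i, ∑ j, |w i * (B i j * w j)| :=
        Finset.sum_le_sum fun i _ => Finset.abs_sum_le_sum_abs _ _
    _ ≤ ∑ i, ∑ j, |B i j| * ∑ k, w k ^ 2 := by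
        refine Finset.sum_le_sum fun i _ => Finset.sum_le_sum fun j _ => ?_
        rw [abs_mul, abs_mul]
        calc |w i| * (|B i j| * |w j|) = |B i j| * (|w i| * |w j|) := by ring
          _ ≤ |B i j| * ∑ k, w k ^ 2 :=
            mul_le_mul_of_nonneg_left (key i j) (abs_nonneg _)
    _ = (∑ i, ∑ j, |B i j|) * ∑ i, w i ^ 2 := by simp [Finset.sum_mul]

lemma complete_square (A : Matrix (Fin d) (Fin d) ℝ) (hS : A.IsSymm) (hA : A.PosDef)
    (γ : ℝ) (z w : Fin d → ℝ) :
    z ⬝ᵥ A *ᵥ z - 2 * γ * (z ⬝ᵥ w) ≥ - (γ ^ 2 * (w ⬝ᵥ A⁻¹ *ᵥ w)) := by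
  have hinv : A * A⁻¹ = 1 := Matrix.mul_nonsing_inv A hA.det_pos.ne'.isUnit
  have hSinv : A⁻¹.IsSymm := by
    rw [Matrix.IsSymm, Matrix.transpose_nonsing_inv, hS.eq]
  set c : Fin d → ℝ := γ • (A⁻¹ *ᵥ w) with hc
  have hAc : A *ᵥ c = γ • w := by
    rw [hc, mulVec_smul, mulVec_mulVec, hinv, one_mulVec]
  have hnn : 0 ≤ (z - c) ⬝ᵥ A *ᵥ (z - c) := by
    have := hA.posSemidef.dotProduct_mulVec_nonneg (z - c)
    rwa [star_id] at this
  have hexp : (z - c) ⬝ᵥ A *ᵥ (z - c)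
      = z ⬝ᵥ A *ᵥ z - 2 * γ * (z ⬝ᵥ w) + γ ^ 2 * (w ⬝ᵥ A⁻¹ *ᵥ w) := by
    rw [mulVec_sub, dotProduct_sub, sub_dotProduct, sub_dotProduct, hAc]
    have h1 : z ⬝ᵥ γ • w = γ * (z ⬝ᵥ w) := by rw [dotProduct_smul, smul_eq_mul]
    have h2 : c ⬝ᵥ A *ᵥ z = γ * (z ⬝ᵥ w) := by
      rw [dp_symm A hS c z, hAc, dotProduct_smul, smul_eq_mul]
    have h3 : c ⬝ᵥ γ • w = γ ^ 2 * (w ⬝ᵥ A⁻¹ *ᵥ w) := by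
      rw [dotProduct_smul, hc, smul_dotProduct, smul_eq_mul, smul_eq_mul,
        dotProduct_comm, dp_symm A⁻¹ hSinv w]
      ring
    rw [h1, h2, h3]; ring
  linarith

lemma hyperplane_null (v : Fin d → ℝ) (hv : v ≠ 0) :
    (volume : Measure (Fin d → ℝ)) {w | v ⬝ᵥ w = 0} = 0 := by
  let ℓ : (Fin d → ℝ) →ₗ[ℝ] ℝ :=
    { toFun := fun w => v ⬝ᵥ w
      map_add' := fun x y => dotProduct_add v x y
      map_smul' := fun c x => by simp [dotProduct_smul] }
  have hker : LinearMap.ker ℓ ≠ ⊤ := by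
    intro h
    have hv2 : ℓ v = 0 := by
      have : v ∈ LinearMap.ker ℓ := by rw [h]; trivial
      exact this
    have : v ⬝ᵥ v = 0 := hv2
    rw [dotProduct_self_eq_zero] at this
    exact hv this
  have := MeasureTheory.Measure.addHaar_submodule (volume : Measure (Fin d → ℝ))
    (LinearMap.ker ℓ) hker
  convert this using 1
  rfl

lemma eexpE_eq_bot {α : Type*} [MeasurableSpace α] (P : Measure α) [IsProbabilityMeasure P]
    (g : α → EReal) (h : ∀ᵐ w ∂P, g w = ⊥) : eexpE P g = ⊥ := by
  have hcongr : (fun w => erealToENNReal (-(g w))) =ᵐ[P] (fun _ => (⊤ : ℝ≥0∞)) := by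
    filter_upwards [h] with w hw
    rw [hw]
    simp [erealToENNReal]
  have htop : ∫⁻ w, erealToENNReal (-(g w)) ∂P = ⊤ := by
    rw [lintegral_congr_ae hcongr, lintegral_const]
    simp
  rw [eexpE, htop, EReal.coe_ennreal_top, EReal.sub_top]

lemma eexpE_ne_bot {α : Type*} [MeasurableSpace α] (P : Measure α) (g : α → EReal)
    (h : ∫⁻ w, erealToENNReal (-(g w)) ∂P ≠ ⊤) : eexpE P g ≠ ⊥ := by
  rw [eexpE, sub_eq_add_neg, ne_eq, EReal.add_eq_bot_iff]
  push_neg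
  constructor
  · exact ne_of_gt (lt_of_lt_of_le (by simp : (⊥ : EReal) < 0) (EReal.coe_ennreal_nonneg _))
  · simp only [ne_eq, EReal.neg_eq_bot_iff, EReal.coe_ennreal_eq_top_iff]
    exact h

end Aux

/-- for `P₀` a Borel probability measure on `ℝ^d` with finite second moment,
absolutely continuous w.r.t. Lebesgue measure, and `C` symmetric with `λ_max(C) ≠ 0`, for
every `γ ≥ 0` one has `E_{P₀}[φ(γ,·)] > −∞` iff `γI − C ≻ 0`, where
`φ(γ,w) = inf_z { γ‖z−w‖² − zᵀCz }`. -/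
theorem stmt4 {d : ℕ} (hd : 0 < d)
    (P₀ : Measure (Fin d → ℝ)) [IsProbabilityMeasure P₀]
    (hmom : Integrable (fun w => ∑ i, (w i) ^ 2) P₀)
    (hac : P₀ ≪ (volume : Measure (Fin d → ℝ)))
    (C : Matrix (Fin d) (Fin d) ℝ) (hC : C.IsSymm) (hlmax : lambdaMax C ≠ 0) :
    ∀ γ : ℝ, 0 ≤ γ →
      (eexpE P₀ (phiDual (fun z => z ⬝ᵥ C.mulVec z) γ) ≠ ⊥
        ↔ (γ • (1 : Matrix (Fin d) (Fin d) ℝ) - C).PosDef) := by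
  intro γ hγ
  set A : Matrix (Fin d) (Fin d) ℝ := γ • (1 : Matrix (Fin d) (Fin d) ℝ) - C with hAdef
  have hAS : A.IsSymm := by
    rw [Matrix.IsSymm, hAdef, transpose_sub, transpose_smul, transpose_one, hC.eq]
  have hherm : A.IsHermitian := isHerm_of_symm A hAS
  set f : (Fin d → ℝ) → ℝ := fun z => z ⬝ᵥ C.mulVec z with hfdef
  have phi_le : ∀ (w v : Fin d → ℝ) (t : ℝ),
      phiDual f γ w ≤ ((t ^ 2 * (v ⬝ᵥ A *ᵥ v) - 2 * t * (v ⬝ᵥ C *ᵥ w)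
        - w ⬝ᵥ C *ᵥ w : ℝ) : EReal) := by
    intro w v t
    have h := iInf_le (fun z : Fin d → ℝ =>
      ((γ * ∑ i, (z i - w i) ^ 2 - f z : ℝ) : EReal)) (w + t • v)
    rw [show (γ * ∑ i, ((w + t • v) i - w i) ^ 2 - f (w + t • v) : ℝ)
        = t ^ 2 * (v ⬝ᵥ A *ᵥ v) - 2 * t * (v ⬝ᵥ C *ᵥ w) - w ⬝ᵥ C *ᵥ w from
      quad_expand C hC w v t γ] at h
    exact h
  constructor
  · -- eexpE ≠ ⊥ → PosDef (contrapositive)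
    intro hne
    by_contra hnpd
    apply hne
    -- We show phiDual = ⊥ a.e., hence eexpE = ⊥
    by_cases hneg : ∃ v : Fin d → ℝ, v ⬝ᵥ A *ᵥ v < 0
    · obtain ⟨v, hvneg⟩ := hneg
      apply eexpE_eq_bot
      refine Filter.Eventually.of_forall fun w => ?_
      apply ereal_eq_bot
      intro r
      set b : ℝ := v ⬝ᵥ C *ᵥ w with hb
      set e : ℝ := w ⬝ᵥ C *ᵥ w with he
      set cc : ℝ := v ⬝ᵥ A *ᵥ v with hcc
      set t : ℝ := max 1 ((2 * |b| + |e| + |r| + 1) / (-cc)) with ht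
      have ht1 : 1 ≤ t := le_max_left _ _
      have ht0 : 0 ≤ t := le_trans zero_le_one ht1
      have ht2 : (2 * |b| + |e| + |r| + 1) ≤ (-cc) * t := by
        have h := le_max_right 1 ((2 * |b| + |e| + |r| + 1) / (-cc))
        rw [div_le_iff₀ (by linarith : (0:ℝ) < -cc)] at h
        rw [ht]; linarith
      have key : cc * t ^ 2 - 2 * t * b - e ≤ r := by
        have h1 : ((-cc) * t) * t ≥ (2 * |b| + |e| + |r| + 1) * t :=
          mul_le_mul_of_nonneg_right ht2 ht0
        have h2 : t * (|b| + b) ≥ 0 := mul_nonneg ht0 (by linarith [neg_abs_le b])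
        have h3 : (t - 1) * |e| ≥ 0 := mul_nonneg (by linarith) (abs_nonneg _)
        have h4 : (t - 1) * |r| ≥ 0 := mul_nonneg (by linarith) (abs_nonneg _)
        nlinarith [neg_abs_le e, le_abs_self r, neg_abs_le r, le_abs_self e]
      calc phiDual f γ w ≤ ((t ^ 2 * cc - 2 * t * b - e : ℝ) : EReal) := phi_le w v t
        _ ≤ ((r : ℝ) : EReal) := by
            rw [EReal.coe_le_coe_iff]; linarith [key]
    · push_neg at hneg
      have hpsd : A.PosSemidef := .of_dotProduct_mulVec_nonneg hherm (fun x => by rw [star_id]; exact hneg x)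
      rw [Matrix.posDef_iff_dotProduct_mulVec] at hnpd
      push_neg at hnpd
      obtain ⟨v, hv0, hvle⟩ := hnpd hherm
      rw [star_id] at hvle
      have hv_eq : v ⬝ᵥ A *ᵥ v = 0 := le_antisymm hvle (hneg v)
      have hAv : A *ᵥ v = 0 := by
        have := (hpsd.dotProduct_mulVec_zero_iff v).mp (by rwa [star_id])
        exact this
      have hCv : C *ᵥ v = γ • v := by
        have : (γ • (1 : Matrix (Fin d) (Fin d) ℝ)) *ᵥ v - C *ᵥ v = 0 := by
          rw [← sub_mulVec, ← hAdef, hAv]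
        rw [smul_mulVec, one_mulVec] at this
        exact (sub_eq_zero.mp this).symm
      have hγpos : 0 < γ := by
        rcases lt_or_eq_of_le hγ with h | h
        · exact h
        · exfalso
          -- γ = 0 : use hlmax
          have hCv0 : C *ᵥ v = 0 := by rw [hCv, ← h, zero_smul]
          set S : Set ℝ := {t : ℝ | ∃ v : Fin d → ℝ, v ≠ 0 ∧ C.mulVec v = t • v} with hS
          have h0S : (0:ℝ) ∈ S := ⟨v, hv0, by rw [hCv0, zero_smul]⟩
          have hexpos : ∃ t ∈ S, 0 < t := by
            by_contra hcon
            push_neg at hcon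
            apply hlmax
            rw [lambdaMax]
            apply le_antisymm
            · exact csSup_le ⟨0, h0S⟩ hcon
            · exact le_csSup ⟨0, hcon⟩ h0S
          obtain ⟨t, ⟨u, hu0, hCu⟩, htpos⟩ := hexpos
          obtain ⟨i, hi⟩ := Function.ne_iff.mp hu0
          have hi' : u i ≠ 0 := by simpa using hi
          have hu2 : 0 < ∑ j, u j ^ 2 :=
            Finset.sum_pos' (fun j _ => sq_nonneg _)
              ⟨i, Finset.mem_univ i, (sq_nonneg _).lt_of_ne (Ne.symm (pow_ne_zero 2 hi'))⟩
          have huu : u ⬝ᵥ u = ∑ j, u j ^ 2 := by simp [dotProduct, pow_two]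
          have hlt : u ⬝ᵥ A *ᵥ u < 0 := by
            rw [hAdef, sub_mulVec, dotProduct_sub, smul_mulVec, one_mulVec,
              dotProduct_smul, hCu, dotProduct_smul, huu, ← h]
            simp only [zero_smul, smul_eq_mul, zero_mul]
            nlinarith [mul_pos htpos hu2]
          exact absurd hlt (not_lt.mpr (hneg u))
      -- γ > 0 case: hyperplane argument
      have hvC : ∀ w, v ⬝ᵥ C *ᵥ w = γ * (v ⬝ᵥ w) := by
        intro w
        rw [dp_symm C hC v w, hCv, dotProduct_smul, smul_eq_mul, dotProduct_comm]
      have hae : ∀ᵐ w ∂P₀, v ⬝ᵥ w ≠ 0 := by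
        have h0 : P₀ {w | v ⬝ᵥ w = 0} = 0 := hac (hyperplane_null v hv0)
        rw [MeasureTheory.ae_iff]
        convert h0 using 2
        simp
      apply eexpE_eq_bot
      filter_upwards [hae] with w hw
      apply ereal_eq_bot
      intro r
      set s : ℝ := v ⬝ᵥ w with hs
      set e : ℝ := w ⬝ᵥ C *ᵥ w with he
      set t : ℝ := -(r + e) / (2 * γ * s) with ht
      have hval : t ^ 2 * (v ⬝ᵥ A *ᵥ v) - 2 * t * (v ⬝ᵥ C *ᵥ w) - e = r := by
        rw [hv_eq, hvC w, ← hs]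
        field_simp [ht]
        have h2 : t * γ * s * 2 = -(r + e) := by rw [ht]; field_simp [hγpos.ne', hw]
        linarith
      calc phiDual f γ w ≤ _ := phi_le w v t
        _ = ((r : ℝ) : EReal) := by
            rw [show t ^ 2 * (v ⬝ᵥ A *ᵥ v) - 2 * t * (v ⬝ᵥ C *ᵥ w) - w ⬝ᵥ C *ᵥ w = r from hval]
  · -- PosDef → eexpE ≠ ⊥
    intro hpd
    set K : ℝ := γ ^ 2 * ∑ i, ∑ j, |A⁻¹ i j| with hK
    have lower : ∀ w : Fin d → ℝ,
        ((-(K * ∑ i, w i ^ 2) : ℝ) : EReal) ≤ phiDual f γ w := by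
      intro w
      apply le_iInf
      intro z
      rw [EReal.coe_le_coe_iff]
      have hident : γ * ∑ i, (z i - w i) ^ 2 - f z
          = z ⬝ᵥ A *ᵥ z - 2 * γ * (z ⬝ᵥ w) + γ * ∑ i, w i ^ 2 := by
        have hsum : ∑ i, (z i - w i) ^ 2
            = ∑ i, z i ^ 2 - 2 * (z ⬝ᵥ w) + ∑ i, w i ^ 2 := by
          simp only [dotProduct, sub_sq, Finset.sum_add_distrib, Finset.sum_sub_distrib,
            Finset.mul_sum]
          ring
        have hAq : z ⬝ᵥ A *ᵥ z = γ * (∑ i, z i ^ 2) - z ⬝ᵥ C *ᵥ z := by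
          rw [hAdef, sub_mulVec, dotProduct_sub, smul_mulVec, one_mulVec, dotProduct_smul]
          simp [dotProduct, pow_two, smul_eq_mul]
        rw [hsum, hAq, hfdef]
        ring
      rw [hident]
      have hcs := complete_square A hAS hpd γ z w
      have habs := quad_abs_bound A⁻¹ w
      have h1 : -(γ ^ 2 * (w ⬝ᵥ A⁻¹ *ᵥ w)) ≥ -(K * ∑ i, w i ^ 2) := by
        have : γ ^ 2 * (w ⬝ᵥ A⁻¹ *ᵥ w) ≤ K * ∑ i, w i ^ 2 := by
          rw [hK, mul_assoc]
          exact mul_le_mul_of_nonneg_left ((le_abs_self _).trans habs) (sq_nonneg γ)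
        linarith
      have h2 : 0 ≤ γ * ∑ i, w i ^ 2 :=
        mul_nonneg hγ (Finset.sum_nonneg fun i _ => sq_nonneg _)
      linarith
    apply eexpE_ne_bot
    have hb : ∀ w : Fin d → ℝ,
        erealToENNReal (-(phiDual f γ w)) ≤ ENNReal.ofReal (K * ∑ i, w i ^ 2) := by
      intro w
      apply erealToENNReal_le
      calc -(phiDual f γ w) ≤ -((-(K * ∑ i, w i ^ 2) : ℝ) : EReal) :=
            EReal.neg_le_neg_iff.mpr (lower w)
        _ = ((K * ∑ i, w i ^ 2 : ℝ) : EReal) := by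
            rw [EReal.coe_neg, neg_neg]
    intro htop
    have : ∫⁻ w, ENNReal.ofReal (K * ∑ i, w i ^ 2) ∂P₀ < ⊤ :=
      (hmom.const_mul K).lintegral_lt_top
    have hle := lintegral_mono (μ := P₀) hb
    rw [htop] at hle
    exact absurd (lt_of_le_of_lt hle this) (lt_irrefl _)
end

section
/- Let P₀ be a Borel probability measure on ℝ^d that is absolutely continuous with respect to Lebesgue measure, let C ∈ ℝ^{d×d} be symmetric with λ_max(C) ≠ 0, and set γ = λ_max(C) (so that the smallest eigenvalue of γI − C equals 0). Then inf_{z ∈ ℝ^d} { zᵀ(γI − C)z − 2γ wᵀ z } = −∞ for P₀-almost every w ∈ ℝ^d; consequently φ(γ, w) = −∞ for P₀-almost every w. -/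
open Matrix MeasureTheory
open scoped ENNReal

private lemma iInf_linear_bot' {d : ℕ} (g : (Fin d → ℝ) → EReal) (v : Fin d → ℝ) (a b : ℝ)
    (hb : b ≠ 0) (h : ∀ t : ℝ, g (t • v) = ((a - b * t : ℝ) : EReal)) : (⨅ z, g z) = ⊥ := by
  rw [iInf_eq_bot]
  intro x hx
  induction x using EReal.rec with
  | bot => exact absurd hx (lt_irrefl _)
  | coe r =>
      refine ⟨((a - (r - 1)) / b) • v, ?_⟩
      rw [h]
      have he : a - b * ((a - (r - 1)) / b) = r - 1 := by field_simp; ring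
      rw [he]
      exact_mod_cast (by linarith : (r : ℝ) - 1 < r)
  | top => exact ⟨(0 : ℝ) • v, h 0 ▸ EReal.coe_lt_top _⟩

private lemma exists_eigvec' {d : ℕ} (hd : 0 < d) (C : Matrix (Fin d) (Fin d) ℝ)
    (hC : C.IsSymm) : ∃ v : Fin d → ℝ, v ≠ 0 ∧ C.mulVec v = lambdaMax C • v := by
  have hH : C.IsHermitian := by
    ext i j; simp [Matrix.conjTranspose_apply, hC.apply]
  set T : Module.End ℝ (Fin d → ℝ) := Matrix.toLin' C with hT
  set S : Set ℝ := {t : ℝ | ∃ v : Fin d → ℝ, v ≠ 0 ∧ C.mulVec v = t • v} with hS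
  have hSeq : S = {t | T.HasEigenvalue t} := by
    ext t
    constructor
    · rintro ⟨v, hv0, hv⟩
      exact Module.End.hasEigenvalue_of_hasEigenvector
        ⟨Module.End.mem_eigenspace_iff.2 (by simp [hT, Matrix.toLin'_apply, hv]), hv0⟩
    · intro ht
      obtain ⟨v, hv, hv0⟩ := ht.exists_hasEigenvector
      exact ⟨v, hv0, by simpa [hT, Matrix.toLin'_apply] using Module.End.mem_eigenspace_iff.1 hv⟩
  have hfin : S.Finite := by rw [hSeq]; exact T.finite_hasEigenvalue
  have hne : S.Nonempty := by
    refine ⟨hH.eigenvalues ⟨0, hd⟩, ⇑(hH.eigenvectorBasis ⟨0, hd⟩), ?_,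
      hH.mulVec_eigenvectorBasis ⟨0, hd⟩⟩
    intro h
    exact hH.eigenvectorBasis.toBasis.ne_zero ⟨0, hd⟩ (by ext i; exact congrFun h i)
  exact hne.csSup_mem hfin

private lemma ae_dotProduct_ne_zero' {d : ℕ} (P₀ : Measure (Fin d → ℝ))
    (hac : P₀ ≪ (volume : Measure (Fin d → ℝ))) (v : Fin d → ℝ) (hv0 : v ≠ 0) :
    ∀ᵐ w ∂P₀, w ⬝ᵥ v ≠ 0 := by
  set f : (Fin d → ℝ) →ₗ[ℝ] ℝ :=
    { toFun := fun w => w ⬝ᵥ v,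
      map_add' := fun a b => add_dotProduct a b v,
      map_smul' := fun c a => smul_dotProduct c a v } with hf
  have hker : LinearMap.ker f ≠ ⊤ := by
    intro h
    have hv : f v = 0 := LinearMap.mem_ker.1 (h ▸ Submodule.mem_top)
    have : v ⬝ᵥ v = 0 := hv
    exact hv0 (dotProduct_self_eq_zero.1 this)
  have hvol : (volume : Measure (Fin d → ℝ)) {w | w ⬝ᵥ v = 0} = 0 := by
    have h := Measure.addHaar_submodule (volume : Measure (Fin d → ℝ)) (LinearMap.ker f) hker
    have hs : {w : Fin d → ℝ | w ⬝ᵥ v = 0} = (LinearMap.ker f : Set (Fin d → ℝ)) := by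
      ext w; simp [hf, LinearMap.mem_ker]
    rw [hs]; exact h
  have h0 : P₀ {w | w ⬝ᵥ v = 0} = 0 := hac hvol
  rw [ae_iff]
  simpa [not_not] using h0

/-- for `P₀` absolutely continuous w.r.t. Lebesgue measure, `C` symmetric with
`λ_max(C) ≠ 0` and `γ = λ_max(C)`, the infimum `inf_z { zᵀ(γI−C)z − 2γwᵀz }` equals `−∞`
for `P₀`-almost every `w`; consequently `φ(γ,w) = −∞` for `P₀`-almost every `w`. -/
theorem stmt6 {d : ℕ} (hd : 0 < d)
    (P₀ : Measure (Fin d → ℝ)) [IsProbabilityMeasure P₀]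
    (hac : P₀ ≪ (volume : Measure (Fin d → ℝ)))
    (C : Matrix (Fin d) (Fin d) ℝ) (hC : C.IsSymm) (hlmax : lambdaMax C ≠ 0)
    (γ : ℝ) (hγ : γ = lambdaMax C) :
    (∀ᵐ w ∂P₀,
      (⨅ z : Fin d → ℝ,
        ((z ⬝ᵥ ((γ • (1 : Matrix (Fin d) (Fin d) ℝ) - C).mulVec z)
          - 2 * γ * (w ⬝ᵥ z) : ℝ) : EReal)) = ⊥) ∧
    ∀ᵐ w ∂P₀, phiDual (fun z => z ⬝ᵥ C.mulVec z) γ w = ⊥ := by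
  obtain ⟨v, hv0, hv⟩ := exists_eigvec' hd C hC
  rw [← hγ] at hv
  have hγ0 : γ ≠ 0 := hγ ▸ hlmax
  have hae := ae_dotProduct_ne_zero' P₀ hac v hv0
  constructor
  · filter_upwards [hae] with w hw
    refine iInf_linear_bot' _ v 0 (2 * γ * (w ⬝ᵥ v)) (by exact mul_ne_zero (mul_ne_zero two_ne_zero hγ0) hw) fun t => ?_
    norm_cast
    have h1 : (γ • (1 : Matrix (Fin d) (Fin d) ℝ) - C).mulVec (t • v) = 0 := by
      rw [Matrix.mulVec_smul, Matrix.sub_mulVec, Matrix.smul_mulVec, Matrix.one_mulVec,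
        hv, sub_self, smul_zero]
    rw [h1, dotProduct_zero, dotProduct_smul, smul_eq_mul]
    ring
  · filter_upwards [hae] with w hw
    refine iInf_linear_bot' _ v (γ * ∑ i, (w i) ^ 2) (2 * γ * (w ⬝ᵥ v))
      (mul_ne_zero (mul_ne_zero two_ne_zero hγ0) hw) fun t => ?_
    show ((_ : ℝ) : EReal) = _
    norm_cast
    have h1 : (t • v) ⬝ᵥ C.mulVec (t • v) = t * (t * (γ * (v ⬝ᵥ v))) := by
      rw [Matrix.mulVec_smul, hv, smul_dotProduct, dotProduct_smul,
        dotProduct_smul]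
      simp [smul_eq_mul]
    have h2 : ∑ i, ((t • v) i - w i) ^ 2
        = t ^ 2 * (v ⬝ᵥ v) - 2 * t * (w ⬝ᵥ v) + ∑ i, (w i) ^ 2 := by
      simp only [dotProduct, Finset.mul_sum, ← Finset.sum_add_distrib,
        ← Finset.sum_sub_distrib]
      exact Finset.sum_congr rfl fun i _ => by simp [smul_eq_mul]; ring
    beta_reduce
    rw [h1, h2]; ring
end

section
/- Let C ∈ ℝ^{d×d} be symmetric and nonzero, let M₀ ∈ ℝ^{d×d} be symmetric positive definite, let r ∈ ℝ, and define g(γ) = γ(r² − Tr(M₀)) + γ² Tr(M₀ (γI − C)^{-1}) on the interval (λ_max(C), ∞). Then g is twice differentiable with second derivative g''(γ) = 2 Tr( M₀ C² (γI − C)^{-3} ) > 0 for all γ > λ_max(C); in particular, g is strictly convex on (λ_max(C), ∞). -/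
open Matrix Finset


variable {d : ℕ}

-- conjugation algebra
lemma myconj_mul (U : Matrix (Fin d) (Fin d) ℝ) (hU : star U * U = 1)
    (f g : Fin d → ℝ) :
    (U * diagonal f * star U) * (U * diagonal g * star U)
      = U * diagonal (fun i => f i * g i) * star U := by
  have : U * diagonal f * star U * (U * diagonal g * star U)
      = U * (diagonal f * (star U * U) * diagonal g) * star U := by
    simp only [Matrix.mul_assoc]
  rw [this, hU, Matrix.mul_one, diagonal_mul_diagonal]

lemma myconj_pow (U : Matrix (Fin d) (Fin d) ℝ) (hU1 : star U * U = 1) (hU2 : U * star U = 1)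
    (f : Fin d → ℝ) (n : ℕ) :
    (U * diagonal f * star U) ^ n = U * diagonal (fun i => f i ^ n) * star U := by
  induction n with
  | zero => simp [hU2, ← Matrix.mul_assoc]
  | succ n ih =>
      rw [pow_succ, ih, myconj_mul U hU1]
      have : (fun i => f i ^ n * f i) = fun i => f i ^ (n+1) := by
        ext i; rw [pow_succ]
      rw [this]

lemma trace_conj (U : Matrix (Fin d) (Fin d) ℝ) (M : Matrix (Fin d) (Fin d) ℝ)
    (f : Fin d → ℝ) :
    (M * (U * diagonal f * star U)).trace = ∑ i, (star U * M * U) i i * f i := by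
  have h1 : M * (U * diagonal f * star U) = (M * U * diagonal f) * star U := by
    simp only [Matrix.mul_assoc]
  rw [h1, Matrix.trace_mul_comm]
  have h2 : star U * (M * U * diagonal f) = (star U * M * U) * diagonal f := by
    simp only [Matrix.mul_assoc]
  rw [h2]
  simp [Matrix.trace, Matrix.diag, Matrix.mul_diagonal]

lemma smul_one_conj (U : Matrix (Fin d) (Fin d) ℝ) (hU2 : U * star U = 1) (γ : ℝ) :
    γ • (1 : Matrix (Fin d) (Fin d) ℝ) = U * diagonal (fun _ => γ) * star U := by
  have : diagonal (fun _ : Fin d => γ) = γ • (1 : Matrix (Fin d) (Fin d) ℝ) := by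
    ext i j; by_cases h : i = j <;> simp [diagonal_apply, h, Matrix.one_apply]
  rw [this]
  rw [Matrix.mul_smul, Matrix.mul_one, Matrix.smul_mul, hU2]

lemma inv_conj (U : Matrix (Fin d) (Fin d) ℝ) (hU1 : star U * U = 1) (hU2 : U * star U = 1)
    (f : Fin d → ℝ) (hf : ∀ i, f i ≠ 0) :
    (U * diagonal f * star U)⁻¹ = U * diagonal (fun i => (f i)⁻¹) * star U := by
  apply Matrix.inv_eq_right_inv
  rw [myconj_mul U hU1]
  have : (fun i => f i * (f i)⁻¹) = fun _ : Fin d => (1:ℝ) := by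
    ext i; exact mul_inv_cancel₀ (hf i)
  rw [this]
  have : diagonal (fun _ : Fin d => (1:ℝ)) = 1 := by simp [Matrix.diagonal_one]
  rw [this, Matrix.mul_one, hU2]

-- eigenvalue set characterization
lemma eigenSet_eq (C : Matrix (Fin d) (Fin d) ℝ) (U : Matrix (Fin d) (Fin d) ℝ)
    (hU1 : star U * U = 1) (hU2 : U * star U = 1) (lam : Fin d → ℝ)
    (hspec : C = U * diagonal lam * star U) :
    {t : ℝ | ∃ v : Fin d → ℝ, v ≠ 0 ∧ C.mulVec v = t • v} = Set.range lam := by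
  ext t
  constructor
  · rintro ⟨v, hv0, hv⟩
    set w := star U *ᵥ v with hw
    have hvw : U *ᵥ w = v := by
      rw [hw, Matrix.mulVec_mulVec, hU2, Matrix.one_mulVec]
    have hw0 : w ≠ 0 := by
      intro h; apply hv0; rw [← hvw, h, Matrix.mulVec_zero]
    have key : diagonal lam *ᵥ w = t • w := by
      have : star U *ᵥ (C *ᵥ v) = star U *ᵥ (t • v) := by rw [hv]
      rw [Matrix.mulVec_smul] at this
      rw [hspec] at this
      rw [Matrix.mulVec_mulVec] at this
      have e : star U * (U * diagonal lam * star U) = diagonal lam * star U := by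
        rw [show star U * (U * diagonal lam * star U) = (star U * U) * diagonal lam * star U by
          simp only [Matrix.mul_assoc], hU1, Matrix.one_mul]
      rw [e, ← Matrix.mulVec_mulVec] at this
      rw [this, hw]
    obtain ⟨j, hj⟩ := Function.ne_iff.mp hw0
    refine ⟨j, ?_⟩
    have := congrFun key j
    simp [Matrix.mulVec_diagonal] at this
    rcases this with h | h
    · exact h
    · exact absurd h hj
  · rintro ⟨i, rfl⟩
    refine ⟨U *ᵥ Pi.single i 1, ?_, ?_⟩
    · intro h
      have : star U *ᵥ (U *ᵥ Pi.single i 1) = 0 := by rw [h, Matrix.mulVec_zero]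
      rw [Matrix.mulVec_mulVec, hU1, Matrix.one_mulVec] at this
      have := congrFun this i
      simp at this
    · rw [hspec, Matrix.mulVec_mulVec]
      rw [show U * diagonal lam * star U * U = U * diagonal lam by
        rw [Matrix.mul_assoc, hU1, Matrix.mul_one]]
      rw [← Matrix.mulVec_mulVec]
      have hds : diagonal lam *ᵥ Pi.single i 1 = lam i • (Pi.single i 1 : Fin d → ℝ) := by
        ext j; by_cases h : j = i <;> simp [Matrix.mulVec_diagonal, Pi.single_apply, h]
      rw [hds, Matrix.mulVec_smul]

lemma diag_entry_pos (U M : Matrix (Fin d) (Fin d) ℝ) (hU1 : star U * U = 1)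
    (hM : M.PosDef) (i : Fin d) : 0 < (star U * M * U) i i := by
  set v : Fin d → ℝ := fun j => U j i with hv
  have hv0 : v ≠ 0 := by
    intro h
    have h1 : (star U * U) i i = 0 := by
      rw [Matrix.mul_apply]
      apply Finset.sum_eq_zero
      intro j _
      have hj : U j i = 0 := congrFun h j
      simp [hj]
    rw [hU1] at h1
    simp [Matrix.one_apply] at h1
  have := hM.dotProduct_mulVec_pos hv0
  have he : (star U * M * U) i i = star v ⬝ᵥ M *ᵥ v := by
    rw [Matrix.mul_apply]
    simp only [Matrix.mul_apply, dotProduct, Matrix.mulVec, star_trivial,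
      Matrix.star_apply, hv]
    simp only [Finset.sum_mul, Finset.mul_sum]
    rw [Finset.sum_comm]
    apply Finset.sum_congr rfl
    intro x _
    apply Finset.sum_congr rfl
    intro y _
    ring
  rw [he]
  exact this

lemma hasDerivAt_phi (a γ : ℝ) (h : a < γ) :
    HasDerivAt (fun x : ℝ => x ^ 2 * (x - a)⁻¹)
      (2 * γ * (γ - a)⁻¹ - γ ^ 2 * ((γ - a) ^ 2)⁻¹) γ := by
  have hne : γ - a ≠ 0 := sub_ne_zero.2 (ne_of_gt h)
  have h1 : HasDerivAt (fun x : ℝ => x - a) 1 γ := (hasDerivAt_id γ).sub_const a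
  have h2 : HasDerivAt (fun x : ℝ => (x - a)⁻¹) (-1 / (γ - a) ^ 2) γ := by
    simpa using h1.fun_inv hne
  have h3 : HasDerivAt (fun x : ℝ => x ^ 2) (2 * γ) γ := by
    simpa using hasDerivAt_pow 2 γ
  have := h3.fun_mul h2
  refine this.congr_deriv ?_
  field_simp
  ring

lemma hasDerivAt_phi' (a γ : ℝ) (h : a < γ) :
    HasDerivAt (fun x : ℝ => 2 * x * (x - a)⁻¹ - x ^ 2 * ((x - a) ^ 2)⁻¹)
      (2 * a ^ 2 * ((γ - a) ^ 3)⁻¹) γ := by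
  have hne : γ - a ≠ 0 := sub_ne_zero.2 (ne_of_gt h)
  have h1 : HasDerivAt (fun x : ℝ => x - a) 1 γ := (hasDerivAt_id γ).sub_const a
  have h2 : HasDerivAt (fun x : ℝ => (x - a)⁻¹) (-1 / (γ - a) ^ 2) γ := by
    simpa using h1.fun_inv hne
  have h3 : HasDerivAt (fun x : ℝ => 2 * x) 2 γ := by
    simpa using (hasDerivAt_id γ).const_mul 2
  have h4 : HasDerivAt (fun x : ℝ => (x - a) ^ 2) (2 * (γ - a)) γ := by
    simpa using h1.fun_pow 2
  have h5 : HasDerivAt (fun x : ℝ => ((x - a) ^ 2)⁻¹)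
      (-(2 * (γ - a)) / ((γ - a) ^ 2) ^ 2) γ := h4.inv (pow_ne_zero 2 hne)
  have h6 : HasDerivAt (fun x : ℝ => x ^ 2) (2 * γ) γ := by
    simpa using hasDerivAt_pow 2 γ
  have := (h3.fun_mul h2).fun_sub (h6.fun_mul h5)
  refine this.congr_deriv ?_
  field_simp
  ring


/-- For `C` symmetric nonzero, `M₀` symmetric positive definite and `r ∈ ℝ`,
the function `g(γ) = γ(r² − Tr M₀) + γ² Tr(M₀(γI−C)⁻¹)` is twice differentiable on
`(λ_max(C), ∞)` with `g''(γ) = 2 Tr(M₀ C² (γI−C)⁻³) > 0` there; in particular `g` is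
strictly convex on `(λ_max(C), ∞)`. -/
theorem stmt8 {d : ℕ} (hd : 0 < d) (C M₀ : Matrix (Fin d) (Fin d) ℝ)
    (hC : C.IsSymm) (hC0 : C ≠ 0) (hM : M₀.IsSymm ∧ M₀.PosDef) (r : ℝ)
    (g : ℝ → ℝ)
    (hg : ∀ γ ∈ Set.Ioi (lambdaMax C),
      g γ = γ * (r ^ 2 - M₀.trace)
        + γ ^ 2 * (M₀ * (γ • (1 : Matrix (Fin d) (Fin d) ℝ) - C)⁻¹).trace) :
    (∀ γ ∈ Set.Ioi (lambdaMax C),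
      DifferentiableAt ℝ g γ ∧ DifferentiableAt ℝ (deriv g) γ ∧
      deriv (deriv g) γ
        = 2 * (M₀ * C ^ 2 * ((γ • (1 : Matrix (Fin d) (Fin d) ℝ) - C)⁻¹) ^ 3).trace ∧
      0 < deriv (deriv g) γ) ∧
    StrictConvexOn ℝ (Set.Ioi (lambdaMax C)) g := by
  obtain ⟨hMs, hMpd⟩ := hM
  have hCh : C.IsHermitian := by
    exact Matrix.isHermitian_iff_isSymm.mpr hC
  set U : Matrix (Fin d) (Fin d) ℝ := (hCh.eigenvectorUnitary : Matrix (Fin d) (Fin d) ℝ)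
    with hUdef
  set lam : Fin d → ℝ := hCh.eigenvalues with hlamdef
  have hU2 : U * star U = 1 := Matrix.mem_unitaryGroup_iff.mp hCh.eigenvectorUnitary.2
  have hU1 : star U * U = 1 := Matrix.mem_unitaryGroup_iff'.mp hCh.eigenvectorUnitary.2
  have hspec : C = U * diagonal lam * star U := by
    rw [hUdef, hlamdef]
    simpa [Function.comp] using hCh.spectral_theorem
  have hSeq := eigenSet_eq C U hU1 hU2 lam hspec
  have hlm : ∀ i, lam i ≤ lambdaMax C := by
    intro i
    rw [lambdaMax, hSeq]
    exact le_csSup (Set.finite_range lam).bddAbove ⟨i, rfl⟩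
  set m : Fin d → ℝ := fun i => (star U * M₀ * U) i i with hmdef
  have hmpos : ∀ i, 0 < m i := fun i => diag_entry_pos U M₀ hU1 hMpd i
  have hlt : ∀ γ ∈ Set.Ioi (lambdaMax C), ∀ i, lam i < γ :=
    fun γ hγ i => lt_of_le_of_lt (hlm i) hγ
  have hAinv : ∀ γ : ℝ, (∀ i, lam i < γ) →
      (γ • (1 : Matrix (Fin d) (Fin d) ℝ) - C)⁻¹
        = U * diagonal (fun i => (γ - lam i)⁻¹) * star U := by
    intro γ hγ
    have hA : γ • (1 : Matrix (Fin d) (Fin d) ℝ) - C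
        = U * diagonal (fun i => γ - lam i) * star U := by
      rw [smul_one_conj U hU2 γ]
      conv_lhs => rw [hspec]
      rw [← Matrix.sub_mul, ← Matrix.mul_sub, Matrix.diagonal_sub]
    rw [hA]
    exact inv_conj U hU1 hU2 _ fun i => sub_ne_zero.2 (ne_of_gt (hγ i))
  have htr1 : ∀ γ : ℝ, (∀ i, lam i < γ) →
      (M₀ * (γ • (1 : Matrix (Fin d) (Fin d) ℝ) - C)⁻¹).trace
        = ∑ i, m i * (γ - lam i)⁻¹ := by
    intro γ hγ
    rw [hAinv γ hγ, _root_.trace_conj]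
  have htr2 : ∀ γ : ℝ, (∀ i, lam i < γ) →
      (M₀ * C ^ 2 * ((γ • (1 : Matrix (Fin d) (Fin d) ℝ) - C)⁻¹) ^ 3).trace
        = ∑ i, m i * (lam i ^ 2 * ((γ - lam i) ^ 3)⁻¹) := by
    intro γ hγ
    have hC2 : C ^ 2 = U * diagonal (fun i => lam i ^ 2) * star U := by
      rw [hspec, myconj_pow U hU1 hU2]
    rw [hAinv γ hγ, myconj_pow U hU1 hU2, hC2, Matrix.mul_assoc, myconj_mul U hU1,
      _root_.trace_conj]
    apply Finset.sum_congr rfl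
    intro i _
    rw [inv_pow]
  set c : ℝ := r ^ 2 - M₀.trace with hcdef
  set h : ℝ → ℝ := fun γ => γ * c + ∑ i, m i * (γ ^ 2 * (γ - lam i)⁻¹) with hhdef
  set h' : ℝ → ℝ := fun γ =>
    c + ∑ i, m i * (2 * γ * (γ - lam i)⁻¹ - γ ^ 2 * ((γ - lam i) ^ 2)⁻¹) with hh'def
  set h'' : ℝ → ℝ := fun γ => ∑ i, m i * (2 * lam i ^ 2 * ((γ - lam i) ^ 3)⁻¹) with hh''def
  have Hh : ∀ γ : ℝ, (∀ i, lam i < γ) → HasDerivAt h (h' γ) γ := by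
    intro γ hγ
    have h0 : HasDerivAt (fun x : ℝ => x * c) c γ := by
      simpa using (hasDerivAt_id γ).mul_const c
    have hs : HasDerivAt (fun x : ℝ => ∑ i, m i * (x ^ 2 * (x - lam i)⁻¹))
        (∑ i, m i * (2 * γ * (γ - lam i)⁻¹ - γ ^ 2 * ((γ - lam i) ^ 2)⁻¹)) γ :=
      HasDerivAt.fun_sum fun i _ => (hasDerivAt_phi (lam i) γ (hγ i)).const_mul (m i)
    exact h0.add hs
  have Hh' : ∀ γ : ℝ, (∀ i, lam i < γ) → HasDerivAt h' (h'' γ) γ := by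
    intro γ hγ
    have h0 : HasDerivAt (fun _ : ℝ => c) 0 γ := hasDerivAt_const γ c
    have hs : HasDerivAt
        (fun x : ℝ => ∑ i, m i * (2 * x * (x - lam i)⁻¹ - x ^ 2 * ((x - lam i) ^ 2)⁻¹))
        (∑ i, m i * (2 * lam i ^ 2 * ((γ - lam i) ^ 3)⁻¹)) γ :=
      HasDerivAt.fun_sum fun i _ => (hasDerivAt_phi' (lam i) γ (hγ i)).const_mul (m i)
    simpa only [zero_add] using h0.fun_add hs
  have hopen : IsOpen (Set.Ioi (lambdaMax C)) := isOpen_Ioi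
  have hEqOn : ∀ γ ∈ Set.Ioi (lambdaMax C), g γ = h γ := by
    intro γ hγ
    rw [hg γ hγ, htr1 γ (hlt γ hγ), hhdef]
    simp only [Finset.mul_sum, hcdef]
    congr 1
    apply Finset.sum_congr rfl
    intro i _
    ring
  have hEv : ∀ γ ∈ Set.Ioi (lambdaMax C), g =ᶠ[nhds γ] h := fun γ hγ =>
    Filter.eventuallyEq_of_mem (hopen.mem_nhds hγ) hEqOn
  have key : ∀ γ ∈ Set.Ioi (lambdaMax C),
      DifferentiableAt ℝ g γ ∧ DifferentiableAt ℝ (deriv g) γ ∧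
      deriv (deriv g) γ
        = 2 * (M₀ * C ^ 2 * ((γ • (1 : Matrix (Fin d) (Fin d) ℝ) - C)⁻¹) ^ 3).trace ∧
      0 < deriv (deriv g) γ := by
    intro γ hγ
    have hlts := hlt γ hγ
    have E := hEv γ hγ
    have Hd : HasDerivAt h (h' γ) γ := Hh γ hlts
    have hdiffg : DifferentiableAt ℝ g γ := Hd.differentiableAt.congr_of_eventuallyEq E
    have E2 : deriv g =ᶠ[nhds γ] h' := by
      refine E.deriv.trans ?_
      refine Filter.eventuallyEq_of_mem (hopen.mem_nhds hγ) ?_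
      intro x hx
      exact (Hh x (hlt x hx)).deriv
    have Hd' : HasDerivAt h' (h'' γ) γ := Hh' γ hlts
    have hdiffg' : DifferentiableAt ℝ (deriv g) γ :=
      Hd'.differentiableAt.congr_of_eventuallyEq E2
    have hD2 : deriv (deriv g) γ = h'' γ := by
      rw [E2.deriv_eq]; exact Hd'.deriv
    refine ⟨hdiffg, hdiffg', ?_, ?_⟩
    · rw [hD2, htr2 γ hlts, hh''def]
      rw [Finset.mul_sum]
      apply Finset.sum_congr rfl
      intro i _
      ring
    · rw [hD2]
      obtain ⟨i0, hi0⟩ : ∃ i, lam i ≠ 0 := by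
        by_contra hall
        push_neg at hall
        apply hC0
        rw [hspec]
        have hz : diagonal lam = 0 := by
          ext i j; by_cases hij : i = j <;> simp [diagonal_apply, hij, hall]
        rw [hz]
        simp
      rw [hh''def]
      apply Finset.sum_pos'
      · intro i _
        have h3 : 0 < ((γ - lam i) ^ 3)⁻¹ := inv_pos.2 (pow_pos (sub_pos.2 (hlts i)) 3)
        have hmn := (hmpos i).le
        positivity
      · refine ⟨i0, Finset.mem_univ i0, ?_⟩
        have h3 : 0 < ((γ - lam i0) ^ 3)⁻¹ := inv_pos.2 (pow_pos (sub_pos.2 (hlts i0)) 3)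
        have hsq : 0 < lam i0 ^ 2 := lt_of_le_of_ne (sq_nonneg _) (Ne.symm (pow_ne_zero 2 hi0))
        exact mul_pos (hmpos i0) (by positivity)
  refine ⟨key, ?_⟩
  apply strictConvexOn_of_deriv2_pos (convex_Ioi _)
  · intro x hx
    exact ((key x hx).1.continuousAt.continuousWithinAt)
  · intro x hx
    rw [interior_Ioi] at hx
    have := (key x hx).2.2.2
    simpa [Function.iterate_succ_apply', Function.iterate_one] using this
end

section
/- Let C ∈ ℝ^{d×d} be symmetric, let M₀ ∈ ℝ^{d×d} be symmetric positive definite, let r ∈ ℝ, and define g(γ) = γ(r² − Tr(M₀)) + γ² Tr(M₀ (γI − C)^{-1}) on (λ_max(C), ∞). Then g is differentiable and g'(γ) = r² − Tr( (γ(γI − C)^{-1} − I)² M₀ ) for all γ > λ_max(C). -/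
attribute [local instance] Matrix.linftyOpNormedRing Matrix.linftyOpNormedAlgebra

lemma eig_bddAbove {d : ℕ} (C : Matrix (Fin d) (Fin d) ℝ) :
    BddAbove {t : ℝ | ∃ v : Fin d → ℝ, v ≠ 0 ∧ C.mulVec v = t • v} := by
  set L := LinearMap.toContinuousLinearMap (Matrix.mulVecLin C) with hL
  refine ⟨‖L‖, ?_⟩
  rintro t ⟨v, hv, hCv⟩
  have h1 : ‖C.mulVec v‖ ≤ ‖L‖ * ‖v‖ := by
    have := L.le_opNorm v
    simpa [hL] using this
  rw [hCv, norm_smul] at h1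
  have hv' : (0:ℝ) < ‖v‖ := norm_pos_iff.mpr hv
  have h2 : |t| ≤ ‖L‖ := by
    have := (mul_le_mul_iff_of_pos_right hv').mp (by simpa using h1)
    simpa using this
  exact le_trans (le_abs_self t) h2

lemma isUnit_gamma {d : ℕ} (C : Matrix (Fin d) (Fin d) ℝ) {γ : ℝ} (hγ : lambdaMax C < γ) :
    IsUnit (γ • (1 : Matrix (Fin d) (Fin d) ℝ) - C) := by
  rw [Matrix.isUnit_iff_isUnit_det, isUnit_iff_ne_zero]
  intro hdet
  obtain ⟨v, hv, hv0⟩ := (Matrix.exists_mulVec_eq_zero_iff).mpr hdet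
  have hCv : C.mulVec v = γ • v := by
    rw [Matrix.sub_mulVec, Matrix.smul_mulVec, Matrix.one_mulVec, sub_eq_zero] at hv0
    exact hv0.symm
  have hmem : γ ∈ {t : ℝ | ∃ v : Fin d → ℝ, v ≠ 0 ∧ C.mulVec v = t • v} := ⟨v, hv, hCv⟩
  exact absurd (le_csSup (eig_bddAbove C) hmem) (not_le.mpr hγ)

/-- For `C` symmetric, `M₀` symmetric positive definite and `r ∈ ℝ`,
the function `g(γ) = γ(r² − Tr M₀) + γ² Tr(M₀(γI−C)⁻¹)` is differentiable on
`(λ_max(C), ∞)` with `g'(γ) = r² − Tr((γ(γI−C)⁻¹ − I)² M₀)` there. -/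
theorem stmt9 {d : ℕ} (hd : 0 < d) (C M₀ : Matrix (Fin d) (Fin d) ℝ)
    (hC : C.IsSymm) (hM : M₀.IsSymm ∧ M₀.PosDef) (r : ℝ)
    (g : ℝ → ℝ)
    (hg : ∀ γ ∈ Set.Ioi (lambdaMax C),
      g γ = γ * (r ^ 2 - M₀.trace)
        + γ ^ 2 * (M₀ * (γ • (1 : Matrix (Fin d) (Fin d) ℝ) - C)⁻¹).trace) :
    ∀ γ ∈ Set.Ioi (lambdaMax C),
      DifferentiableAt ℝ g γ ∧
      deriv g γ = r ^ 2
        - ((γ • (γ • (1 : Matrix (Fin d) (Fin d) ℝ) - C)⁻¹ - 1) ^ 2 * M₀).trace := by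
  set T : Matrix (Fin d) (Fin d) ℝ →ₗ[ℝ] ℝ :=
    (Matrix.traceLinearMap (Fin d) ℝ ℝ).comp (LinearMap.mulLeft ℝ M₀) with hT
  set f : ℝ → ℝ := fun x => x * (r ^ 2 - M₀.trace)
    + x ^ 2 * (M₀ * Ring.inverse (x • (1 : Matrix (Fin d) (Fin d) ℝ) - C)).trace with hf
  intro γ hγ
  rw [Set.mem_Ioi] at hγ
  -- the unit
  have hU := isUnit_gamma C hγ
  set u : (Matrix (Fin d) (Fin d) ℝ)ˣ := hU.unit with hu
  have huval : (u : Matrix (Fin d) (Fin d) ℝ) = γ • (1 : Matrix (Fin d) (Fin d) ℝ) - C := hU.unit_spec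
  set B : Matrix (Fin d) (Fin d) ℝ := (γ • (1 : Matrix (Fin d) (Fin d) ℝ) - C)⁻¹ with hB
  have hBinv : ((u⁻¹ : (Matrix (Fin d) (Fin d) ℝ)ˣ) : Matrix (Fin d) (Fin d) ℝ) = B := by
    rw [hB, Matrix.nonsing_inv_eq_ringInverse, ← huval, Ring.inverse_unit]
  -- derivative of the affine map
  have hA : HasDerivAt (fun x : ℝ => x • (1 : Matrix (Fin d) (Fin d) ℝ) - C) (1 : Matrix (Fin d) (Fin d) ℝ) γ := by
    have := ((hasDerivAt_id γ).smul_const (1 : Matrix (Fin d) (Fin d) ℝ)).sub_const C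
    simp only [id, one_smul] at this
    exact this
  -- derivative of the inverse
  have hinv : HasDerivAt (fun x : ℝ => Ring.inverse (x • (1 : Matrix (Fin d) (Fin d) ℝ) - C)) (-(B * B)) γ := by
    have hF := hasFDerivAt_ringInverse (𝕜 := ℝ) u
    rw [huval] at hF
    have := hF.comp_hasDerivAt γ hA
    simp only [hBinv, Function.comp_def] at this
    exact this.congr_deriv (by simp)
  -- derivative of the trace term
  have htr : HasDerivAt (fun x : ℝ => (M₀ * Ring.inverse (x • (1 : Matrix (Fin d) (Fin d) ℝ) - C)).trace)
      (-(M₀ * (B * B)).trace) γ := by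
    have hTc := (LinearMap.toContinuousLinearMap T).hasFDerivAt.comp_hasDerivAt γ hinv
    exact hTc.congr_deriv (by change Matrix.trace (M₀ * -(B * B)) = _; simp [Matrix.trace_neg])
  -- derivative of f
  have h1 : HasDerivAt (fun x : ℝ => x * (r ^ 2 - M₀.trace)) (r ^ 2 - M₀.trace) γ := by
    simpa using (hasDerivAt_id γ).mul_const (r ^ 2 - M₀.trace)
  have h2 : HasDerivAt (fun x : ℝ => x ^ 2) (2 * γ) γ := by
    simpa using hasDerivAt_pow 2 γ
  have hRI : Ring.inverse (γ • (1 : Matrix (Fin d) (Fin d) ℝ) - C) = B := by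
    rw [hB, Matrix.nonsing_inv_eq_ringInverse]
  have h3 := h2.mul htr
  have hfd : HasDerivAt f ((r ^ 2 - M₀.trace)
      + (2 * γ * (M₀ * Ring.inverse (γ • (1 : Matrix (Fin d) (Fin d) ℝ) - C)).trace
        + γ ^ 2 * -(M₀ * (B * B)).trace)) γ := h1.add h3
  -- g agrees with f near γ
  have hev : g =ᶠ[nhds γ] f := by
    filter_upwards [Ioi_mem_nhds hγ] with x hx
    rw [hg x hx, hf, Matrix.nonsing_inv_eq_ringInverse]
  have hdf : DifferentiableAt ℝ g γ := hfd.differentiableAt.congr_of_eventuallyEq hev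
  refine ⟨hdf, ?_⟩
  rw [Filter.EventuallyEq.deriv_eq hev, hfd.deriv, hRI]
  -- algebraic identity
  have hexp : (γ • B - 1) ^ 2 * M₀
      = (γ ^ 2) • (B * B * M₀) - (2 * γ) • (B * M₀) + M₀ := by
    simp only [sq, sub_mul, mul_sub, Matrix.smul_mul, Matrix.mul_smul, one_mul, mul_one,
      smul_smul]
    module
  rw [hexp]
  rw [Matrix.trace_add, Matrix.trace_sub, Matrix.trace_smul, Matrix.trace_smul]
  rw [Matrix.trace_mul_comm B M₀, Matrix.trace_mul_comm (B * B) M₀, ← Matrix.mul_assoc]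
  simp only [smul_eq_mul]
  ring
end

section
/- Let C ∈ ℝ^{d×d} be symmetric with λ_max(C) ≠ 0, let M₀ ∈ ℝ^{d×d} be symmetric positive definite, and let r > 0. Define g(γ) = γ(r² − Tr(M₀)) + γ² Tr(M₀ (γI − C)^{-1}) on (λ_max(C), ∞). Then g attains its infimum over (λ_max(C), ∞) at a unique point γ*, and γ* is the unique solution in (λ_max(C), ∞) of the equation Tr( (γ(γI − C)^{-1} − I)² M₀ ) = r². -/
open Set Finset Matrix


lemma key_analysis {n : ℕ} (ev w : Fin n → ℝ) (hw : ∀ i, 0 < w i) (L : ℝ)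
    (hL : ∀ i, ev i ≤ L) (I : Fin n) (hIev : ev I = L) (hL0 : L ≠ 0)
    (r : ℝ) (hr : 0 < r) :
    ∃ γs ∈ Set.Ioi L,
      (∀ γ ∈ Set.Ioi L, γ ≠ γs →
        γs * r ^ 2 + ∑ i, w i * (ev i + (ev i) ^ 2 / (γs - ev i)) <
        γ * r ^ 2 + ∑ i, w i * (ev i + (ev i) ^ 2 / (γ - ev i))) ∧
      (∑ i, w i * (ev i) ^ 2 / (γs - ev i) ^ 2) = r ^ 2 ∧
      ∀ γ ∈ Set.Ioi L, (∑ i, w i * (ev i) ^ 2 / (γ - ev i) ^ 2) = r ^ 2 → γ = γs := by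
  set φ : ℝ → ℝ := fun γ => ∑ i, w i * (ev i) ^ 2 / (γ - ev i) ^ 2 with hφ
  set G : ℝ → ℝ := fun γ => γ * r ^ 2 + ∑ i, w i * (ev i + (ev i) ^ 2 / (γ - ev i)) with hG
  have hpos : ∀ γ ∈ Set.Ioi L, ∀ i, 0 < γ - ev i := fun γ hγ i => by
    have := hL i; simp only [Set.mem_Ioi] at hγ; linarith
  -- φ strictly decreasing
  have hanti : StrictAntiOn φ (Set.Ioi L) := by
    intro x hx y hy hxy
    apply Finset.sum_lt_sum
    · intro i _
      have h1 := hpos x hx i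
      exact div_le_div_of_nonneg_left (mul_nonneg (hw i).le (sq_nonneg _))
        (pow_pos h1 2) (by nlinarith)
    · refine ⟨I, Finset.mem_univ I, ?_⟩
      apply div_lt_div_of_pos_left
      · have := hw I; rw [hIev]; positivity
      · have := hpos x hx I; positivity
      · have h1 := hpos x hx I; nlinarith
  have hinj := hanti.injOn
  -- derivative of G
  have hderiv : ∀ γ ∈ Set.Ioi L, HasDerivAt G (r ^ 2 - φ γ) γ := by
    intro γ hγ
    have h1 : HasDerivAt (fun γ : ℝ => γ * r ^ 2) (r ^ 2) γ := by
      simpa using (hasDerivAt_id γ).mul_const (r ^ 2)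
    have h2 : HasDerivAt (fun γ => ∑ i, w i * (ev i + (ev i) ^ 2 / (γ - ev i)))
        (∑ i : Fin n, -(w i * (ev i) ^ 2 / (γ - ev i) ^ 2)) γ := by
      apply HasDerivAt.fun_sum
      intro i _
      have hne : γ - ev i ≠ 0 := (hpos γ hγ i).ne'
      have hd : HasDerivAt (fun γ : ℝ => (γ - ev i)⁻¹) (-1 / (γ - ev i) ^ 2) γ := by
        simpa [Pi.inv_def] using ((hasDerivAt_id γ).sub_const (ev i)).inv hne
      have hd2 := ((hd.const_mul ((ev i) ^ 2)).const_add (ev i)).const_mul (w i)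
      have := hd2.congr_deriv (show _ = -(w i * (ev i) ^ 2 / (γ - ev i) ^ 2) by ring)
      simpa [div_eq_mul_inv] using this
    have := h1.add h2
    exact this.congr_deriv (by simp only [hφ, sub_eq_add_neg, ← Finset.sum_neg_distrib])
  -- continuity of φ on Ioi L
  have hφcont : ContinuousOn φ (Set.Ioi L) := by
    apply continuousOn_finset_sum
    intro i _
    apply ContinuousOn.div continuousOn_const
    · fun_prop
    · intro x hx; have := hpos x hx i; positivity
  -- choose b with φ b < r^2
  set S : ℝ := ∑ i, w i * (ev i) ^ 2 with hS
  have hS0 : 0 ≤ S := Finset.sum_nonneg fun i _ => mul_nonneg (hw i).le (sq_nonneg _)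
  set b : ℝ := L + Real.sqrt (S / r ^ 2) + 1 with hb
  have hsq : 0 ≤ Real.sqrt (S / r ^ 2) := Real.sqrt_nonneg _
  have hbL : L < b := by rw [hb]; linarith
  have hφb : φ b < r ^ 2 := by
    have h1 : φ b ≤ S / (b - L) ^ 2 := by
      rw [hφ, hS, Finset.sum_div]
      apply Finset.sum_le_sum
      intro i _
      have h2 := hpos b hbL i
      have h3 : b - L ≤ b - ev i := by have := hL i; linarith
      have h4 : 0 < b - L := by linarith
      exact div_le_div_of_nonneg_left (mul_nonneg (hw i).le (sq_nonneg _))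
        (pow_pos h4 2) (by nlinarith)
    have h5 : Real.sqrt (S / r ^ 2) ^ 2 = S / r ^ 2 :=
      Real.sq_sqrt (by positivity)
    have hbl2 : b - L = Real.sqrt (S / r ^ 2) + 1 := by rw [hb]; ring
    have hrS : r ^ 2 * (S / r ^ 2) = S := by field_simp
    have h6 : S < r ^ 2 * (b - L) ^ 2 := by
      rw [hbl2]; nlinarith [h5, hsq, hr, hrS]
    calc φ b ≤ S / (b - L) ^ 2 := h1
      _ < r ^ 2 := by
          rw [div_lt_iff₀ (pow_pos (by linarith : (0:ℝ) < b - L) 2)]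
          linarith [h6]
  -- choose a with φ a > r^2
  set c : ℝ := w I * L ^ 2 / r ^ 2 with hc
  have hL2 : 0 < L ^ 2 := lt_of_le_of_ne (sq_nonneg L) (Ne.symm (pow_ne_zero 2 hL0))
  have hc0 : 0 < c := div_pos (mul_pos (hw I) hL2) (by positivity)
  set a : ℝ := L + Real.sqrt c / 2 with ha
  have hsc : 0 < Real.sqrt c := Real.sqrt_pos.mpr hc0
  have haL : L < a := by rw [ha]; linarith
  have hφa : r ^ 2 < φ a := by
    have h1 : w I * L ^ 2 / (a - L) ^ 2 ≤ φ a := by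
      rw [hφ]
      have := Finset.single_le_sum
        (f := fun i => w i * (ev i) ^ 2 / (a - ev i) ^ 2)
        (fun i _ => div_nonneg (mul_nonneg (hw i).le (sq_nonneg _)) (sq_nonneg _))
        (Finset.mem_univ I)
      simpa [hIev] using this
    have h5 : Real.sqrt c ^ 2 = c := Real.sq_sqrt hc0.le
    have h2 : (a - L) ^ 2 = c / 4 := by
      rw [show a - L = Real.sqrt c / 2 from by rw [ha]; ring, div_pow, h5]; norm_num
    have h3 : r ^ 2 < w I * L ^ 2 / (a - L) ^ 2 := by
      rw [h2, lt_div_iff₀ (by linarith : (0:ℝ) < c / 4)]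
      have hwc : w I * L ^ 2 = r ^ 2 * c := by rw [hc]; field_simp
      nlinarith [mul_pos (pow_pos hr 2) hc0]
    linarith
  have hab : a < b := by
    by_contra h
    push_neg at h
    rcases eq_or_lt_of_le h with h | h
    · rw [← h] at hφa; linarith
    · have := hanti hbL haL h; linarith
  -- IVT
  obtain ⟨γs, hγsI, hγseq⟩ : ∃ γs ∈ Set.Icc a b, φ γs = r ^ 2 := by
    have hsub : Set.Icc a b ⊆ Set.Ioi L := fun x hx => lt_of_lt_of_le haL hx.1
    have := intermediate_value_Icc' hab.le (hφcont.mono hsub)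
    have hmem : r ^ 2 ∈ Set.Icc (φ b) (φ a) := ⟨hφb.le, hφa.le⟩
    obtain ⟨γs, h1, h2⟩ := this hmem
    exact ⟨γs, h1, h2⟩
  have hγsL : γs ∈ Set.Ioi L := lt_of_lt_of_le haL hγsI.1
  refine ⟨γs, hγsL, ?_, hγseq, fun γ hγ hγr => hinj hγ hγsL (hγr.trans hγseq.symm)⟩
  -- strict minimum
  have hGanti : StrictAntiOn G (Set.Ioc L γs) := by
    apply strictAntiOn_of_deriv_neg (convex_Ioc L γs)
    · apply ContinuousOn.mono _ (Set.Ioc_subset_Ioi_self)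
      intro x hx
      exact ((hderiv x hx).continuousAt).continuousWithinAt
    · intro x hx
      rw [interior_Ioc] at hx
      have hx' : x ∈ Set.Ioi L := hx.1
      rw [(hderiv x hx').deriv]
      have := hanti hx' hγsL hx.2
      rw [hγseq] at this
      linarith
  have hGmono : StrictMonoOn G (Set.Ici γs) := by
    apply strictMonoOn_of_deriv_pos (convex_Ici γs)
    · intro x hx
      have hx' : x ∈ Set.Ioi L := Set.mem_Ioi.mpr (lt_of_lt_of_le (Set.mem_Ioi.mp hγsL) (Set.mem_Ici.mp hx))
      exact ((hderiv x hx').continuousAt).continuousWithinAt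
    · intro x hx
      rw [interior_Ici] at hx
      have hx' : x ∈ Set.Ioi L := Set.mem_Ioi.mpr (lt_trans (Set.mem_Ioi.mp hγsL) (Set.mem_Ioi.mp hx))
      rw [(hderiv x hx').deriv]
      have := hanti hγsL hx' hx
      rw [hγseq] at this
      linarith
  intro γ hγ hne
  rcases lt_or_gt_of_ne hne with h | h
  · exact hGanti ⟨hγ, h.le⟩ ⟨hγsL, le_refl _⟩ h
  · exact hGmono (Set.mem_Ici.mpr le_rfl) (Set.mem_Ici.mpr h.le) h

/-- For `C` symmetric with `λ_max(C) ≠ 0`, `M₀` symmetric positive definite and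
`r > 0`, the function `g(γ) = γ(r² − Tr M₀) + γ² Tr(M₀(γI−C)⁻¹)` attains its infimum over
`(λ_max(C), ∞)` at a unique point `γ*`, which is the unique solution in `(λ_max(C), ∞)` of
`Tr((γ(γI−C)⁻¹ − I)² M₀) = r²`. -/
theorem stmt10 {d : ℕ} (hd : 0 < d) (C M₀ : Matrix (Fin d) (Fin d) ℝ)
    (hC : C.IsSymm) (hC0 : lambdaMax C ≠ 0) (hM : M₀.IsSymm ∧ M₀.PosDef)
    (r : ℝ) (hr : 0 < r) (g : ℝ → ℝ)
    (hg : ∀ γ ∈ Set.Ioi (lambdaMax C),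
      g γ = γ * (r ^ 2 - M₀.trace)
        + γ ^ 2 * (M₀ * (γ • (1 : Matrix (Fin d) (Fin d) ℝ) - C)⁻¹).trace) :
    ∃ γs ∈ Set.Ioi (lambdaMax C),
      (∀ γ ∈ Set.Ioi (lambdaMax C), γ ≠ γs → g γs < g γ) ∧
      ((γs • (γs • (1 : Matrix (Fin d) (Fin d) ℝ) - C)⁻¹ - 1) ^ 2 * M₀).trace = r ^ 2 ∧
      ∀ γ ∈ Set.Ioi (lambdaMax C),
        ((γ • (γ • (1 : Matrix (Fin d) (Fin d) ℝ) - C)⁻¹ - 1) ^ 2 * M₀).trace = r ^ 2 →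
          γ = γs := by
  haveI : NeZero d := ⟨hd.ne'⟩
  have hCH : C.IsHermitian := by
    rwa [Matrix.IsHermitian, Matrix.conjTranspose_eq_transpose_of_trivial]
  set ev : Fin d → ℝ := hCH.eigenvalues with hev
  set U : Matrix (Fin d) (Fin d) ℝ := (hCH.eigenvectorUnitary : Matrix (Fin d) (Fin d) ℝ) with hUdef
  have hU1 : star U * U = 1 := Unitary.coe_star_mul_self hCH.eigenvectorUnitary
  have hU2 : U * star U = 1 := Unitary.coe_mul_star_self hCH.eigenvectorUnitary
  have hspec : C = U * Matrix.diagonal ev * star U := by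
    have := hCH.spectral_theorem
    rwa [RCLike.ofReal_real_eq_id, Function.id_comp] at this
  -- eigenvalue set equals range of ev
  have hset : {t : ℝ | ∃ v : Fin d → ℝ, v ≠ 0 ∧ C.mulVec v = t • v} = Set.range ev := by
    ext t
    constructor
    · rintro ⟨v, hv, hCv⟩
      set u : Fin d → ℝ := star U *ᵥ v with hu
      have hu0 : u ≠ 0 := by
        intro h
        apply hv
        have : U *ᵥ u = v := by
          rw [hu, Matrix.mulVec_mulVec, hU2, Matrix.one_mulVec]
        rw [← this, h, Matrix.mulVec_zero]
      have hDu : Matrix.diagonal ev *ᵥ u = t • u := by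
        have h1 : C *ᵥ v = U *ᵥ (Matrix.diagonal ev *ᵥ u) := by
          rw [hspec, hu, Matrix.mulVec_mulVec, Matrix.mulVec_mulVec, Matrix.mul_assoc]
        have h2 : star U *ᵥ (C *ᵥ v) = Matrix.diagonal ev *ᵥ u := by
          rw [h1, Matrix.mulVec_mulVec, hU1, Matrix.one_mulVec]
        rw [← h2, hCv, Matrix.mulVec_smul]
      obtain ⟨i, hi⟩ : ∃ i, u i ≠ 0 := by
        by_contra h
        push_neg at h
        exact hu0 (funext h)
      refine ⟨i, ?_⟩
      have := congrFun hDu i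
      simp [Matrix.mulVec_diagonal] at this
      rcases this with h | h
      · exact h
      · exact absurd h hi
    · rintro ⟨j, rfl⟩
      refine ⟨U *ᵥ Pi.single j 1, ?_, ?_⟩
      · intro h
        have : star U *ᵥ (U *ᵥ Pi.single j 1) = 0 := by rw [h, Matrix.mulVec_zero]
        rw [Matrix.mulVec_mulVec, hU1, Matrix.one_mulVec] at this
        simpa using congrFun this j
      · rw [hspec, Matrix.mulVec_mulVec, Matrix.mul_assoc (U * Matrix.diagonal ev), hU1,
          Matrix.mul_one, ← Matrix.mulVec_mulVec, Matrix.diagonal_mulVec_single,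
          ← Matrix.mulVec_smul]
        have : (Pi.single j (ev j * 1) : Fin d → ℝ) = ev j • (Pi.single j 1 : Fin d → ℝ) := by
          ext i; by_cases h : i = j <;> simp [Pi.single_apply, h]
        rw [this]
  -- lambdaMax is the max eigenvalue
  have hne : (Finset.univ : Finset (Fin d)).Nonempty := Finset.univ_nonempty
  set L : ℝ := Finset.univ.sup' hne ev with hLdef
  obtain ⟨I, _, hIev⟩ := Finset.exists_mem_eq_sup' hne ev
  have hIev : ev I = L := hIev.symm
  have hLub : ∀ i, ev i ≤ L := fun i => Finset.le_sup' ev (Finset.mem_univ i)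
  have hlm : lambdaMax C = L := by
    rw [lambdaMax, hset]
    apply IsGreatest.csSup_eq
    exact ⟨⟨I, hIev⟩, by rintro t ⟨i, rfl⟩; exact hLub i⟩
  -- N and weights
  set N : Matrix (Fin d) (Fin d) ℝ := star U * M₀ * U with hNdef
  have hNposdef : N.PosDef := by
    apply Matrix.PosDef.of_dotProduct_mulVec_pos
    · have h1 : M₀ᴴ = M₀ := by
        rw [Matrix.conjTranspose_eq_transpose_of_trivial]; exact hM.1
      show (star U * M₀ * U)ᴴ = star U * M₀ * U
      rw [Matrix.conjTranspose_mul, Matrix.conjTranspose_mul, h1,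
        Matrix.star_eq_conjTranspose, Matrix.conjTranspose_conjTranspose,
        Matrix.mul_assoc]
    · intro x hx
      have hx' : U *ᵥ x ≠ 0 := by
        intro h
        apply hx
        have : star U *ᵥ (U *ᵥ x) = 0 := by rw [h, Matrix.mulVec_zero]
        rwa [Matrix.mulVec_mulVec, hU1, Matrix.one_mulVec] at this
      have key : star x ⬝ᵥ (N *ᵥ x) = star (U *ᵥ x) ⬝ᵥ (M₀ *ᵥ (U *ᵥ x)) := by
        rw [hNdef, ← Matrix.mulVec_mulVec, ← Matrix.mulVec_mulVec,
          Matrix.dotProduct_mulVec (star x) (star U),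
          Matrix.star_mulVec, Matrix.star_eq_conjTranspose]
      rw [key]
      exact hM.2.dotProduct_mulVec_pos hx'
  set w : Fin d → ℝ := fun i => N i i with hw
  have hwpos : ∀ i, 0 < w i := by
    intro i
    have hs : (Pi.single i 1 : Fin d → ℝ) ≠ 0 := by
      intro h; simpa using congrFun h i
    have := hNposdef.dotProduct_mulVec_pos hs
    have heq : star (Pi.single i 1 : Fin d → ℝ) ⬝ᵥ (N *ᵥ Pi.single i 1) = N i i := by
      simp [Matrix.mulVec_single]
    rwa [heq] at this
  -- trace of M₀
  have htrM : M₀.trace = ∑ i, w i := by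
    have : M₀.trace = N.trace := by
      rw [hNdef, Matrix.trace_mul_cycle, hU2, Matrix.one_mul]
    rw [this, Matrix.trace]
    rfl
  -- generic trace helper
  have htrace : ∀ Dv : Fin d → ℝ,
      (M₀ * (U * Matrix.diagonal Dv * star U)).trace = ∑ i, w i * Dv i := by
    intro Dv
    have e1 : M₀ * (U * Matrix.diagonal Dv * star U)
        = M₀ * U * Matrix.diagonal Dv * star U := by
      simp only [Matrix.mul_assoc]
    rw [e1, Matrix.trace_mul_cycle]
    simp only [← Matrix.mul_assoc]
    rw [← hNdef, Matrix.trace]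
    simp only [Matrix.diag, Matrix.mul_diagonal]
    rfl
  have htraceL : ∀ Dv : Fin d → ℝ,
      (U * Matrix.diagonal Dv * star U * M₀).trace = ∑ i, w i * Dv i := by
    intro Dv
    rw [Matrix.trace_mul_comm, htrace]
  have hsqh : ∀ Dv : Fin d → ℝ,
      (U * Matrix.diagonal Dv * star U) * (U * Matrix.diagonal Dv * star U)
        = U * Matrix.diagonal (fun i => Dv i * Dv i) * star U := by
    intro Dv
    rw [← Matrix.diagonal_mul_diagonal]
    simp only [Matrix.mul_assoc]
    rw [← Matrix.mul_assoc (star U) U, hU1, Matrix.one_mul]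
  -- inverse formula
  have hkey : ∀ γ : ℝ, L < γ →
      ((γ • (1 : Matrix (Fin d) (Fin d) ℝ) - C)⁻¹
        = U * Matrix.diagonal (fun i => (γ - ev i)⁻¹) * star U) := by
    intro γ hγ
    have hipos : ∀ i, 0 < γ - ev i := fun i => by have := hLub i; linarith
    have hA : γ • (1 : Matrix (Fin d) (Fin d) ℝ) - C
        = U * Matrix.diagonal (fun i => γ - ev i) * star U := by
      have h1 : γ • (1 : Matrix (Fin d) (Fin d) ℝ)
          = U * Matrix.diagonal (fun _ => γ) * star U := by
        rw [← Matrix.smul_one_eq_diagonal, mul_smul_comm, Matrix.mul_one,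
          smul_mul_assoc, hU2]
      rw [h1, hspec, ← Matrix.sub_mul, ← Matrix.mul_sub, ← Matrix.diagonal_sub]
    apply Matrix.inv_eq_right_inv
    rw [hA]
    have hone : (fun i => (γ - ev i) * (γ - ev i)⁻¹) = fun _ : Fin d => (1:ℝ) := by
      funext i; exact mul_inv_cancel₀ (hipos i).ne'
    simp only [Matrix.mul_assoc]
    rw [← Matrix.mul_assoc (star U) U, hU1, Matrix.one_mul,
      ← Matrix.mul_assoc (Matrix.diagonal fun i => γ - ev i),
      Matrix.diagonal_mul_diagonal, hone, Matrix.diagonal_one, Matrix.one_mul, hU2]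
  have htr1 : ∀ γ : ℝ, L < γ →
      (M₀ * (γ • (1 : Matrix (Fin d) (Fin d) ℝ) - C)⁻¹).trace
        = ∑ i, w i * (γ - ev i)⁻¹ := by
    intro γ hγ
    rw [hkey γ hγ, htrace]
  have htr2 : ∀ γ : ℝ, L < γ →
      ((γ • (γ • (1 : Matrix (Fin d) (Fin d) ℝ) - C)⁻¹ - 1) ^ 2 * M₀).trace
        = ∑ i, w i * (ev i) ^ 2 / (γ - ev i) ^ 2 := by
    intro γ hγ
    have hipos : ∀ i, 0 < γ - ev i := fun i => by have := hLub i; linarith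
    have hB : γ • (γ • (1 : Matrix (Fin d) (Fin d) ℝ) - C)⁻¹ - 1
        = U * Matrix.diagonal (fun i => ev i * (γ - ev i)⁻¹) * star U := by
      rw [hkey γ hγ]
      have h1 : (1 : Matrix (Fin d) (Fin d) ℝ)
          = U * Matrix.diagonal (fun _ : Fin d => (1:ℝ)) * star U := by
        rw [Matrix.diagonal_one, Matrix.mul_one, hU2]
      calc γ • (U * Matrix.diagonal (fun i => (γ - ev i)⁻¹) * star U) - 1
          = U * (γ • Matrix.diagonal (fun i => (γ - ev i)⁻¹)) * star U
            - U * Matrix.diagonal (fun _ : Fin d => (1:ℝ)) * star U := by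
            rw [← h1, mul_smul_comm, smul_mul_assoc]
        _ = U * Matrix.diagonal (fun i => ev i * (γ - ev i)⁻¹) * star U := by
            rw [← Matrix.sub_mul, ← Matrix.mul_sub]
            congr 2
            ext i j
            rcases eq_or_ne i j with rfl | hij
            · have hne2 := (hipos i).ne'
              simp only [Matrix.sub_apply, Matrix.smul_apply,
                Matrix.diagonal_apply_eq, smul_eq_mul]
              field_simp
              ring
            · simp [Matrix.sub_apply, Matrix.smul_apply,
                Matrix.diagonal_apply_ne _ hij, Matrix.one_apply_ne hij]
    rw [hB, sq, hsqh, htraceL]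
    apply Finset.sum_congr rfl
    intro i _
    have hne2 := (hipos i).ne'
    field_simp
  -- bridge to g
  have hL0 : L ≠ 0 := by rw [← hlm]; exact hC0
  have hgG : ∀ γ ∈ Set.Ioi L,
      g γ = γ * r ^ 2 + ∑ i, w i * (ev i + (ev i) ^ 2 / (γ - ev i)) := by
    intro γ hγ'
    have hγL : L < γ := hγ'
    have hipos : ∀ i, 0 < γ - ev i := fun i => by have := hLub i; linarith
    rw [hg γ (by rw [hlm]; exact hγ'), htrM, htr1 γ hγL]
    have e2 : ∑ i, (γ ^ 2 * (w i * (γ - ev i)⁻¹) - γ * w i)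
        = ∑ i, w i * (ev i + (ev i) ^ 2 / (γ - ev i)) := by
      apply Finset.sum_congr rfl
      intro i _
      have hne2 := (hipos i).ne'
      field_simp
      ring
    rw [← e2, Finset.sum_sub_distrib, ← Finset.mul_sum, ← Finset.mul_sum]
    ring
  obtain ⟨γs, hγs, hmin, heq, huniq⟩ :=
    key_analysis ev w hwpos L hLub I hIev hL0 r hr
  rw [hlm]
  refine ⟨γs, hγs, ?_, ?_, ?_⟩
  · intro γ hγ hne'
    rw [hgG γ hγ, hgG γs hγs]
    exact hmin γ hγ hne'
  · rw [htr2 γs hγs]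
    exact heq
  · intro γ hγ htr
    exact huniq γ hγ (by rw [← htr2 γ hγ]; exact htr)
end
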